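/- arXiv:1901.09560 — 5 statements merged into one kernel-verified Lean document; each statement's English description precedes it below -/
import Mathlib

section
/- For every integer t ≥ 4, c1(K_{t+1}^{(3)}) ≤ (−1 + √(3 − 2c))/(1 − c), where c = c1(K_t^{(3)}). -/
open Finset

/-- The degree of a vertex in a hypergraph: the number of edges containing it. -/
def hdeg {V : Type*} [DecidableEq V] (G : Finset (Finset V)) (x : V) : ℕ :=
  (G.filter (fun e => x ∈ e)).card

/-- The minimum vertex degree of a hypergraph. -/
noncomputable def minDeg {V : Type*} [DecidableEq V] (G : Finset (Finset V)) : ℕ :=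
  sInf (Set.range (hdeg G))

/-- Vertex `x` is covered by a copy of the complete 3-graph `K_t⁽³⁾` in `H`. -/
def CovK {V : Type*} [DecidableEq V] (t : ℕ) (H : Finset (Finset V)) (x : V) : Prop :=
  ∃ S : Finset V, x ∈ S ∧ S.card = t ∧ ∀ e ⊆ S, e.card = 3 → e ∈ H

/-- `c₁(n, K_t⁽³⁾)`: the maximum of `δ₁(G)` over `n`-vertex 3-graphs `G` having
no `K_t⁽³⁾`-covering. -/
noncomputable def c1K (t n : ℕ) : ℕ :=
  sSup {d : ℕ | ∃ H : Finset (Finset (Fin n)),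
    (∀ e ∈ H, e.card = 3) ∧ (∃ x, ¬ CovK t H x) ∧ d = minDeg H}

/-- `c₁(K_t⁽³⁾) = limsup_{n → ∞} c₁(n, K_t⁽³⁾)/C(n−1, 2)`. -/
noncomputable def c1Kdens (t : ℕ) : ℝ :=
  Filter.limsup (fun n : ℕ => (c1K t n : ℝ) / ((n - 1).choose 2 : ℝ)) Filter.atTop

section PartA

variable {n : ℕ}

/-- bijection between pairs `q` avoiding `v` with `insert v q ∈ H` and edges at `v`. -/
lemma card_pairs_eq_hdeg (H : Finset (Finset (Fin n))) (h3 : ∀ e ∈ H, e.card = 3) (v : Fin n) :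
    (((univ.erase v).powersetCard 2).filter (fun q => insert v q ∈ H)).card = hdeg H v := by
  classical
  rw [hdeg]
  apply Finset.card_bij (fun q _ => insert v q)
  · intro q hq
    simp only [mem_filter, Finset.mem_powersetCard] at hq ⊢
    exact ⟨hq.2, mem_insert_self _ _⟩
  · intro q1 hq1 q2 hq2 h
    simp only [mem_filter, Finset.mem_powersetCard] at hq1 hq2
    have hv1 : v ∉ q1 := fun hv => (Finset.mem_erase.mp (hq1.1.1 hv)).1 rfl
    have hv2 : v ∉ q2 := fun hv => (Finset.mem_erase.mp (hq2.1.1 hv)).1 rfl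
    rw [← Finset.erase_insert hv1, ← Finset.erase_insert hv2, h]
  · intro e he
    simp only [mem_filter] at he
    refine ⟨e.erase v, ?_, ?_⟩
    · simp only [mem_filter, Finset.mem_powersetCard]
      constructor
      · constructor
        · intro u hu
          simp only [Finset.mem_erase] at hu ⊢
          exact ⟨hu.1, mem_univ _⟩
        · rw [Finset.card_erase_of_mem he.2, h3 e he.1]
      · rw [Finset.insert_erase he.2]; exact he.1
    · rw [Finset.insert_erase he.2]

lemma hdeg_add_missing (H : Finset (Finset (Fin n))) (h3 : ∀ e ∈ H, e.card = 3) (v : Fin n) :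
    hdeg H v + (((univ.erase v).powersetCard 2).filter (fun q => insert v q ∉ H)).card
      = (n - 1).choose 2 := by
  classical
  rw [← card_pairs_eq_hdeg H h3 v]
  rw [Finset.card_filter_add_card_filter_not (p := fun q => insert v q ∈ H)]
  rw [Finset.card_powersetCard, Finset.card_erase_of_mem (mem_univ v), card_univ,
    Fintype.card_fin]

lemma hdeg_le_choose (H : Finset (Finset (Fin n))) (h3 : ∀ e ∈ H, e.card = 3) (v : Fin n) :
    hdeg H v ≤ (n - 1).choose 2 := by
  have := hdeg_add_missing H h3 v
  omega

lemma minDeg_le_hdeg (H : Finset (Finset (Fin n))) (v : Fin n) :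
    minDeg H ≤ hdeg H v :=
  Nat.sInf_le ⟨v, rfl⟩

lemma exists_minDeg (H : Finset (Finset (Fin n))) (hn : 0 < n) :
    ∃ v, minDeg H = hdeg H v := by
  have hne : (Set.range (hdeg H)).Nonempty := ⟨hdeg H ⟨0, hn⟩, ⟨_, rfl⟩⟩
  obtain ⟨v, hv⟩ := Nat.sInf_mem hne
  exact ⟨v, hv.symm⟩

end PartA


section PartB
variable {t n : ℕ}

lemma c1K_set_bound {d : ℕ}
    (hd : d ∈ {d : ℕ | ∃ H : Finset (Finset (Fin n)),
      (∀ e ∈ H, e.card = 3) ∧ (∃ x, ¬ CovK t H x) ∧ d = minDeg H}) :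
    d ≤ (n - 1).choose 2 := by
  obtain ⟨H, h3, ⟨x, -⟩, rfl⟩ := hd
  exact le_trans (minDeg_le_hdeg H x) (hdeg_le_choose H h3 x)

lemma c1K_le_choose (t n : ℕ) : c1K t n ≤ (n - 1).choose 2 :=
  csSup_le' (fun _ hd => c1K_set_bound hd)

lemma le_c1K {d : ℕ}
    (hd : d ∈ {d : ℕ | ∃ H : Finset (Finset (Fin n)),
      (∀ e ∈ H, e.card = 3) ∧ (∃ x, ¬ CovK t H x) ∧ d = minDeg H}) :
    d ≤ c1K t n :=
  le_csSup ⟨(n - 1).choose 2, fun _ h => c1K_set_bound h⟩ hd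

/-- the key "threshold" consequence: a 3-graph with an uncovered vertex has small min degree -/
lemma minDeg_le_c1K (H : Finset (Finset (Fin n))) (h3 : ∀ e ∈ H, e.card = 3)
    (hx : ∃ x, ¬ CovK t H x) : minDeg H ≤ c1K t n :=
  le_c1K ⟨H, h3, hx, rfl⟩

end PartB

section PartC
variable {t : ℕ}

lemma uK_nonneg (t n : ℕ) : 0 ≤ (c1K t n : ℝ) / ((n - 1).choose 2 : ℝ) := by positivity

lemma choose_pos_real {n : ℕ} (hn : 3 ≤ n) : (0:ℝ) < ((n - 1).choose 2 : ℝ) := by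
  have : 0 < (n - 1).choose 2 := Nat.choose_pos (by omega)
  exact_mod_cast this

lemma uK_le_one {n : ℕ} (hn : 3 ≤ n) : (c1K t n : ℝ) / ((n - 1).choose 2 : ℝ) ≤ 1 := by
  rw [div_le_one (choose_pos_real hn)]
  exact_mod_cast c1K_le_choose t n

lemma uK_bounded (t : ℕ) :
    Filter.IsBoundedUnder (· ≤ ·) Filter.atTop
      (fun n : ℕ => (c1K t n : ℝ) / ((n - 1).choose 2 : ℝ)) :=
  Filter.isBoundedUnder_of_eventually_le (a := 1)
    (Filter.eventually_atTop.mpr ⟨3, fun _ hn => uK_le_one hn⟩)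

lemma uK_cobounded (t : ℕ) :
    Filter.IsCoboundedUnder (· ≤ ·) Filter.atTop
      (fun n : ℕ => (c1K t n : ℝ) / ((n - 1).choose 2 : ℝ)) :=
  Filter.IsCoboundedUnder.of_frequently_ge (a := 0)
    (Filter.Frequently.of_forall (fun n => uK_nonneg t n))

lemma c1Kdens_nonneg (t : ℕ) : 0 ≤ c1Kdens t :=
  Filter.le_limsup_of_frequently_le
    (Filter.Frequently.of_forall (fun n => uK_nonneg t n)) (uK_bounded t)

lemma c1Kdens_le_one (t : ℕ) : c1Kdens t ≤ 1 :=
  Filter.limsup_le_of_le (uK_cobounded t)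
    (Filter.eventually_atTop.mpr ⟨3, fun _ hn => uK_le_one hn⟩)

lemma eventually_c1K_lt (t : ℕ) {ε : ℝ} (hε : 0 < ε) :
    ∀ᶠ n in Filter.atTop, (c1K t n : ℝ) < (c1Kdens t + ε) * ((n - 1).choose 2 : ℝ) := by
  have h1 : ∀ᶠ n in Filter.atTop,
      (c1K t n : ℝ) / ((n - 1).choose 2 : ℝ) < c1Kdens t + ε :=
    Filter.eventually_lt_of_limsup_lt (by simpa [c1Kdens] using (lt_add_of_pos_right (c1Kdens t) hε)) (uK_bounded t)
  filter_upwards [h1, Filter.eventually_ge_atTop 3] with n hn h3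
  have hpos := choose_pos_real h3
  calc (c1K t n : ℝ) = (c1K t n : ℝ) / ((n - 1).choose 2 : ℝ) * ((n - 1).choose 2 : ℝ) := by
        field_simp
    _ < (c1Kdens t + ε) * ((n - 1).choose 2 : ℝ) := by
        exact mul_lt_mul_of_pos_right hn hpos

/-- limsup bound from an eventual real bound on c1K -/
lemma c1Kdens_le_of_eventually {t : ℕ} {b : ℝ}
    (h : ∀ᶠ n in Filter.atTop, (c1K t n : ℝ) ≤ b * ((n - 1).choose 2 : ℝ)) :
    c1Kdens t ≤ b := by
  apply Filter.limsup_le_of_le (uK_cobounded t)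
  filter_upwards [h, Filter.eventually_ge_atTop 3] with n hn h3
  rw [div_le_iff₀ (choose_pos_real h3)]
  exact hn

end PartC


section PartD
variable {n : ℕ}

/-- number of t-sets containing a fixed subset, upper bound -/
lemma card_filter_superset_le {α : Type*} [DecidableEq α] (s q : Finset α) (k : ℕ) (hq : q ⊆ s) :
    ((s.powersetCard k).filter (fun R => q ⊆ R)).card ≤ (s.card - q.card).choose (k - q.card) := by
  classical
  have h1 : ((s.powersetCard k).filter (fun R => q ⊆ R)).card
      ≤ ((s \ q).powersetCard (k - q.card)).card := by
    apply Finset.card_le_card_of_injOn (fun R => R \ q)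
    · intro R hR
      simp only [mem_coe, mem_filter, Finset.mem_powersetCard] at hR
      obtain ⟨⟨hRs, hRk⟩, hqR⟩ := hR
      rw [Finset.mem_coe, Finset.mem_powersetCard]
      exact ⟨Finset.sdiff_subset_sdiff hRs (Finset.Subset.refl q),
        by rw [Finset.card_sdiff_of_subset hqR, hRk]⟩
    · intro R1 h1 R2 h2 h
      simp only [coe_filter, Set.mem_setOf_eq] at h1 h2
      rw [← Finset.sdiff_union_of_subset h1.2, ← Finset.sdiff_union_of_subset h2.2]
      simp only at h
      rw [h]
  rw [Finset.card_powersetCard, Finset.card_sdiff_of_subset hq] at h1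
  exact h1

/-- all triples at a vertex -/
lemma card_triples_at (v : Fin n) :
    (((univ : Finset (Fin n)).powersetCard 3).filter (fun e => v ∈ e)).card = (n - 1).choose 2 := by
  classical
  have h3 : ∀ e ∈ (univ : Finset (Fin n)).powersetCard 3, e.card = 3 := by
    intro e he; exact (Finset.mem_powersetCard.mp he).2
  have := hdeg_add_missing ((univ : Finset (Fin n)).powersetCard 3) h3 v
  have hz : (((univ.erase v).powersetCard 2).filter
      (fun q => insert v q ∉ (univ : Finset (Fin n)).powersetCard 3)).card = 0 := by
    rw [Finset.card_eq_zero, Finset.filter_eq_empty_iff]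
    intro q hq
    simp only [Finset.mem_powersetCard] at hq
    simp only [not_not, Finset.mem_powersetCard]
    have hv : v ∉ q := fun hv => (Finset.mem_erase.mp (hq.1 hv)).1 rfl
    exact ⟨Finset.subset_univ _, by rw [Finset.card_insert_of_notMem hv, hq.2]⟩
  rw [hz, Nat.add_zero] at this
  rw [← this, hdeg]

lemma hdeg_add_missAt (H : Finset (Finset (Fin n))) (h3 : ∀ e ∈ H, e.card = 3) (v : Fin n) :
    hdeg H v + ((((univ : Finset (Fin n)).powersetCard 3) \ H).filter (fun e => v ∈ e)).card
      = (n - 1).choose 2 := by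
  classical
  have hsub : H ⊆ (univ : Finset (Fin n)).powersetCard 3 := by
    intro e he
    rw [Finset.mem_powersetCard]
    exact ⟨Finset.subset_univ _, h3 e he⟩
  have key := Finset.card_filter_add_card_filter_not
    (s := ((univ : Finset (Fin n)).powersetCard 3).filter (fun e => v ∈ e)) (p := fun e => e ∈ H)
  rw [Finset.filter_filter, Finset.filter_filter] at key
  have e1 : (((univ : Finset (Fin n)).powersetCard 3).filter (fun e => v ∈ e ∧ e ∈ H))
      = H.filter (fun e => v ∈ e) := by
    ext e
    simp only [mem_filter, Finset.mem_powersetCard]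
    constructor
    · rintro ⟨-, hv, he⟩; exact ⟨he, hv⟩
    · rintro ⟨he, hv⟩; exact ⟨⟨Finset.subset_univ _, h3 e he⟩, hv, he⟩
  have e2 : (((univ : Finset (Fin n)).powersetCard 3).filter (fun e => v ∈ e ∧ ¬ e ∈ H))
      = (((univ : Finset (Fin n)).powersetCard 3) \ H).filter (fun e => v ∈ e) := by
    ext e
    simp only [mem_filter, Finset.mem_sdiff]
    tauto
  rw [e1, e2, card_triples_at v] at key
  rw [hdeg]
  exact key

end PartD


/-- the "far from 1" gap for `c1(K_t)` -/
noncomputable def dlt (t : ℕ) : ℝ :=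
  1 / (2 * (((t - 1).choose 2 + 6 * (t - 1).choose 3 : ℕ) : ℝ))

lemma Kt_pos {t : ℕ} (ht : 4 ≤ t) : 0 < ((t - 1).choose 2 + 6 * (t - 1).choose 3 : ℕ) := by
  have : 0 < (t - 1).choose 2 := Nat.choose_pos (by omega)
  omega

lemma dlt_pos {t : ℕ} (ht : 4 ≤ t) : 0 < dlt t := by
  have := Kt_pos ht
  have : (0:ℝ) < (((t - 1).choose 2 + 6 * (t - 1).choose 3 : ℕ) : ℝ) := by exact_mod_cast this
  rw [dlt]
  positivity

section UnionBound
variable {t n : ℕ}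

lemma union_bound_cover (ht : 4 ≤ t) (hn : t + 3 ≤ n) (hn6 : 6 ≤ n)
    (H : Finset (Finset (Fin n))) (h3 : ∀ e ∈ H, e.card = 3)
    (hdegs : ∀ v : Fin n, (1 - dlt t) * (((n - 1).choose 2 : ℕ) : ℝ) ≤ (hdeg H v : ℝ))
    (x : Fin n) : CovK t H x := by
  classical
  set δ := dlt t with hδdef
  have hδpos : 0 < δ := dlt_pos ht
  set Miss := ((univ : Finset (Fin n)).powersetCard 3) \ H with hMissdef
  set 𝒮 := ((univ : Finset (Fin n)).erase x).powersetCard (t - 1) with h𝒮def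
  set Bad := 𝒮.filter (fun R => ∃ e ∈ Miss, e ⊆ insert x R) with hBaddef
  -- cardinality of 𝒮
  have hcard𝒮 : 𝒮.card = (n - 1).choose (t - 1) := by
    rw [h𝒮def, Finset.card_powersetCard, Finset.card_erase_of_mem (mem_univ x), card_univ,
      Fintype.card_fin]
  -- counting bad sets
  have hBadsub : Bad ⊆ Miss.biUnion (fun e => 𝒮.filter (fun R => e ⊆ insert x R)) := by
    intro R hR
    rw [hBaddef, mem_filter] at hR
    obtain ⟨e, he, hesub⟩ := hR.2
    exact Finset.mem_biUnion.mpr ⟨e, he, Finset.mem_filter.mpr ⟨hR.1, hesub⟩⟩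
  have hcnt : ∀ e ∈ Miss, (𝒮.filter (fun R => e ⊆ insert x R)).card
      ≤ if x ∈ e then (n - 3).choose (t - 3) else (n - 4).choose (t - 4) := by
    intro e he
    rw [hMissdef, Finset.mem_sdiff, Finset.mem_powersetCard] at he
    have hecard : e.card = 3 := he.1.2
    have hsub1 : (𝒮.filter (fun R => e ⊆ insert x R)).card
        ≤ (𝒮.filter (fun R => e.erase x ⊆ R)).card := by
      apply Finset.card_le_card
      intro R hR
      rw [mem_filter] at hR ⊢
      refine ⟨hR.1, fun u hu => ?_⟩
      rw [Finset.mem_erase] at hu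
      rcases Finset.mem_insert.mp (hR.2 hu.2) with h | h
      · exact absurd h hu.1
      · exact h
    have hqsub : e.erase x ⊆ (univ : Finset (Fin n)).erase x := by
      intro u hu
      rw [Finset.mem_erase] at hu ⊢
      exact ⟨hu.1, mem_univ _⟩
    have hbound := card_filter_superset_le ((univ : Finset (Fin n)).erase x) (e.erase x)
      (t - 1) hqsub
    rw [Finset.card_erase_of_mem (mem_univ x), card_univ, Fintype.card_fin] at hbound
    by_cases hx : x ∈ e
    · rw [if_pos hx]
      have h2 : (e.erase x).card = 2 := by rw [Finset.card_erase_of_mem hx, hecard]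
      rw [h2] at hbound
      have e1 : n - 1 - 2 = n - 3 := by omega
      have e2 : t - 1 - 2 = t - 3 := by omega
      rw [e1, e2] at hbound
      exact le_trans hsub1 (le_trans hbound (le_refl _))
    · rw [if_neg hx]
      have h2 : (e.erase x).card = 3 := by rw [Finset.erase_eq_of_notMem hx, hecard]
      rw [h2] at hbound
      have e1 : n - 1 - 3 = n - 4 := by omega
      have e2 : t - 1 - 3 = t - 4 := by omega
      rw [e1, e2] at hbound
      exact le_trans hsub1 hbound
  have hBadcard : Bad.card ≤ (Miss.filter (fun e => x ∈ e)).card * (n - 3).choose (t - 3)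
      + Miss.card * (n - 4).choose (t - 4) := by
    calc Bad.card ≤ (Miss.biUnion (fun e => 𝒮.filter (fun R => e ⊆ insert x R))).card :=
          Finset.card_le_card hBadsub
      _ ≤ ∑ e ∈ Miss, (𝒮.filter (fun R => e ⊆ insert x R)).card := Finset.card_biUnion_le
      _ ≤ ∑ e ∈ Miss, (if x ∈ e then (n - 3).choose (t - 3) else (n - 4).choose (t - 4)) :=
          Finset.sum_le_sum hcnt
      _ = ∑ e ∈ Miss.filter (fun e => x ∈ e), (n - 3).choose (t - 3)
          + ∑ e ∈ Miss.filter (fun e => ¬ x ∈ e), (n - 4).choose (t - 4) := by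
          rw [← Finset.sum_filter_add_sum_filter_not Miss (fun e => x ∈ e)]
          congr 1
          · exact Finset.sum_congr rfl (fun e he => if_pos (Finset.mem_filter.mp he).2)
          · exact Finset.sum_congr rfl (fun e he => if_neg (Finset.mem_filter.mp he).2)
      _ ≤ (Miss.filter (fun e => x ∈ e)).card * (n - 3).choose (t - 3)
          + Miss.card * (n - 4).choose (t - 4) := by
          rw [Finset.sum_const, Finset.sum_const, smul_eq_mul, smul_eq_mul]
          have hmono : (Miss.filter (fun e => ¬ x ∈ e)).card ≤ Miss.card :=
            Finset.card_le_card (Finset.filter_subset _ _)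
          exact Nat.add_le_add (le_refl _) (Nat.mul_le_mul_right _ hmono)
  -- real bounds on Miss counts
  have hMissx : ((Miss.filter (fun e => x ∈ e)).card : ℝ) ≤ δ * (((n - 1).choose 2 : ℕ) : ℝ) := by
    have hkey := hdeg_add_missAt H h3 x
    have hdx := hdegs x
    have : (hdeg H x : ℝ) + ((Miss.filter (fun e => x ∈ e)).card : ℝ)
        = (((n - 1).choose 2 : ℕ) : ℝ) := by exact_mod_cast hkey
    nlinarith [this, hdx]
  have hMissAll : ∀ v : Fin n, ((Miss.filter (fun e => v ∈ e)).card : ℝ)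
      ≤ δ * (((n - 1).choose 2 : ℕ) : ℝ) := by
    intro v
    have hkey := hdeg_add_missAt H h3 v
    have hdv := hdegs v
    have : (hdeg H v : ℝ) + ((Miss.filter (fun e => v ∈ e)).card : ℝ)
        = (((n - 1).choose 2 : ℕ) : ℝ) := by exact_mod_cast hkey
    nlinarith [this, hdv]
  have hMiss : ((Miss.card : ℕ) : ℝ) ≤ (n : ℝ) * (δ * (((n - 1).choose 2 : ℕ) : ℝ)) := by
    have hsubM : Miss ⊆ (univ : Finset (Fin n)).biUnion (fun v => Miss.filter (fun e => v ∈ e)) := by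
      intro e he
      have hec : e.card = 3 := by
        rw [hMissdef, Finset.mem_sdiff, Finset.mem_powersetCard] at he
        exact he.1.2
      have hene : e.Nonempty := Finset.card_pos.mp (by omega)
      obtain ⟨v, hv⟩ := hene
      exact Finset.mem_biUnion.mpr ⟨v, mem_univ _, Finset.mem_filter.mpr ⟨he, hv⟩⟩
    have h1 : Miss.card ≤ ∑ v : Fin n, (Miss.filter (fun e => v ∈ e)).card :=
      le_trans (Finset.card_le_card hsubM) Finset.card_biUnion_le
    have h2 : ((Miss.card : ℕ) : ℝ) ≤ ∑ v : Fin n, ((Miss.filter (fun e => v ∈ e)).card : ℝ) := by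
      exact_mod_cast h1
    calc ((Miss.card : ℕ) : ℝ) ≤ ∑ v : Fin n, ((Miss.filter (fun e => v ∈ e)).card : ℝ) := h2
      _ ≤ ∑ _v : Fin n, δ * (((n - 1).choose 2 : ℕ) : ℝ) := Finset.sum_le_sum
          (fun v _ => hMissAll v)
      _ = (n : ℝ) * (δ * (((n - 1).choose 2 : ℕ) : ℝ)) := by
          rw [Finset.sum_const, card_univ, Fintype.card_fin, nsmul_eq_mul]
  -- binomial identities
  have hId1 : (n - 1).choose 2 * (n - 3).choose (t - 3)
      = (n - 1).choose (t - 1) * (t - 1).choose 2 := by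
    have h := Nat.choose_mul (n := n - 1) (k := t - 1) (s := 2) (by omega)
    have e1 : n - 1 - 2 = n - 3 := by omega
    have e2 : t - 1 - 2 = t - 3 := by omega
    rw [e1, e2] at h
    omega
  have hId4 : ((n - 1).choose 3) * (n - 4).choose (t - 4)
      = (n - 1).choose (t - 1) * (t - 1).choose 3 := by
    have h := Nat.choose_mul (n := n - 1) (k := t - 1) (s := 3) (by omega)
    have e1 : n - 1 - 3 = n - 4 := by omega
    have e2 : t - 1 - 3 = t - 4 := by omega
    rw [e1, e2] at h
    omega
  have hId2 : n * (n - 1).choose 2 = n.choose 3 * 3 := by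
    have h := Nat.add_one_mul_choose_eq (n - 1) 2
    have e1 : (n - 1).succ = n := by omega
    have e2 : n - 1 + 1 = n := by omega
    rw [e2] at h
    simpa using h
  have hId3 : n.choose 3 ≤ 2 * (n - 1).choose 3 := by
    have hps : n.choose 3 = (n - 1).choose 2 + (n - 1).choose 3 := by
      have h := Nat.choose_succ_succ (n - 1) 2
      have e2 : (n - 1).succ = n := by omega
      rw [e2] at h
      simpa using h
    have hle : (n - 1).choose 2 ≤ (n - 1).choose 3 := by
      have h := Nat.choose_succ_right_eq (n - 1) 2
      have h3' : (n - 1).choose 2 * 3 ≤ (n - 1).choose 2 * (n - 1 - 2) :=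
        Nat.mul_le_mul_left _ (by omega)
      rw [← h] at h3'
      exact Nat.le_of_mul_le_mul_right h3' (by omega)
    omega
  -- real chain
  set Cn2 : ℝ := (((n - 1).choose 2 : ℕ) : ℝ) with hCn2def
  set CT : ℝ := (((n - 1).choose (t - 1) : ℕ) : ℝ) with hCTdef
  set C233 : ℝ := (((n - 3).choose (t - 3) : ℕ) : ℝ) with hC233def
  set C34 : ℝ := (((n - 4).choose (t - 4) : ℕ) : ℝ) with hC34def
  set Ct2 : ℝ := (((t - 1).choose 2 : ℕ) : ℝ) with hCt2def
  set Ct3 : ℝ := (((t - 1).choose 3 : ℕ) : ℝ) with hCt3def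
  have hC233nn : (0:ℝ) ≤ C233 := by rw [hC233def]; positivity
  have hC34nn : (0:ℝ) ≤ C34 := by rw [hC34def]; positivity
  have hCTpos : (0:ℝ) < CT := by
    rw [hCTdef]
    exact_mod_cast Nat.choose_pos (by omega : t - 1 ≤ n - 1)
  have hKrpos : (0:ℝ) < (((t - 1).choose 2 + 6 * (t - 1).choose 3 : ℕ) : ℝ) := by
    exact_mod_cast Kt_pos ht
  have hhalf : δ * (((t - 1).choose 2 + 6 * (t - 1).choose 3 : ℕ) : ℝ) = 1 / 2 := by
    have hne : (2 * (((t - 1).choose 2 + 6 * (t - 1).choose 3 : ℕ) : ℝ)) ≠ 0 := by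
      have := hKrpos; positivity
    rw [hδdef, dlt, div_mul_eq_mul_div, one_mul, div_eq_div_iff hne two_ne_zero]
    ring
  have hKr : (((t - 1).choose 2 + 6 * (t - 1).choose 3 : ℕ) : ℝ) = Ct2 + 6 * Ct3 := by
    rw [hCt2def, hCt3def]; push_cast; ring
  have hId1R : Cn2 * C233 = CT * Ct2 := by
    rw [hCn2def, hC233def, hCTdef, hCt2def]; exact_mod_cast hId1
  have hId4R : (((n - 1).choose 3 : ℕ) : ℝ) * C34 = CT * Ct3 := by
    rw [hC34def, hCTdef, hCt3def]; exact_mod_cast hId4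
  have hId2R : (n : ℝ) * Cn2 = ((n.choose 3 : ℕ) : ℝ) * 3 := by
    rw [hCn2def]; exact_mod_cast hId2
  have hId3R : ((n.choose 3 : ℕ) : ℝ) ≤ 2 * (((n - 1).choose 3 : ℕ) : ℝ) := by
    exact_mod_cast hId3
  have hfinal : ((Bad.card : ℕ) : ℝ) < CT := by
    have hcast : ((Bad.card : ℕ) : ℝ) ≤ ((Miss.filter (fun e => x ∈ e)).card : ℝ) * C233
        + ((Miss.card : ℕ) : ℝ) * C34 := by
      rw [hC233def, hC34def]
      exact_mod_cast hBadcard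
    have step2 : ((Bad.card : ℕ) : ℝ) ≤ (δ * Cn2) * C233 + ((n : ℝ) * (δ * Cn2)) * C34 := by
      refine le_trans hcast (add_le_add ?_ ?_)
      · exact mul_le_mul_of_nonneg_right hMissx hC233nn
      · exact mul_le_mul_of_nonneg_right hMiss hC34nn
    have step3 : (δ * Cn2) * C233 + ((n : ℝ) * (δ * Cn2)) * C34
        = δ * (CT * Ct2) + δ * ((((n.choose 3 : ℕ) : ℝ) * 3) * C34) := by
      have : (δ * Cn2) * C233 = δ * (Cn2 * C233) := by ring
      rw [this, hId1R]
      have : ((n : ℝ) * (δ * Cn2)) * C34 = δ * (((n : ℝ) * Cn2) * C34) := by ring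
      rw [this, hId2R]
    have step4 : δ * ((((n.choose 3 : ℕ) : ℝ) * 3) * C34)
        ≤ δ * ((2 * (((n - 1).choose 3 : ℕ) : ℝ) * 3) * C34) := by
      apply mul_le_mul_of_nonneg_left _ hδpos.le
      apply mul_le_mul_of_nonneg_right _ hC34nn
      apply mul_le_mul_of_nonneg_right hId3R
      norm_num
    have step5 : δ * ((2 * (((n - 1).choose 3 : ℕ) : ℝ) * 3) * C34) = δ * (6 * (CT * Ct3)) := by
      rw [show (2 * (((n - 1).choose 3 : ℕ) : ℝ) * 3) * C34
        = 6 * ((((n - 1).choose 3 : ℕ) : ℝ) * C34) by ring, hId4R]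
    have step6 : δ * (CT * Ct2) + δ * (6 * (CT * Ct3))
        = (δ * (((t - 1).choose 2 + 6 * (t - 1).choose 3 : ℕ) : ℝ)) * CT := by
      rw [hKr]; ring
    have : ((Bad.card : ℕ) : ℝ) ≤ CT / 2 := by
      rw [hhalf] at step6
      calc ((Bad.card : ℕ) : ℝ) ≤ (δ * Cn2) * C233 + ((n : ℝ) * (δ * Cn2)) * C34 := step2
        _ = δ * (CT * Ct2) + δ * ((((n.choose 3 : ℕ) : ℝ) * 3) * C34) := step3
        _ ≤ δ * (CT * Ct2) + δ * ((2 * (((n - 1).choose 3 : ℕ) : ℝ) * 3) * C34) := by linarith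
        _ = δ * (CT * Ct2) + δ * (6 * (CT * Ct3)) := by rw [step5]
        _ = 1 / 2 * CT := step6
        _ = CT / 2 := by ring
    linarith
  have hBadlt : Bad.card < 𝒮.card := by
    have : ((Bad.card : ℕ) : ℝ) < ((𝒮.card : ℕ) : ℝ) := by
      rw [hcard𝒮]
      exact hfinal
    exact_mod_cast this
  -- extract a good set
  have hnotsub : ¬ 𝒮 ⊆ Bad := by
    intro h
    exact absurd (Finset.card_le_card h) (not_le.mpr hBadlt)
  obtain ⟨R, hR𝒮, hRBad⟩ := Finset.not_subset.mp hnotsub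
  have hRprop := Finset.mem_powersetCard.mp (h𝒮def ▸ hR𝒮)
  have hxR : x ∉ R := fun hx => (Finset.mem_erase.mp (hRprop.1 hx)).1 rfl
  refine ⟨insert x R, mem_insert_self _ _, ?_, ?_⟩
  · rw [Finset.card_insert_of_notMem hxR, hRprop.2]
    omega
  · intro e hesub hecard
    by_contra henH
    apply hRBad
    rw [hBaddef, mem_filter]
    refine ⟨hR𝒮, e, ?_, hesub⟩
    rw [hMissdef, Finset.mem_sdiff, Finset.mem_powersetCard]
    exact ⟨⟨Finset.subset_univ _, hecard⟩, henH⟩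

end UnionBound


section Glue

lemma not_covK_empty {n t : ℕ} (ht : 3 ≤ t) (x : Fin n) :
    ¬ CovK t (∅ : Finset (Finset (Fin n))) x := by
  rintro ⟨S, hxS, hcard, hall⟩
  obtain ⟨e, hsub, hecard⟩ := Finset.exists_subset_card_eq (s := S) (n := 3) (by omega)
  exact absurd (hall e hsub hecard) (Finset.notMem_empty e)

lemma c1K_mem {t n : ℕ} (ht : 3 ≤ t) (hn : 1 ≤ n) :
    c1K t n ∈ {d : ℕ | ∃ H : Finset (Finset (Fin n)),
      (∀ e ∈ H, e.card = 3) ∧ (∃ x, ¬ CovK t H x) ∧ d = minDeg H} := by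
  apply Nat.sSup_mem
  · exact ⟨minDeg (∅ : Finset (Finset (Fin n))),
      ⟨∅, by simp, ⟨⟨0, by omega⟩, not_covK_empty ht _⟩, rfl⟩⟩
  · exact ⟨(n - 1).choose 2, fun d hd => c1K_set_bound hd⟩

lemma c1K_le_real {t n : ℕ} {b : ℝ} (ht : 3 ≤ t) (hn : 1 ≤ n)
    (h : ∀ H : Finset (Finset (Fin n)), (∀ e ∈ H, e.card = 3) → (∃ x, ¬ CovK t H x) →
      ((minDeg H : ℕ) : ℝ) ≤ b) :
    ((c1K t n : ℕ) : ℝ) ≤ b := by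
  obtain ⟨H, h3, hx, hd⟩ := c1K_mem ht hn
  rw [hd]
  exact h H h3 hx

lemma c1Kdens_le_one_sub {t : ℕ} (ht : 4 ≤ t) : c1Kdens t ≤ 1 - dlt t := by
  apply c1Kdens_le_of_eventually
  filter_upwards [Filter.eventually_ge_atTop (t + 3), Filter.eventually_ge_atTop 6]
    with n hn1 hn2
  apply c1K_le_real (by omega) (by omega)
  intro H h3 hx
  by_contra hlt
  push_neg at hlt
  obtain ⟨x, hnx⟩ := hx
  apply hnx
  apply union_bound_cover ht hn1 hn2 H h3 _ x
  intro v
  have h1 : (minDeg H : ℝ) ≤ (hdeg H v : ℝ) := by exact_mod_cast minDeg_le_hdeg H v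
  linarith

end Glue


section HostDeg

variable {n m : ℕ} (H : Finset (Finset (Fin n)))

/-- Degree lower bound in the transferred host hypergraph. -/
lemma host_deg_bound (f : Fin m → Fin n) (hf : Function.Injective f)
    (W : Finset (Fin n)) (hfW : ∀ i, f i ∈ W)
    (y : Fin n) (hyW : y ∉ W) (x' : Fin m) (i : Fin m) :
    (m - 1).choose 2 ≤
      hdeg (((univ : Finset (Fin m)).powersetCard 3).filter
        (fun E => (E.image f ∈ H) ∧ (x' ∈ E → insert y ((E.erase x').image f) ∈ H))) i
      + (((univ.erase (f i)).powersetCard 2).filter (fun q => insert (f i) q ∉ H)).card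
      + (((univ.erase y).powersetCard 2).filter (fun q => insert y q ∉ H)).card
      + m := by
  classical
  set J' := (((univ : Finset (Fin m)).powersetCard 3).filter
    (fun E => (E.image f ∈ H) ∧ (x' ∈ E → insert y ((E.erase x').image f) ∈ H))) with hJ'def
  set P := ((univ : Finset (Fin m)).erase i).powersetCard 2 with hPdef
  have hPcard : P.card = (m - 1).choose 2 := by
    rw [hPdef, Finset.card_powersetCard, Finset.card_erase_of_mem (mem_univ i), card_univ,
      Fintype.card_fin]
  have hmemP : ∀ p ∈ P, p ⊆ univ.erase i ∧ p.card = 2 := by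
    intro p hp
    exact Finset.mem_powersetCard.mp (hPdef ▸ hp)
  have hinotp : ∀ p ∈ P, i ∉ p := by
    intro p hp hip
    exact (Finset.mem_erase.mp ((hmemP p hp).1 hip)).1 rfl
  -- good pairs inject into the degree
  have hgood : (P.filter (fun p => ((insert i p).image f ∈ H) ∧ (x' ∈ insert i p → insert y (((insert i p).erase x').image f) ∈ H))).card ≤ hdeg J' i := by
    rw [hdeg]
    apply Finset.card_le_card_of_injOn (fun p => insert i p)
    · intro p hp
      rw [Finset.mem_coe, mem_filter] at hp ⊢
      constructor
      · rw [hJ'def, mem_filter, Finset.mem_powersetCard]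
        refine ⟨⟨Finset.subset_univ _, ?_⟩, hp.2⟩
        rw [Finset.card_insert_of_notMem (hinotp p hp.1), (hmemP p hp.1).2]
      · exact mem_insert_self _ _
    · intro p1 h1 p2 h2 h
      simp only [coe_filter, Set.mem_setOf_eq] at h1 h2
      have e1 := Finset.erase_insert (hinotp p1 h1.1)
      have e2 := Finset.erase_insert (hinotp p2 h2.1)
      simp only at h
      rw [← e1, ← e2, h]
  -- split P
  have hsplit : (P.filter (fun p => ((insert i p).image f ∈ H) ∧ (x' ∈ insert i p → insert y (((insert i p).erase x').image f) ∈ H))).card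
      + (P.filter (fun p => ¬ (((insert i p).image f ∈ H) ∧ (x' ∈ insert i p → insert y (((insert i p).erase x').image f) ∈ H)))).card = P.card :=
    Finset.card_filter_add_card_filter_not _
  -- bad pairs bound
  have hbadsub : P.filter (fun p => ¬ (((insert i p).image f ∈ H) ∧ (x' ∈ insert i p → insert y (((insert i p).erase x').image f) ∈ H)))
      ⊆ (P.filter (fun p => (insert i p).image f ∉ H))
        ∪ (P.filter (fun p => x' ∈ insert i p ∧ insert y (((insert i p).erase x').image f) ∉ H)) := by
    intro p hp
    rw [mem_filter] at hp
    rw [Finset.mem_union, mem_filter, mem_filter]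
    by_cases h1 : (insert i p).image f ∈ H
    · right
      refine ⟨hp.1, ?_⟩
      by_contra hcon
      push_neg at hcon
      exact hp.2 ⟨h1, fun hx'E => hcon hx'E⟩
    · exact Or.inl ⟨hp.1, h1⟩
  -- bad1: pairs whose image-triple is missing
  have hbad1 : (P.filter (fun p => (insert i p).image f ∉ H)).card
      ≤ (((univ.erase (f i)).powersetCard 2).filter (fun q => insert (f i) q ∉ H)).card := by
    apply Finset.card_le_card_of_injOn (fun p => p.image f)
    · intro p hp
      rw [Finset.mem_coe, mem_filter] at hp
      obtain ⟨hpsub, hpcard⟩ := hmemP p hp.1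
      rw [Finset.mem_coe, mem_filter, Finset.mem_powersetCard]
      refine ⟨⟨?_, ?_⟩, ?_⟩
      · intro u hu
        obtain ⟨z, hz, rfl⟩ := Finset.mem_image.mp hu
        rw [Finset.mem_erase]
        exact ⟨fun hfz => (Finset.mem_erase.mp (hpsub hz)).1 (hf hfz), mem_univ _⟩
      · rw [Finset.card_image_of_injective _ hf, hpcard]
      · rw [← Finset.image_insert]
        exact hp.2
    · intro p1 h1 p2 h2 h
      simp only at h
      exact (Finset.image_injective hf) h
  -- bad2
  have hbad2 : (P.filter (fun p => x' ∈ insert i p ∧ insert y (((insert i p).erase x').image f) ∉ H)).card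
      ≤ (((univ.erase y).powersetCard 2).filter (fun q => insert y q ∉ H)).card + m := by
    by_cases hix : i = x'
    · -- i = x' : bound by miss y
      apply le_trans _ (Nat.le_add_right _ m)
      apply Finset.card_le_card_of_injOn (fun p => p.image f)
      · intro p hp
        rw [Finset.mem_coe, mem_filter] at hp
        obtain ⟨hpP, hpx', hpbad⟩ := hp
        obtain ⟨hpsub, hpcard⟩ := hmemP p hpP
        have hipn : i ∉ p := hinotp p hpP
        have herase : (insert i p).erase x' = p := by
          rw [← hix, Finset.erase_insert hipn]
        rw [herase] at hpbad
        rw [Finset.mem_coe, mem_filter, Finset.mem_powersetCard]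
        refine ⟨⟨?_, ?_⟩, hpbad⟩
        · intro u hu
          obtain ⟨z, hz, rfl⟩ := Finset.mem_image.mp hu
          rw [Finset.mem_erase]
          exact ⟨fun hfz => hyW (hfz ▸ hfW z), mem_univ _⟩
        · rw [Finset.card_image_of_injective _ hf, hpcard]
      · intro p1 h1 p2 h2 h
        simp only at h
        exact (Finset.image_injective hf) h
    · -- i ≠ x' : bad pairs contain x', at most m of them
      apply le_trans _ (Nat.le_add_left m _)
      have hsub2 : (P.filter (fun p => x' ∈ insert i p ∧ insert y (((insert i p).erase x').image f) ∉ H))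
          ⊆ (univ : Finset (Fin m)).image (fun z => insert x' {z}) := by
        intro p hp
        rw [mem_filter] at hp
        obtain ⟨hpP, hpx', -⟩ := hp
        have hx'p : x' ∈ p := by
          rcases Finset.mem_insert.mp hpx' with h | h
          · exact absurd h.symm hix
          · exact h
        have h1 : (p.erase x').card = 1 := by
          rw [Finset.card_erase_of_mem hx'p, (hmemP p hpP).2]
        obtain ⟨z, hz⟩ := Finset.card_eq_one.mp h1
        rw [Finset.mem_image]
        refine ⟨z, mem_univ _, ?_⟩
        rw [← Finset.insert_erase hx'p, hz]
      calc (P.filter (fun p => x' ∈ insert i p ∧ insert y (((insert i p).erase x').image f) ∉ H)).card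
          ≤ ((univ : Finset (Fin m)).image (fun z => insert x' {z})).card :=
            Finset.card_le_card hsub2
        _ ≤ (univ : Finset (Fin m)).card := Finset.card_image_le
        _ = m := by rw [card_univ, Fintype.card_fin]
  -- assemble
  have hbadcard : (P.filter (fun p => ¬ (((insert i p).image f ∈ H) ∧ (x' ∈ insert i p → insert y (((insert i p).erase x').image f) ∈ H)))).card
      ≤ (((univ.erase (f i)).powersetCard 2).filter (fun q => insert (f i) q ∉ H)).card
        + ((((univ.erase y).powersetCard 2).filter (fun q => insert y q ∉ H)).card + m) := by
    calc (P.filter (fun p => ¬ (((insert i p).image f ∈ H) ∧ (x' ∈ insert i p → insert y (((insert i p).erase x').image f) ∈ H)))).card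
        ≤ ((P.filter (fun p => (insert i p).image f ∉ H))
          ∪ (P.filter (fun p => x' ∈ insert i p ∧ insert y (((insert i p).erase x').image f) ∉ H))).card :=
          Finset.card_le_card hbadsub
      _ ≤ (P.filter (fun p => (insert i p).image f ∉ H)).card
          + (P.filter (fun p => x' ∈ insert i p ∧ insert y (((insert i p).erase x').image f) ∉ H)).card :=
          Finset.card_union_le _ _
      _ ≤ _ := Nat.add_le_add hbad1 hbad2
  omega

end HostDeg


section MainCover

lemma cast_choose2 (a : ℕ) : ((a.choose 2 : ℕ) : ℝ) = (a : ℝ) * ((a : ℝ) - 1) / 2 :=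
  Nat.cast_choose_two ℝ a

set_option maxHeartbeats 2000000 in
/-- The main covering lemma. -/
lemma main_cover {t : ℕ} (ht : 4 ≤ t) {c ε ᾱ : ℝ}
    (hc0 : 0 ≤ c) (hε : 0 < ε)
    (hᾱ1 : ᾱ ≤ 1) (hᾱhalf : 1 / 2 ≤ ᾱ)
    (hKEY : (1 - c - ε) * ᾱ ^ 2 ≥ 2 * (1 - ᾱ) + ε)
    {M : ℕ} (hM : ∀ m : ℕ, M ≤ m → 3 ≤ m → (c1K t m : ℝ) < (c + ε) * (((m - 1).choose 2 : ℕ) : ℝ))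
    {n : ℕ} (hnM : 2 * M + 10 ≤ n) (hn40 : (40 : ℝ) / ε + 40 ≤ (n : ℝ))
    (H : Finset (Finset (Fin n))) (h3 : ∀ e ∈ H, e.card = 3)
    (hdegs : ∀ v : Fin n, ᾱ * (((n - 1).choose 2 : ℕ) : ℝ) < (hdeg H v : ℝ))
    (x : Fin n) : CovK (t + 1) H x := by
  classical
  have hn40' : (40 : ℝ) ≤ (n : ℝ) := by
    have : (0:ℝ) ≤ 40 / ε := by positivity
    linarith
  have hn3 : 3 ≤ n := by exact_mod_cast (by linarith : (3:ℝ) ≤ (n:ℝ))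
  set Cn : ℝ := (((n - 1).choose 2 : ℕ) : ℝ) with hCndef
  have hCncast : Cn = ((n : ℝ) - 1) * ((n : ℝ) - 2) / 2 := by
    rw [hCndef, cast_choose2]
    have h1 : ((n - 1 : ℕ) : ℝ) = (n : ℝ) - 1 := by
      have : 1 ≤ n := by omega
      push_cast [this]; ring
    rw [h1]; ring
  -- degree of x
  have hdx : ᾱ * Cn < (hdeg H x : ℝ) := hdegs x
  -- choose y with large codegree
  have hsum : ∑ y ∈ univ.erase x, (H.filter (fun e => x ∈ e ∧ y ∈ e)).card = 2 * hdeg H x := by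
    have h1 : ∀ y, (H.filter (fun e => x ∈ e ∧ y ∈ e)).card
        = ∑ e ∈ H, (if x ∈ e ∧ y ∈ e then 1 else 0) := by
      intro y; rw [Finset.card_filter]
    calc ∑ y ∈ univ.erase x, (H.filter (fun e => x ∈ e ∧ y ∈ e)).card
        = ∑ y ∈ univ.erase x, ∑ e ∈ H, (if x ∈ e ∧ y ∈ e then 1 else 0) := by
          exact Finset.sum_congr rfl (fun y _ => h1 y)
      _ = ∑ e ∈ H, ∑ y ∈ univ.erase x, (if x ∈ e ∧ y ∈ e then 1 else 0) := Finset.sum_comm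
      _ = ∑ e ∈ H, (if x ∈ e then 2 else 0) := by
          apply Finset.sum_congr rfl
          intro e he
          by_cases hx : x ∈ e
          · rw [if_pos hx]
            have : ∀ y, (x ∈ e ∧ y ∈ e ↔ y ∈ e) := fun y => ⟨fun h => h.2, fun h => ⟨hx, h⟩⟩
            have hcongr : ∑ y ∈ univ.erase x, (if x ∈ e ∧ y ∈ e then 1 else 0)
                = ∑ y ∈ univ.erase x, (if y ∈ e then 1 else 0) := by
              apply Finset.sum_congr rfl
              intro y _
              simp only [this y]
            rw [hcongr, ← Finset.card_filter]
            have : (univ.erase x).filter (fun y => y ∈ e) = e.erase x := by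
              ext u
              simp only [mem_filter, Finset.mem_erase, mem_univ, true_and, and_comm]
            rw [this, Finset.card_erase_of_mem hx, h3 e he]
          · rw [if_neg hx]
            apply Finset.sum_eq_zero
            intro y _
            rw [if_neg (fun h => hx h.1)]
      _ = 2 * hdeg H x := by
          rw [Finset.sum_ite, Finset.sum_const, Finset.sum_const_zero, add_zero,
            smul_eq_mul, hdeg]
          ring
  have hy : ∃ y ∈ univ.erase x, ᾱ * ((n : ℝ) - 2) ≤ ((H.filter (fun e => x ∈ e ∧ y ∈ e)).card : ℝ) := by
    by_contra hcon
    push_neg at hcon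
    have hne : (univ.erase x).Nonempty := by
      rw [← Finset.card_pos, Finset.card_erase_of_mem (mem_univ x), card_univ, Fintype.card_fin]
      omega
    have hlt : ∑ y ∈ univ.erase x, (((H.filter (fun e => x ∈ e ∧ y ∈ e)).card : ℕ) : ℝ)
        < ∑ _y ∈ univ.erase x, (ᾱ * ((n : ℝ) - 2)) :=
      Finset.sum_lt_sum_of_nonempty hne (fun y hy => hcon y hy)
    rw [Finset.sum_const, Finset.card_erase_of_mem (mem_univ x), card_univ,
      Fintype.card_fin] at hlt
    have hcastsum : ((∑ y ∈ univ.erase x, (H.filter (fun e => x ∈ e ∧ y ∈ e)).card : ℕ) : ℝ)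
        = ∑ y ∈ univ.erase x, (((H.filter (fun e => x ∈ e ∧ y ∈ e)).card : ℕ) : ℝ) := by
      push_cast; rfl
    rw [← hcastsum, hsum] at hlt
    rw [nsmul_eq_mul] at hlt
    have hn1cast : ((n - 1 : ℕ) : ℝ) = (n : ℝ) - 1 := by
      have : 1 ≤ n := by omega
      push_cast [this]; ring
    rw [hn1cast] at hlt
    have h2hx : ((2 * hdeg H x : ℕ) : ℝ) = 2 * (hdeg H x : ℝ) := by push_cast; ring
    rw [h2hx] at hlt
    rw [hCncast] at hdx
    nlinarith
  obtain ⟨y, hyer, hycodeg⟩ := hy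
  have hyx : y ≠ x := (Finset.mem_erase.mp hyer).1
  -- the common neighbourhood A
  set A : Finset (Fin n) := univ.filter
    (fun u => u ≠ x ∧ u ≠ y ∧ insert x (insert y {u}) ∈ H) with hAdef
  have hcodegA : (H.filter (fun e => x ∈ e ∧ y ∈ e)).card ≤ A.card := by
    have hsub : H.filter (fun e => x ∈ e ∧ y ∈ e)
        ⊆ A.image (fun u => insert x (insert y {u})) := by
      intro e he
      rw [mem_filter] at he
      obtain ⟨heH, hxe, hye⟩ := he
      have hecard : e.card = 3 := h3 e heH
      have h1 : ((e.erase x).erase y).card = 1 := by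
        rw [Finset.card_erase_of_mem, Finset.card_erase_of_mem hxe, hecard]
        rw [Finset.mem_erase]
        exact ⟨hyx, hye⟩
      obtain ⟨u, hu⟩ := Finset.card_eq_one.mp h1
      have huerase : u ∈ (e.erase x).erase y := hu ▸ Finset.mem_singleton_self u
      have huy : u ≠ y := (Finset.mem_erase.mp huerase).1
      have hux : u ≠ x := (Finset.mem_erase.mp (Finset.mem_erase.mp huerase).2).1
      have hue : u ∈ e := (Finset.mem_erase.mp (Finset.mem_erase.mp huerase).2).2
      have hesub : insert x (insert y {u}) ⊆ e := by
        intro v hv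
        rcases Finset.mem_insert.mp hv with rfl | hv
        · exact hxe
        rcases Finset.mem_insert.mp hv with rfl | hv
        · exact hye
        · rw [Finset.mem_singleton.mp hv]; exact hue
      have hecard2 : (insert x (insert y ({u} : Finset (Fin n)))).card = 3 := by
        rw [Finset.card_insert_of_notMem, Finset.card_insert_of_notMem, Finset.card_singleton]
        · rw [Finset.mem_singleton]; exact fun h => huy h.symm
        · rw [Finset.mem_insert, Finset.mem_singleton]
          push_neg
          exact ⟨fun h => hyx h.symm, fun h => hux h.symm⟩
      have heq : insert x (insert y {u}) = e :=
        Finset.eq_of_subset_of_card_le hesub (by omega)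
      rw [Finset.mem_image]
      refine ⟨u, ?_, heq⟩
      rw [hAdef, mem_filter]
      refine ⟨mem_univ _, hux, huy, ?_⟩
      rw [heq]; exact heH
    calc (H.filter (fun e => x ∈ e ∧ y ∈ e)).card
        ≤ (A.image (fun u => insert x (insert y {u}))).card := Finset.card_le_card hsub
      _ ≤ A.card := Finset.card_image_le
  have hAlb : ᾱ * ((n : ℝ) - 2) ≤ (A.card : ℝ) := by
    calc ᾱ * ((n : ℝ) - 2) ≤ ((H.filter (fun e => x ∈ e ∧ y ∈ e)).card : ℝ) := hycodeg
      _ ≤ (A.card : ℝ) := by exact_mod_cast hcodegA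
  have hxA : x ∉ A := by
    rw [hAdef, mem_filter]; push_neg; intro _ h; exact absurd rfl h
  have hyA : y ∉ A := by
    rw [hAdef, mem_filter]; push_neg; intro _ _ h; exact absurd rfl h
  have hAn : A.card ≤ n := by
    calc A.card ≤ (univ : Finset (Fin n)).card := Finset.card_le_card (Finset.subset_univ A)
      _ = n := by rw [card_univ, Fintype.card_fin]
  -- the host vertex set
  set W : Finset (Fin n) := insert x A with hWdef
  have hxW : x ∈ W := mem_insert_self x A
  have hyW : y ∉ W := by
    rw [hWdef, Finset.mem_insert]
    push_neg
    exact ⟨hyx, hyA⟩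
  set m := W.card with hmdef
  have hmcard : m = A.card + 1 := by
    rw [hmdef, hWdef, Finset.card_insert_of_notMem hxA]
  set femb := W.orderEmbOfFin (k := m) hmdef.symm with hfembdef
  have hf_inj : Function.Injective ⇑femb := femb.injective
  have hfW : ∀ i, femb i ∈ W := fun i => Finset.orderEmbOfFin_mem W hmdef.symm i
  have hxrange : x ∈ Set.range ⇑femb := by
    rw [Finset.range_orderEmbOfFin]
    exact Finset.mem_coe.mpr hxW
  obtain ⟨x', hx'⟩ := hxrange
  -- the host hypergraph
  set J' := ((univ : Finset (Fin m)).powersetCard 3).filter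
    (fun E => (E.image ⇑femb ∈ H) ∧ (x' ∈ E → insert y ((E.erase x').image ⇑femb) ∈ H))
    with hJ'def
  have hJ'3 : ∀ E ∈ J', E.card = 3 := by
    intro E hE
    exact (Finset.mem_powersetCard.mp (Finset.mem_filter.mp (hJ'def ▸ hE)).1).2
  -- miss counts are small
  have hmiss : ∀ v : Fin n,
      ((((univ.erase v).powersetCard 2).filter (fun q => insert v q ∉ H)).card : ℝ)
        < (1 - ᾱ) * Cn := by
    intro v
    have h := hdeg_add_missing H h3 v
    have hcast : (hdeg H v : ℝ)
        + ((((univ.erase v).powersetCard 2).filter (fun q => insert v q ∉ H)).card : ℝ)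
        = Cn := by rw [hCndef]; exact_mod_cast h
    have := hdegs v
    linarith
  -- degree bound for the host
  have hdegJ : ∀ i : Fin m, (((m - 1).choose 2 : ℕ) : ℝ)
      ≤ (hdeg J' i : ℝ) + (1 - ᾱ) * Cn + (1 - ᾱ) * Cn + (m : ℝ) := by
    intro i
    have hhost := host_deg_bound H ⇑femb hf_inj W hfW y hyW x' i
    rw [← hJ'def] at hhost
    have hcast : (((m - 1).choose 2 : ℕ) : ℝ) ≤ (hdeg J' i : ℝ)
        + ((((univ.erase (femb i)).powersetCard 2).filter (fun q => insert (femb i) q ∉ H)).card : ℝ)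
        + ((((univ.erase y).powersetCard 2).filter (fun q => insert y q ∉ H)).card : ℝ)
        + (m : ℝ) := by exact_mod_cast hhost
    have h1 := hmiss (femb i)
    have h2 := hmiss y
    linarith
  -- real arithmetic: minimum degree of the host beats the threshold
  set aR : ℝ := (A.card : ℝ) with haRdef
  have hAnR : aR ≤ (n : ℝ) := by rw [haRdef]; exact_mod_cast hAn
  have hAlbR : ᾱ * ((n : ℝ) - 2) ≤ aR := hAlb
  have hmR : (m : ℝ) = aR + 1 := by rw [hmcard, haRdef]; push_cast; ring
  have hCm : (((m - 1).choose 2 : ℕ) : ℝ) = aR * (aR - 1) / 2 := by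
    have hm1 : m - 1 = A.card := by omega
    rw [hm1, cast_choose2, haRdef]
  have h1cme : 0 < 1 - c - ε := by nlinarith [hKEY, sq_nonneg ᾱ]
  have hεn : 40 ≤ ε * ((n : ℝ) - 2) := by
    have h1 : (40 : ℝ) / ε ≤ (n : ℝ) - 40 := by linarith
    have h2 : (40 : ℝ) ≤ ((n : ℝ) - 40) * ε := (div_le_iff₀ hε).mp h1
    nlinarith [hε]
  have hsq : ᾱ ^ 2 * ((n : ℝ) - 2) ^ 2 - (n : ℝ) ≤ aR * (aR - 1) := by
    have h0 : 0 ≤ ᾱ * ((n : ℝ) - 2) := by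
      apply mul_nonneg (by linarith) (by linarith)
    nlinarith [mul_le_mul hAlbR hAlbR h0 (le_trans h0 hAlbR)]
  have hK2 : (2 * (1 - ᾱ) + ε) * ((n : ℝ) - 2) ^ 2 ≤ (1 - c - ε) * ᾱ ^ 2 * ((n : ℝ) - 2) ^ 2 := by
    have := mul_le_mul_of_nonneg_right hKEY (sq_nonneg ((n : ℝ) - 2))
    nlinarith [this]
  have hE2 : 40 * ((n : ℝ) - 2) ≤ ε * ((n : ℝ) - 2) ^ 2 := by
    nlinarith [hεn, hn40']
  have hone : 2 * (1 - ᾱ) * ((n : ℝ) - 2) ≤ (n : ℝ) - 2 := by nlinarith [hᾱhalf, hn40']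
  have hmain : 4 * (1 - ᾱ) * Cn + 2 * (m : ℝ) < (1 - c - ε) * (aR * (aR - 1)) := by
    have hsq2 : (1 - c - ε) * (ᾱ ^ 2 * ((n : ℝ) - 2) ^ 2 - (n : ℝ))
        ≤ (1 - c - ε) * (aR * (aR - 1)) :=
      mul_le_mul_of_nonneg_left hsq (le_of_lt h1cme)
    have hT1b : (1 - c - ε) * (n : ℝ) ≤ (n : ℝ) := by nlinarith [hc0, hε, hn40']
    rw [hCncast, hmR]
    nlinarith [hsq2, hK2, hE2, hone, hAnR, hn40']
  obtain ⟨i₀, hi₀⟩ := exists_minDeg J' (by omega : 0 < m)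
  have hminJ : (c + ε) * (((m - 1).choose 2 : ℕ) : ℝ) < (minDeg J' : ℝ) := by
    have hb := hdegJ i₀
    rw [hi₀]
    rw [hCm] at hb ⊢
    linarith [hmain, hb]
  -- host size constraints
  have h2m : n ≤ 2 * m := by
    have h2a : (n : ℝ) - 2 ≤ 2 * aR := by nlinarith [hAlbR, hᾱhalf, hn40']
    have : (n : ℝ) ≤ 2 * (m : ℝ) := by rw [hmR]; linarith
    exact_mod_cast this
  have hmM : M ≤ m ∧ 3 ≤ m := by omega
  -- apply the threshold: the host has a K_t-covering at x'
  have hcov : CovK t J' x' := by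
    by_contra hncov
    have hle := minDeg_le_c1K J' hJ'3 ⟨x', hncov⟩
    have hlt := hM m hmM.1 hmM.2
    have hle' : (minDeg J' : ℝ) ≤ (c1K t m : ℝ) := by exact_mod_cast hle
    linarith
  -- construct the covering copy of K_{t+1} at x
  obtain ⟨S', hx'S', hS'card, hS'all⟩ := hcov
  refine ⟨insert y (S'.image ⇑femb), ?_, ?_, ?_⟩
  · exact Finset.mem_insert_of_mem (Finset.mem_image.mpr ⟨x', hx'S', hx'⟩)
  · have hyT : y ∉ S'.image ⇑femb := by
      intro hmem
      obtain ⟨z, _, hfz⟩ := Finset.mem_image.mp hmem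
      exact hyW (hfz ▸ hfW z)
    rw [Finset.card_insert_of_notMem hyT, Finset.card_image_of_injective _ hf_inj, hS'card]
  · intro e hesub hecard
    by_cases hye : y ∈ e
    · -- a triple containing y
      have hpcard : (e.erase y).card = 2 := by rw [Finset.card_erase_of_mem hye, hecard]
      have hpT : e.erase y ⊆ S'.image ⇑femb := by
        intro u hu
        have h1 := Finset.mem_erase.mp hu
        rcases Finset.mem_insert.mp (hesub h1.2) with h | h
        · exact absurd h h1.1
        · exact h
      set P' := S'.filter (fun z => femb z ∈ e.erase y) with hP'def
      have himg : P'.image ⇑femb = e.erase y := by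
        apply Finset.Subset.antisymm
        · intro u hu
          obtain ⟨z, hz, rfl⟩ := Finset.mem_image.mp hu
          exact (Finset.mem_filter.mp hz).2
        · intro u hu
          obtain ⟨z, hzS', rfl⟩ := Finset.mem_image.mp (hpT hu)
          exact Finset.mem_image.mpr
            ⟨z, by rw [hP'def, Finset.mem_filter]; exact ⟨hzS', hu⟩, rfl⟩
      have hP'card : P'.card = 2 := by
        have := hpcard
        rw [← himg, Finset.card_image_of_injective _ hf_inj] at this
        exact this
      by_cases hx'P : x' ∈ P'
      · -- e = {x, y, femb w'}
        have h1 : (P'.erase x').card = 1 := by rw [Finset.card_erase_of_mem hx'P, hP'card]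
        obtain ⟨w', hw'⟩ := Finset.card_eq_one.mp h1
        have hw'mem : w' ∈ P'.erase x' := hw' ▸ Finset.mem_singleton_self w'
        have hw'x' : w' ≠ x' := (Finset.mem_erase.mp hw'mem).1
        have hP'eq : P' = insert x' {w'} := by
          rw [← Finset.insert_erase hx'P, hw']
        have hfwx : femb w' ≠ x := fun h => hw'x' (hf_inj (h.trans hx'.symm))
        have hfwA : femb w' ∈ A := by
          rcases Finset.mem_insert.mp (hWdef ▸ hfW w') with h | h
          · exact absurd h hfwx
          · exact h
        have hfwH : insert x (insert y ({femb w'} : Finset (Fin n))) ∈ H :=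
          ((Finset.mem_filter.mp (hAdef ▸ hfwA)).2).2.2
        have hpeq : e.erase y = insert x ({femb w'} : Finset (Fin n)) := by
          rw [← himg, hP'eq, Finset.image_insert, Finset.image_singleton, hx']
        have heeq : e = insert y (e.erase y) := (Finset.insert_erase hye).symm
        rw [heeq, hpeq, Finset.insert_comm]
        exact hfwH
      · -- use the triple insert x' P' of S'
        have hE0sub : insert x' P' ⊆ S' := by
          intro z hz
          rcases Finset.mem_insert.mp hz with rfl | hz
          · exact hx'S'
          · exact (Finset.mem_filter.mp (hP'def ▸ hz)).1
        have hE0card : (insert x' P').card = 3 := by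
          rw [Finset.card_insert_of_notMem hx'P, hP'card]
        have hE0J := hS'all _ hE0sub hE0card
        have hQ := (Finset.mem_filter.mp (hJ'def ▸ hE0J)).2
        have hcond := hQ.2 (Finset.mem_insert_self x' P')
        rw [Finset.erase_insert hx'P, himg] at hcond
        rw [← Finset.insert_erase hye]
        exact hcond
    · -- a triple inside the image of S'
      have hesubT : e ⊆ S'.image ⇑femb := by
        intro u hu
        rcases Finset.mem_insert.mp (hesub hu) with rfl | h
        · exact absurd hu hye
        · exact h
      set E := S'.filter (fun z => femb z ∈ e) with hEdef
      have himg : E.image ⇑femb = e := by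
        apply Finset.Subset.antisymm
        · intro u hu
          obtain ⟨z, hz, rfl⟩ := Finset.mem_image.mp hu
          exact (Finset.mem_filter.mp hz).2
        · intro u hu
          obtain ⟨z, hzS', rfl⟩ := Finset.mem_image.mp (hesubT hu)
          exact Finset.mem_image.mpr
            ⟨z, by rw [hEdef, Finset.mem_filter]; exact ⟨hzS', hu⟩, rfl⟩
      have hEcard : E.card = 3 := by
        have := hecard
        rw [← himg, Finset.card_image_of_injective _ hf_inj] at this
        exact this
      have hEJ := hS'all E (Finset.filter_subset _ _) hEcard
      have hQ := (Finset.mem_filter.mp (hJ'def ▸ hEJ)).2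
      rw [← himg]
      exact hQ.1

end MainCover


section Algebra

lemma alpha_id {c : ℝ} (hc1 : c < 1) :
    (1 - c) * ((-1 + Real.sqrt (3 - 2 * c)) / (1 - c)) ^ 2
      + 2 * ((-1 + Real.sqrt (3 - 2 * c)) / (1 - c)) - 2 = 0 := by
  have h1 : (0:ℝ) ≤ 3 - 2 * c := by linarith
  have hs := Real.sq_sqrt h1
  have hne : 1 - c ≠ 0 := by linarith
  field_simp
  rw [mul_comm c 2]
  nlinarith [hs]

lemma alpha_nonneg {c : ℝ} (hc1 : c < 1) :
    0 ≤ (-1 + Real.sqrt (3 - 2 * c)) / (1 - c) := by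
  have h1 : (0:ℝ) ≤ 3 - 2 * c := by linarith
  have hs := Real.sq_sqrt h1
  have hsnn := Real.sqrt_nonneg (3 - 2 * c)
  have hs1 : 1 ≤ Real.sqrt (3 - 2 * c) := by nlinarith
  apply div_nonneg (by linarith) (by linarith)

lemma alpha_half {c : ℝ} (hc0 : 0 ≤ c) (hc1 : c < 1) :
    1 / 2 ≤ (-1 + Real.sqrt (3 - 2 * c)) / (1 - c) := by
  have hid := alpha_id hc1
  have h0 := alpha_nonneg hc1
  set α := (-1 + Real.sqrt (3 - 2 * c)) / (1 - c)
  nlinarith [hid, h0, hc0, sq_nonneg α]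

lemma key_ineq {c ε αs : ℝ} (hc0 : 0 ≤ c) (hε : 0 < ε) (hα0 : 0 ≤ αs)
    (hid : (1 - c) * αs ^ 2 + 2 * αs - 2 = 0) (hα1 : αs + ε ≤ 1) (hc1 : c < 1) :
    (1 - c - ε) * (αs + ε) ^ 2 ≥ 2 * (1 - (αs + ε)) + ε := by
  have hsqle : (αs + ε) ^ 2 ≤ 1 := by nlinarith
  have hnn : 0 ≤ 2 * αs * ε + ε ^ 2 := by nlinarith
  nlinarith [hid, mul_nonneg (by linarith : (0:ℝ) ≤ 1 - c) hnn, hsqle]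

end Algebra


theorem stmt10 (t : ℕ) (ht : 4 ≤ t) :
    c1Kdens (t + 1) ≤ (-1 + Real.sqrt (3 - 2 * c1Kdens t)) / (1 - c1Kdens t) := by
  have hc0 : 0 ≤ c1Kdens t := c1Kdens_nonneg t
  have hdelta : 0 < dlt t := dlt_pos ht
  have hc1' : c1Kdens t ≤ 1 - dlt t := c1Kdens_le_one_sub ht
  have hc1 : c1Kdens t < 1 := by linarith
  set c := c1Kdens t with hcdef
  set αs := (-1 + Real.sqrt (3 - 2 * c)) / (1 - c) with hαsdef
  have hid := alpha_id hc1
  have hα0 := alpha_nonneg hc1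
  have hαhalf := alpha_half hc0 hc1
  rw [← hαsdef] at hid hα0 hαhalf
  have main : ∀ ε : ℝ, 0 < ε → c1Kdens (t + 1) ≤ αs + ε := by
    intro ε hε
    by_cases hα1 : αs + ε ≤ 1
    · -- the genuine case
      have hKEY := key_ineq hc0 hε hα0 hid hα1 hc1
      obtain ⟨M, hM⟩ := Filter.eventually_atTop.mp (eventually_c1K_lt t hε)
      have hM' : ∀ m : ℕ, M ≤ m → 3 ≤ m →
          (c1K t m : ℝ) < (c + ε) * (((m - 1).choose 2 : ℕ) : ℝ) := by
        intro m h1 _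
        exact hM m h1
      apply c1Kdens_le_of_eventually (b := αs + ε)
      have hNnat : ∀ᶠ n : ℕ in Filter.atTop, ((40 : ℝ) / ε + 40) ≤ (n : ℝ) := by
        have := Filter.Tendsto.eventually_ge_atTop
          (tendsto_natCast_atTop_atTop (R := ℝ)) ((40 : ℝ) / ε + 40)
        exact this
      filter_upwards [Filter.eventually_ge_atTop (2 * M + 10), hNnat,
        Filter.eventually_ge_atTop 3] with n hn1 hn2 hn3
      apply c1K_le_real (by omega) (by omega)
      intro H h3 hx
      by_contra hgt
      push_neg at hgt
      obtain ⟨x, hnx⟩ := hx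
      apply hnx
      apply main_cover ht hc0 hε hα1 (by linarith) hKEY hM' hn1 hn2 H h3 _ x
      intro v
      have h1 : (minDeg H : ℝ) ≤ (hdeg H v : ℝ) := by exact_mod_cast minDeg_le_hdeg H v
      linarith
    · -- trivial case : αs + ε > 1
      push_neg at hα1
      calc c1Kdens (t + 1) ≤ 1 := c1Kdens_le_one (t + 1)
        _ ≤ αs + ε := le_of_lt hα1
  exact le_of_forall_pos_le_add main
end

section
/- For every ε > 0 there exists n0 such that for all n ≥ n0 there is a 3-graph G on 9n+1 vertices with minimum vertex degree δ1(G) ≥ (8/9 − ε)·C(9n, 2) in which some vertex is not covered by any copy of K6^{(3)}. Consequently c1(K6^{(3)}) ≥ 8/9. -/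
open Finset

abbrev Vn (n : ℕ) := Fin (9*n+1)

def x0 (n : ℕ) : Vn n := ⟨0, by omega⟩

def lab {n : ℕ} (v : Vn n) : ZMod 3 × ZMod 3 :=
  ((((v:ℕ) - 1 : ℕ) : ZMod 3), ((((v:ℕ) - 1)/3 : ℕ) : ZMod 3))

def Badp {n : ℕ} (e : Finset (Vn n)) : Prop :=
  (x0 n ∈ e ∧ ∃ u ∈ e, ∃ w ∈ e, u ≠ w ∧ u ≠ x0 n ∧ w ≠ x0 n ∧ lab u = lab w) ∨
  (x0 n ∉ e ∧ ∑ u ∈ e, lab u = 0)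

instance {n : ℕ} : DecidablePred (Badp (n := n)) := fun e => by
  unfold Badp; infer_instance

def Gc (n : ℕ) : Finset (Finset (Vn n)) :=
  (univ.powersetCard 3).filter (fun e => ¬ Badp e)

lemma Gc_card {n : ℕ} : ∀ e ∈ Gc n, e.card = 3 := by
  intro e he
  simp only [Gc, mem_filter, mem_powersetCard_univ] at he
  exact he.1

def cls (n : ℕ) (j : ZMod 3 × ZMod 3) : Finset (Vn n) :=
  univ.filter (fun u => lab u = j)

def clsm (n : ℕ) (j : ZMod 3 × ZMod 3) : Finset (Vn n) := (cls n j).erase (x0 n)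

lemma lab_mod {n : ℕ} {u : Vn n} {j : ZMod 3 × ZMod 3} (h : lab u = j) :
    ((u:ℕ) - 1) % 3 = j.1.val ∧ (((u:ℕ) - 1)/3) % 3 = j.2.val := by
  have h1 : (((u:ℕ) - 1 : ℕ) : ZMod 3) = j.1 := congrArg Prod.fst h
  have h2 : ((((u:ℕ) - 1)/3 : ℕ) : ZMod 3) = j.2 := congrArg Prod.snd h
  constructor
  · have := congrArg ZMod.val h1; rwa [ZMod.val_natCast] at this
  · have := congrArg ZMod.val h2; rwa [ZMod.val_natCast] at this

lemma clsm_card {n : ℕ} (j : ZMod 3 × ZMod 3) : (clsm n j).card ≤ n := by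
  have : (clsm n j).card ≤ (Finset.range n).card := by
    refine card_le_card_of_injOn (fun u => ((u:ℕ) - 1)/9) ?_ ?_
    · intro u hu
      simp only [clsm, cls, mem_coe, mem_erase, mem_filter] at hu
      have hne : (u:ℕ) ≠ 0 := fun h => hu.1 (Fin.ext h)
      have := u.isLt
      simp only [mem_coe, mem_range]
      omega
    · intro u hu w hw he
      simp only [clsm, cls, coe_erase, Set.mem_diff, mem_coe, mem_filter] at hu hw
      obtain ⟨h1a, h1b⟩ := lab_mod hu.1.2
      obtain ⟨h2a, h2b⟩ := lab_mod hw.1.2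
      have he' : ((u:ℕ) - 1)/9 = ((w:ℕ) - 1)/9 := he
      have hu0 : (u:ℕ) ≠ 0 := fun h => hu.2 (by simpa using Fin.ext h)
      have hw0 : (w:ℕ) ≠ 0 := fun h => hw.2 (by simpa using Fin.ext h)
      have : (u:ℕ) = (w:ℕ) := by omega
      exact Fin.ext this
  simpa using this

-- Step A : number of 3-sets containing v
lemma Tv_card {V : Type*} [Fintype V] [DecidableEq V] (v : V) :
    (((univ : Finset V).powersetCard 3).filter (fun e => v ∈ e)).card
      = (Fintype.card V - 1).choose 2 := by
  have := Finset.card_bij' (s := ((univ : Finset V).powersetCard 3).filter (fun e => v ∈ e))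
    (t := ((univ : Finset V).erase v).powersetCard 2)
    (i := fun e _ => e.erase v) (j := fun p _ => insert v p)
    (by
      intro e he
      simp only [mem_filter, mem_powersetCard_univ] at he
      simp only [mem_powersetCard]
      constructor
      · intro a ha; simp only [mem_erase] at ha ⊢; exact ⟨ha.1, mem_univ a⟩
      · rw [card_erase_of_mem he.2, he.1])
    (by
      intro p hp
      simp only [mem_powersetCard] at hp
      have hv : v ∉ p := fun h => by have := hp.1 h; simp at this
      simp only [mem_filter, mem_powersetCard_univ]
      exact ⟨by rw [card_insert_of_notMem hv, hp.2], mem_insert_self v p⟩)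
    (by
      intro e he
      simp only [mem_filter, mem_powersetCard_univ] at he
      exact insert_erase he.2)
    (by
      intro p hp
      simp only [mem_powersetCard] at hp
      have hv : v ∉ p := fun h => by have := hp.1 h; simp at this
      exact erase_insert hv)
  rw [this, card_powersetCard, card_erase_of_mem (mem_univ v), card_univ]

set_option maxRecDepth 10000 in
lemma caplem : ∀ s : Finset (ZMod 3 × ZMod 3), s.card = 5 →
    ∃ e ∈ s.powersetCard 3, (∑ u ∈ e, u) = 0 := by decide

lemma not_mem_Gc {n : ℕ} {e : Finset (Vn n)} (h1 : e.card = 3) (h2 : Badp e) :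
    e ∉ Gc n := by
  simp only [Gc, mem_filter, mem_powersetCard_univ]
  tauto

lemma noncov (n : ℕ) : ¬ CovK 6 (Gc n) (x0 n) := by
  rintro ⟨S, hxS, hS6, hall⟩
  set S' := S.erase (x0 n) with hS'
  have hS'card : S'.card = 5 := by rw [hS', card_erase_of_mem hxS, hS6]
  by_cases hinj : ∀ u ∈ S', ∀ w ∈ S', lab u = lab w → u = w
  · -- labels injective on S'
    have himg : (S'.image lab).card = 5 := by
      rw [card_image_of_injOn, hS'card]
      intro u hu w hw h; exact hinj u hu w hw h
    obtain ⟨eL, heL, hsum⟩ := caplem _ himg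
    simp only [mem_powersetCard] at heL
    set T := S'.filter (fun u => lab u ∈ eL) with hT
    have hTsub' : T ⊆ S' := filter_subset _ _
    have hTimg : T.image lab = eL := by
      apply Finset.Subset.antisymm
      · intro l hl
        simp only [mem_image, hT, mem_filter] at hl
        obtain ⟨u, ⟨_, hu2⟩, hu3⟩ := hl
        rwa [← hu3]
      · intro l hl
        have : l ∈ S'.image lab := heL.1 hl
        simp only [mem_image] at this
        obtain ⟨u, hu, hul⟩ := this
        simp only [mem_image, hT, mem_filter]
        exact ⟨u, ⟨hu, by rw [hul]; exact hl⟩, hul⟩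
    have hTcard : T.card = 3 := by
      rw [← heL.2, ← hTimg]
      rw [card_image_of_injOn]
      intro u hu w hw h
      exact hinj u (hTsub' hu) w (hTsub' hw) h
    have hTS : T ⊆ S := hTsub'.trans (erase_subset _ _)
    have hTG : T ∈ Gc n := hall T hTS hTcard
    refine not_mem_Gc hTcard ?_ hTG
    right
    constructor
    · intro hx
      have := hTsub' hx
      simp [hS'] at this
    · have : ∑ u ∈ T, lab u = ∑ l ∈ T.image lab, l := by
        rw [Finset.sum_image]
        intro u hu w hw h
        exact hinj u (hTsub' hu) w (hTsub' hw) h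
      rw [this, hTimg, hsum]
  · -- two vertices with equal labels
    push_neg at hinj
    obtain ⟨u, hu, w, hw, heq, hne⟩ := hinj
    have hux : u ≠ x0 n := by intro h; rw [hS'] at hu; exact (mem_erase.mp hu).1 h
    have hwx : w ≠ x0 n := by intro h; rw [hS'] at hw; exact (mem_erase.mp hw).1 h
    set e : Finset (Vn n) := {x0 n, u, w} with he
    have hecard : e.card = 3 := by
      rw [he, card_insert_of_notMem, card_insert_of_notMem, card_singleton]
      · simpa using hne
      · simp only [mem_insert, mem_singleton]
        push_neg
        exact ⟨Ne.symm hux, Ne.symm hwx⟩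
    have heS : e ⊆ S := by
      intro a ha
      simp only [he, mem_insert, mem_singleton] at ha
      rcases ha with h|h|h
      · rwa [h]
      · rw [h]; exact (erase_subset _ _) hu
      · rw [h]; exact (erase_subset _ _) hw
    refine not_mem_Gc hecard ?_ (hall e heS hecard)
    left
    refine ⟨by simp [he], u, by simp [he], w, by simp [he], hne, hux, hwx, heq⟩

def enc (j : ZMod 3 × ZMod 3) : ℕ := j.1.val + 3 * j.2.val

lemma Sfin_card : ∀ s : ZMod 3 × ZMod 3,
    ((univ : Finset ((ZMod 3 × ZMod 3) × (ZMod 3 × ZMod 3))).filter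
      (fun jk => jk.1 + jk.2 = s ∧ enc jk.1 < enc jk.2)).card = 4 := by decide

lemma diag_eq : ∀ a s : ZMod 3 × ZMod 3, a + a = s → a = s + s := by decide

lemma enc_lt : ∀ a b : ZMod 3 × ZMod 3, a ≠ b → enc a < enc b ∨ enc b < enc a := by decide

lemma deg_bound (n : ℕ) (v : Vn n) :
    (9*n).choose 2 ≤ hdeg (Gc n) v + (n + n.choose 2 + 4*(n*n)) := by
  classical
  set Tv := ((univ : Finset (Vn n)).powersetCard 3).filter (fun e => v ∈ e) with hTvdef
  have hTv : Tv.card = (9*n).choose 2 := by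
    rw [hTvdef, Tv_card v]
    congr 1
    simp [Fintype.card_fin]
  have hfil : ((Gc n).filter (fun e => v ∈ e)) = Tv.filter (fun e => ¬ Badp e) := by
    ext e
    simp only [Gc, hTvdef, mem_filter, mem_powersetCard_univ]
    tauto
  have hsplit : (Tv.filter (fun e => Badp e)).card + hdeg (Gc n) v = Tv.card := by
    rw [hdeg, hfil]
    exact card_filter_add_card_filter_not _
  set PB := (((univ : Finset (Vn n)).erase v).powersetCard 2).filter
      (fun p => Badp (insert v p)) with hPBdef
  have hPB : (Tv.filter (fun e => Badp e)).card ≤ PB.card := by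
    refine card_le_card_of_injOn (fun e => e.erase v) ?_ ?_
    · intro e he
      simp only [hTvdef, mem_coe, mem_filter, mem_powersetCard_univ] at he
      obtain ⟨⟨he3, hev⟩, heb⟩ := he
      simp only [hPBdef, mem_coe, mem_filter, mem_powersetCard]
      refine ⟨⟨?_, ?_⟩, ?_⟩
      · intro a ha
        simp only [mem_erase] at ha ⊢
        exact ⟨ha.1, mem_univ a⟩
      · rw [card_erase_of_mem hev, he3]
      · rwa [insert_erase hev]
    · intro e1 h1 e2 h2 h
      simp only [hTvdef, coe_filter, Set.mem_setOf_eq, mem_filter, mem_powersetCard_univ] at h1 h2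
      have hh : insert v (e1.erase v) = insert v (e2.erase v) := congrArg _ h
      rwa [insert_erase h1.1.2, insert_erase h2.1.2] at hh
  -- now bound PB.card
  have hPBb : PB.card ≤ n + n.choose 2 + 4*(n*n) := by
    by_cases hvx : v = x0 n
    · -- v is the apex
      have hsub : PB ⊆ (univ : Finset (ZMod 3 × ZMod 3)).biUnion
          (fun j => (clsm n j).powersetCard 2) := by
        intro p hp
        simp only [hPBdef, mem_filter, mem_powersetCard] at hp
        obtain ⟨⟨hps, hp2⟩, hpb⟩ := hp
        rcases hpb with ⟨_, u, hu, w, hw, huw, hux, hwx, heq⟩ | ⟨hnx, _⟩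
        · have hup : u ∈ p := by
            rcases mem_insert.mp hu with h | h
            · exact absurd (h.trans hvx) hux
            · exact h
          have hwp : w ∈ p := by
            rcases mem_insert.mp hw with h | h
            · exact absurd (h.trans hvx) hwx
            · exact h
          have hpeq : p = {u, w} := by
            refine (eq_of_subset_of_card_le ?_ ?_).symm
            · intro a ha
              rcases mem_insert.mp ha with h | h
              · rwa [h]
              · rw [mem_singleton.mp h]; exact hwp
            · rw [hp2, card_insert_of_notMem (by simpa using huw), card_singleton]
          simp only [mem_biUnion]
          refine ⟨lab u, mem_univ _, ?_⟩
          simp only [mem_powersetCard]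
          constructor
          · intro a ha
            rw [hpeq] at ha
            simp only [clsm, cls, mem_erase, mem_filter]
            rcases mem_insert.mp ha with h | h
            · subst h; exact ⟨hux, mem_univ _, rfl⟩
            · rw [mem_singleton.mp h]; exact ⟨hwx, mem_univ _, heq.symm⟩
          · exact hp2
        · exact absurd (by rw [← hvx]; exact mem_insert_self v p) hnx
      calc PB.card ≤ ∑ j ∈ (univ : Finset (ZMod 3 × ZMod 3)),
            ((clsm n j).powersetCard 2).card := le_trans (card_le_card hsub) (card_biUnion_le)
        _ ≤ ∑ _j ∈ (univ : Finset (ZMod 3 × ZMod 3)), n.choose 2 := by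
            refine sum_le_sum ?_
            intro j _
            rw [card_powersetCard]
            exact Nat.choose_le_choose 2 (clsm_card j)
        _ = 9 * n.choose 2 := by
            rw [sum_const, card_univ]
            simp [Fintype.card_prod, mul_comm]
        _ ≤ n + n.choose 2 + 4*(n*n) := by
            rw [Nat.choose_two_right]
            have hg : n*(n-1) ≤ n*n := Nat.mul_le_mul_left n (Nat.sub_le n 1)
            omega
    · -- v ≠ x0
      set s : ZMod 3 × ZMod 3 := - lab v with hs
      set PB1 := (clsm n (lab v)).image (fun u => ({x0 n, u} : Finset (Vn n))) with hPB1
      set PB2 := (clsm n (s + s)).powersetCard 2 with hPB2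
      set PBoff := (((univ : Finset (Vn n)).erase v).powersetCard 2).filter
        (fun p => x0 n ∉ p ∧ ∃ a ∈ p, ∃ b ∈ p, a ≠ b ∧ lab a ≠ lab b ∧ lab a + lab b = s)
        with hPBoff
      have hsub : PB ⊆ PB1 ∪ PB2 ∪ PBoff := by
        intro p hp
        simp only [hPBdef, mem_filter, mem_powersetCard] at hp
        obtain ⟨⟨hps, hp2⟩, hpb⟩ := hp
        have hvp : v ∉ p := by
          intro h
          have := hps h
          simp at this
        obtain ⟨a, b, hab, hpab⟩ := card_eq_two.mp hp2
        by_cases hx : x0 n ∈ p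
        · -- pair contains x0 : must be PB1
          rcases hpb with ⟨_, u, hu, w, hw, huw, hux, hwx, heq⟩ | ⟨hnx, _⟩
          · -- find the non-x0 element c of p
            have hcases : ∃ c, c ≠ x0 n ∧ p = {x0 n, c} ∧ c ∈ p := by
              rw [hpab] at hx
              rcases mem_insert.mp hx with h | h
              · exact ⟨b, by rw [h]; exact Ne.symm hab, by rw [hpab, ← h], by
                  rw [hpab]; exact mem_insert_of_mem (mem_singleton_self b)⟩
              · rw [mem_singleton] at h
                exact ⟨a, by rw [h]; exact hab, by rw [hpab, ← h, pair_comm], by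
                  rw [hpab]; exact mem_insert_self a _⟩
            obtain ⟨c, hcx, hpc, hcp⟩ := hcases
            have hmem : ∀ z, z ∈ insert v p → z ≠ x0 n → z = v ∨ z = c := by
              intro z hz hzx
              rcases mem_insert.mp hz with h | h
              · exact Or.inl h
              · rw [hpc] at h
                rcases mem_insert.mp h with h' | h'
                · exact absurd h' hzx
                · exact Or.inr (mem_singleton.mp h')
            have hlabc : lab c = lab v := by
              rcases hmem u hu hux with h1 | h1 <;> rcases hmem w hw hwx with h2 | h2
              · exact absurd (h1.trans h2.symm) huw
              · rw [h1] at heq; rw [h2] at heq; exact heq.symm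
              · rw [h1] at heq; rw [h2] at heq; exact heq
              · exact absurd (h1.trans h2.symm) huw
            refine mem_union_left _ (mem_union_left _ ?_)
            simp only [hPB1, mem_image]
            refine ⟨c, ?_, hpc.symm⟩
            simp only [clsm, cls, mem_erase, mem_filter]
            exact ⟨hcx, mem_univ _, hlabc⟩
          · exact absurd (mem_insert_of_mem hx) hnx
        · -- x0 not in the pair
          have hnx : x0 n ∉ insert v p := by
            simp only [mem_insert]
            push_neg
            exact ⟨Ne.symm hvx, hx⟩
          rcases hpb with ⟨hin, _⟩ | ⟨_, hsum⟩
          · exact absurd hin hnx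
          · have hsum2 : lab a + lab b = s := by
              rw [sum_insert hvp, hpab, sum_pair hab] at hsum
              rw [hs]
              linear_combination (norm := module) hsum
            by_cases hl : lab a = lab b
            · -- diagonal
              have ha0 : lab a = s + s := diag_eq _ _ (by rw [← hsum2, hl])
              have hb0 : lab b = s + s := by rw [← hl]; exact ha0
              refine mem_union_left _ (mem_union_right _ ?_)
              simp only [hPB2, mem_powersetCard]
              refine ⟨?_, hp2⟩
              intro z hz
              simp only [clsm, cls, mem_erase, mem_filter]
              have hzx : z ≠ x0 n := fun h => hx (h ▸ hz)
              rw [hpab] at hz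
              rcases mem_insert.mp hz with h | h
              · exact ⟨hzx, mem_univ _, h ▸ ha0⟩
              · exact ⟨hzx, mem_univ _, (mem_singleton.mp h) ▸ hb0⟩
            · refine mem_union_right _ ?_
              simp only [hPBoff, mem_filter, mem_powersetCard]
              exact ⟨⟨hps, hp2⟩, hx, a, by rw [hpab]; exact mem_insert_self a _,
                b, by rw [hpab]; exact mem_insert_of_mem (mem_singleton_self b),
                hab, hl, hsum2⟩
      have hc1 : PB1.card ≤ n := le_trans card_image_le (clsm_card _)
      have hc2 : PB2.card ≤ n.choose 2 := by
        rw [hPB2, card_powersetCard]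
        exact Nat.choose_le_choose 2 (clsm_card _)
      have hc3 : PBoff.card ≤ 4*(n*n) := by
        set Sf := ((univ : Finset ((ZMod 3 × ZMod 3) × (ZMod 3 × ZMod 3))).filter
          (fun jk => jk.1 + jk.2 = s ∧ enc jk.1 < enc jk.2)) with hSf
        set WW := Sf.biUnion (fun jk => (clsm n jk.1) ×ˢ (clsm n jk.2)) with hWW
        have hsurj : Set.SurjOn (fun q : Vn n × Vn n => ({q.1, q.2} : Finset (Vn n)))
            (WW : Set (Vn n × Vn n)) (PBoff : Set (Finset (Vn n))) := by
          intro p hp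
          simp only [coe_filter, Set.mem_setOf_eq, mem_powersetCard, hPBoff] at hp
          obtain ⟨⟨hps, hp2⟩, hx, a, ha, b, hb, hab, hl, hsum⟩ := hp
          have hpab : p = {a, b} := by
            refine (eq_of_subset_of_card_le ?_ ?_).symm
            · intro z hz
              rcases mem_insert.mp hz with h | h
              · rwa [h]
              · rw [mem_singleton.mp h]; exact hb
            · rw [hp2, card_insert_of_notMem (by simpa using hab), card_singleton]
          have hax : a ≠ x0 n := fun h => hx (h ▸ ha)
          have hbx : b ≠ x0 n := fun h => hx (h ▸ hb)
          have hacls : a ∈ clsm n (lab a) := by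
            simp only [clsm, cls, mem_erase, mem_filter]
            exact ⟨hax, mem_univ _, trivial⟩
          have hbcls : b ∈ clsm n (lab b) := by
            simp only [clsm, cls, mem_erase, mem_filter]
            exact ⟨hbx, mem_univ _, trivial⟩
          rcases enc_lt _ _ hl with hord | hord
          · refine ⟨(a, b), ?_, by simpa using hpab.symm⟩
            simp only [hWW, coe_biUnion, Set.mem_iUnion, mem_coe]
            refine ⟨(lab a, lab b), ?_, ?_⟩
            · simp only [hSf, mem_coe, mem_filter]
              exact ⟨mem_univ _, hsum, hord⟩
            · simp only [mem_product]
              exact ⟨hacls, hbcls⟩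
          · refine ⟨(b, a), ?_, ?_⟩
            · simp only [hWW, coe_biUnion, Set.mem_iUnion, mem_coe]
              refine ⟨(lab b, lab a), ?_, ?_⟩
              · simp only [hSf, mem_coe, mem_filter]
                refine ⟨mem_univ _, ?_, hord⟩
                rw [← hsum]; ring
              · simp only [mem_product]
                exact ⟨hbcls, hacls⟩
            · simp only
              rw [hpab, pair_comm]
        calc PBoff.card ≤ WW.card := card_le_card_of_surjOn _ hsurj
          _ ≤ ∑ jk ∈ Sf, ((clsm n jk.1) ×ˢ (clsm n jk.2)).card := card_biUnion_le
          _ ≤ ∑ _jk ∈ Sf, n*n := by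
              refine sum_le_sum ?_
              intro jk _
              rw [card_product]
              exact Nat.mul_le_mul (clsm_card _) (clsm_card _)
          _ = 4*(n*n) := by
              rw [sum_const, hSf, Sfin_card s, smul_eq_mul]
      calc PB.card ≤ (PB1 ∪ PB2 ∪ PBoff).card := card_le_card hsub
        _ ≤ (PB1 ∪ PB2).card + PBoff.card := card_union_le _ _
        _ ≤ PB1.card + PB2.card + PBoff.card := by
            exact Nat.add_le_add_right (card_union_le _ _) _
        _ ≤ n + n.choose 2 + 4*(n*n) := by omega
  omega

lemma part1 : ∀ ε : ℝ, 0 < ε → ∃ n0 : ℕ, ∀ n : ℕ, n0 ≤ n →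
    ∃ G : Finset (Finset (Fin (9 * n + 1))),
      (∀ e ∈ G, e.card = 3) ∧
      (∀ v : Fin (9 * n + 1),
        (8 / 9 - ε) * ((9 * n).choose 2 : ℝ) ≤ (hdeg G v : ℝ)) ∧
      ∃ x : Fin (9 * n + 1), ¬ CovK 6 G x := by
  intro ε hε
  refine ⟨⌈ε⁻¹⌉₊ + 1, fun n hn => ⟨Gc n, Gc_card, ?_, ⟨x0 n, noncov n⟩⟩⟩
  intro v
  have hd := deg_bound n v
  have hn1 : (1:ℝ) ≤ (n:ℝ) := by
    have : 1 ≤ n := le_trans (Nat.le_add_left 1 _) hn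
    exact_mod_cast this
  have hεn : (1:ℝ) ≤ ε * n := by
    have h1 : (⌈ε⁻¹⌉₊ : ℝ) ≤ n := by exact_mod_cast le_trans (Nat.le_succ _) hn
    have h2 : ε⁻¹ ≤ (n:ℝ) := le_trans (Nat.le_ceil _) h1
    calc (1:ℝ) = ε * ε⁻¹ := by field_simp
      _ ≤ ε * n := by
          exact mul_le_mul_of_nonneg_left h2 hε.le
  have hC : (((9*n).choose 2 : ℕ) : ℝ) = (9*n) * (9*n - 1) / 2 := by
    rw [Nat.cast_choose_two]
    push_cast
    ring
  have hB : ((n + n.choose 2 + 4*(n*n) : ℕ) : ℝ) = n + (n * (n-1)/2) + 4*(n*n) := by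
    push_cast [Nat.cast_choose_two]
    ring
  have hd' : (((9*n).choose 2 : ℕ) : ℝ) ≤ (hdeg (Gc n) v : ℝ) + ((n + n.choose 2 + 4*(n*n) : ℕ) : ℝ) := by
    exact_mod_cast hd
  have key : (n:ℝ) ≤ ε * (((9*n).choose 2 : ℕ) : ℝ) := by
    rw [hC]
    nlinarith [mul_le_mul_of_nonneg_right hεn (by positivity : (0:ℝ) ≤ (n:ℝ)), hε.le, hn1]
  rw [hB] at hd'
  rw [hC] at *
  push_cast at *
  nlinarith [hd', key, hn1]

lemma c1K_elem_bound (m : ℕ) : ∀ d ∈ {d : ℕ | ∃ H : Finset (Finset (Fin m)),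
    (∀ e ∈ H, e.card = 3) ∧ (∃ x, ¬ CovK 6 H x) ∧ d = minDeg H}, d ≤ (m - 1).choose 2 := by
  rintro d ⟨H, h3, ⟨x, -⟩, rfl⟩
  have h1 : minDeg H ≤ hdeg H x :=
    csInf_le (OrderBot.bddBelow _) ⟨x, rfl⟩
  have h2 : hdeg H x ≤ (m - 1).choose 2 := by
    have hsub : H.filter (fun e => x ∈ e) ⊆
        ((univ : Finset (Fin m)).powersetCard 3).filter (fun e => x ∈ e) := by
      intro e he
      simp only [mem_filter] at he ⊢
      exact ⟨mem_powersetCard_univ.mpr (h3 e he.1), he.2⟩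
    have := card_le_card hsub
    rw [Tv_card x, Fintype.card_fin] at this
    exact this
  exact le_trans h1 h2

lemma c1K_le (m : ℕ) : c1K 6 m ≤ (m - 1).choose 2 := by
  rw [c1K]
  rcases Set.eq_empty_or_nonempty {d : ℕ | ∃ H : Finset (Finset (Fin m)),
    (∀ e ∈ H, e.card = 3) ∧ (∃ x, ¬ CovK 6 H x) ∧ d = minDeg H} with h | h
  · rw [h, csSup_empty]
    exact Nat.zero_le _
  · exact csSup_le h (c1K_elem_bound m)

lemma part2 : (8 / 9 : ℝ) ≤ c1Kdens 6 := by
  have hbd : Filter.IsBoundedUnder (· ≤ ·) Filter.atTop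
      (fun n : ℕ => (c1K 6 n : ℝ) / ((n - 1).choose 2 : ℝ)) := by
    apply Filter.isBoundedUnder_of
    refine ⟨1, fun m => ?_⟩
    rcases Nat.eq_zero_or_pos ((m-1).choose 2) with h | h
    · simp [h]
    · rw [div_le_one (by exact_mod_cast h)]
      exact_mod_cast c1K_le m
  apply le_of_forall_pos_le_add
  intro ε hε
  rw [← sub_le_iff_le_add]
  obtain ⟨n0, hpart⟩ := part1 ε hε
  apply Filter.le_limsup_of_frequently_le ?_ hbd
  rw [Filter.frequently_atTop]
  intro N
  set m := max N n0 + 1 with hm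
  refine ⟨9 * m + 1, by omega, ?_⟩
  obtain ⟨G, hG3, hGdeg, x, hx⟩ := hpart m (by omega)
  have hm1 : 1 ≤ m := by omega
  have hCpos : (0:ℝ) < (((9*m).choose 2 : ℕ) : ℝ) := by
    have : 0 < (9*m).choose 2 := Nat.choose_pos (by omega)
    exact_mod_cast this
  have hmem : minDeg G ∈ {d : ℕ | ∃ H : Finset (Finset (Fin (9*m+1))),
      (∀ e ∈ H, e.card = 3) ∧ (∃ x, ¬ CovK 6 H x) ∧ d = minDeg H} :=
    ⟨G, hG3, ⟨x, hx⟩, rfl⟩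
  have hBdd : BddAbove {d : ℕ | ∃ H : Finset (Finset (Fin (9*m+1))),
      (∀ e ∈ H, e.card = 3) ∧ (∃ x, ¬ CovK 6 H x) ∧ d = minDeg H} :=
    ⟨(9*m+1-1).choose 2, c1K_elem_bound (9*m+1)⟩
  have h1 : minDeg G ≤ c1K 6 (9*m+1) := le_csSup hBdd hmem
  have h2 : (8/9 - ε) * (((9*m).choose 2 : ℕ) : ℝ) ≤ (minDeg G : ℝ) := by
    obtain ⟨v, hv⟩ : ∃ v, hdeg G v = minDeg G := by
      have hne : (Set.range (hdeg G)).Nonempty := ⟨hdeg G ⟨0, by omega⟩, ⟨_, rfl⟩⟩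
      obtain ⟨v, hv⟩ := Nat.sInf_mem hne
      exact ⟨v, hv⟩
    rw [← hv]
    exact hGdeg v
  have hsimp : (9*m+1-1 : ℕ) = 9*m := by omega
  rw [hsimp]
  have : (8/9 - ε) ≤ (minDeg G : ℝ) / (((9*m).choose 2 : ℕ) : ℝ) :=
    (le_div_iff₀ hCpos).mpr h2
  refine le_trans this ?_
  gcongr


theorem stmt12 :
    (∀ ε : ℝ, 0 < ε → ∃ n0 : ℕ, ∀ n : ℕ, n0 ≤ n →
      ∃ G : Finset (Finset (Fin (9 * n + 1))),
        (∀ e ∈ G, e.card = 3) ∧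
        (∀ v : Fin (9 * n + 1),
          (8 / 9 - ε) * ((9 * n).choose 2 : ℝ) ≤ (hdeg G v : ℝ)) ∧
        ∃ x : Fin (9 * n + 1), ¬ CovK 6 G x) ∧
    (8 / 9 : ℝ) ≤ c1Kdens 6 := by
  exact ⟨part1, part2⟩
end

section
/- Let r ≥ 2 be an integer and let ρ ∈ ℝ satisfy (r−1)/r ≤ ρ ≤ r/(r+1) − 1/(3r(r+1)). Then for every ε > 0 there exists n0 such that for all n ≥ n0 with 2r | n there exists a simple graph G on n vertices that is ⌊ρn⌋-regular and such that every vertex x of G has triangle-degree t_G(x) ≤ ((r−1)(r−2)/r² + (3(r−1)/r)·(ρ − (r−1)/r))·n²/2 + εn². -/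
/-- The triangle-degree of a vertex `x` in a simple graph `G`: the number of
unordered triples of pairwise adjacent vertices containing `x`. -/
noncomputable def triDeg {V : Type*} (G : SimpleGraph V) (x : V) : ℕ :=
  {t : Finset V | t.card = 3 ∧ x ∈ t ∧ ∀ a ∈ t, ∀ b ∈ t, a ≠ b → G.Adj a b}.ncard

namespace Stmt14Aux

open Finset

/-- The connection set (as a set of naturals) of our circulant graph. -/
def T (r q m : ℕ) : Finset ℕ :=
  (((Finset.range (2*r*q)).filter (fun i => ¬ (r ∣ i))) ∪
    ((Finset.range (m/2)).image (fun j => r*(q - (j+1)))) ∪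
    ((Finset.range (m/2)).image (fun j => r*(q + (j+1))))) ∪
  (if m % 2 = 1 then {r*q} else ∅)

lemma mem_T {r q m i : ℕ} :
    i ∈ T r q m ↔ ((i < 2*r*q ∧ ¬ r ∣ i) ∨ (∃ j < m/2, i = r*(q - (j+1))) ∨
      (∃ j < m/2, i = r*(q + (j+1)))) ∨ (m % 2 = 1 ∧ i = r*q) := by
  unfold T
  split_ifs with h <;>
    simp [mem_union, mem_filter, mem_range, mem_image, h, eq_comm, or_assoc] <;> exact or_comm.trans (by simp only [or_assoc])

section Facts

variable {r q m : ℕ} (hr : 2 ≤ r) (hq : 1 ≤ q) (hm : 9 * m ≤ 4 * q)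

include hm hq in
lemma k_lt_q : m / 2 < q := by omega

include hr hq hm in
lemma lt_of_mem_T {i : ℕ} (hi : i ∈ T r q m) : i < 2*r*q := by
  have hk := k_lt_q hq hm
  rcases mem_T.1 hi with (⟨h1, _⟩ | ⟨j, hj, rfl⟩ | ⟨j, hj, rfl⟩) | ⟨_, rfl⟩
  · exact h1
  · have : q - (j+1) < 2*q := by omega
    calc r * (q - (j+1)) < r * (2*q) := by
          exact Nat.mul_lt_mul_of_pos_left this (by omega)
      _ = 2*r*q := by ring
  · have : q + (j+1) < 2*q := by omega
    calc r * (q + (j+1)) < r * (2*q) := by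
          exact Nat.mul_lt_mul_of_pos_left this (by omega)
      _ = 2*r*q := by ring
  · have : q < 2*q := by omega
    calc r * q < r * (2*q) := by
          exact Nat.mul_lt_mul_of_pos_left this (by omega)
      _ = 2*r*q := by ring

include hr hq hm in
lemma pos_of_mem_T {i : ℕ} (hi : i ∈ T r q m) : 0 < i := by
  have hk := k_lt_q hq hm
  rcases mem_T.1 hi with (⟨_, h2⟩ | ⟨j, hj, rfl⟩ | ⟨j, hj, rfl⟩) | ⟨_, rfl⟩
  · rcases Nat.eq_zero_or_pos i with rfl | h
    · exact absurd (dvd_zero r) h2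
    · exact h
  · have : 0 < q - (j+1) := by omega
    positivity
  · have : 0 < q + (j+1) := by omega
    positivity
  · positivity

include hr hq hm in
lemma window_of_mem_T {i : ℕ} (hi : i ∈ T r q m) (hd : r ∣ i) :
    r * (q - m/2) ≤ i ∧ i ≤ r * (q + m/2) := by
  rcases mem_T.1 hi with (⟨_, h2⟩ | ⟨j, hj, rfl⟩ | ⟨j, hj, rfl⟩) | ⟨_, rfl⟩
  · exact absurd hd h2
  · exact ⟨Nat.mul_le_mul_left r (by omega), Nat.mul_le_mul_left r (by omega)⟩
  · exact ⟨Nat.mul_le_mul_left r (by omega), Nat.mul_le_mul_left r (by omega)⟩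
  · exact ⟨Nat.mul_le_mul_left r (by omega), Nat.mul_le_mul_left r (by omega)⟩

include hr hq hm in
lemma neg_mem_T {i : ℕ} (hi : i ∈ T r q m) : 2*r*q - i ∈ T r q m := by
  have hk := k_lt_q hq hm
  have hlt := lt_of_mem_T hr hq hm hi
  have hpos := pos_of_mem_T hr hq hm hi
  rcases mem_T.1 hi with (⟨_, h2⟩ | ⟨j, hj, rfl⟩ | ⟨j, hj, rfl⟩) | ⟨h4, rfl⟩
  · refine mem_T.2 (Or.inl (Or.inl ⟨by omega, fun hdvd => h2 ?_⟩))
    have h2rq : r ∣ 2*r*q := ⟨2*q, by ring⟩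
    have := Nat.dvd_sub h2rq hdvd
    rwa [Nat.sub_sub_self hlt.le] at this
  · refine mem_T.2 (Or.inl (Or.inr (Or.inr ⟨j, hj, ?_⟩)))
    have h1 : j + 1 ≤ q := by omega
    have : 2*r*q = r * (q - (j+1)) + r * (q + (j+1)) := by
      have : (q - (j+1)) + (q + (j+1)) = 2*q := by omega
      calc 2*r*q = r * (2*q) := by ring
        _ = r * ((q - (j+1)) + (q + (j+1))) := by rw [this]
        _ = r * (q - (j+1)) + r * (q + (j+1)) := by ring
    omega
  · refine mem_T.2 (Or.inl (Or.inr (Or.inl ⟨j, hj, ?_⟩)))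
    have h1 : j + 1 ≤ q := by omega
    have : 2*r*q = r * (q - (j+1)) + r * (q + (j+1)) := by
      have : (q - (j+1)) + (q + (j+1)) = 2*q := by omega
      calc 2*r*q = r * (2*q) := by ring
        _ = r * ((q - (j+1)) + (q + (j+1))) := by rw [this]
        _ = r * (q - (j+1)) + r * (q + (j+1)) := by ring
    omega
  · refine mem_T.2 (Or.inr ⟨h4, ?_⟩)
    have : 2*r*q = r*q + r*q := by ring
    omega

include hr hq hm in
lemma card_T : (T r q m).card = 2*r*q - 2*q + m := by
  have hrpos : 0 < r := by omega
  have hk := k_lt_q hq hm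
  have c1 : ((Finset.range (2*r*q)).filter (fun i => ¬ (r ∣ i))).card = 2*r*q - 2*q := by
    have hdvd : ((Finset.range (2*r*q)).filter (fun i => r ∣ i)) =
        (Finset.range (2*q)).image (fun j => r * j) := by
      ext i
      simp only [mem_filter, mem_range, mem_image]
      constructor
      · rintro ⟨h1, j, rfl⟩
        refine ⟨j, ?_, by ring⟩
        by_contra hcon
        push_neg at hcon
        have : r * (2*q) ≤ r * j := Nat.mul_le_mul_left r hcon
        have h2 : r * (2*q) = 2*r*q := by ring
        omega
      · rintro ⟨j, hj, rfl⟩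
        refine ⟨?_, j, rfl⟩
        calc r * j < r * (2*q) := by
              exact Nat.mul_lt_mul_of_pos_left hj (by omega)
          _ = 2*r*q := by ring
    have hcd : ((Finset.range (2*r*q)).filter (fun i => r ∣ i)).card = 2*q := by
      rw [hdvd, Finset.card_image_of_injective _ (fun a b h => by
        exact Nat.eq_of_mul_eq_mul_left hrpos h), Finset.card_range]
    have := Finset.card_filter_add_card_filter_not
      (s := Finset.range (2*r*q)) (p := fun i => r ∣ i)
    rw [Finset.card_range] at this
    omega
  have c2 : ((Finset.range (m/2)).image (fun j => r*(q - (j+1)))).card = m/2 := by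
    rw [Finset.card_image_of_injOn, Finset.card_range]
    intro a ha b hb hab
    simp only [coe_range, Set.mem_Iio] at ha hb
    have := Nat.eq_of_mul_eq_mul_left hrpos hab
    omega
  have c3 : ((Finset.range (m/2)).image (fun j => r*(q + (j+1)))).card = m/2 := by
    rw [Finset.card_image_of_injOn, Finset.card_range]
    intro a ha b hb hab
    simp only [coe_range, Set.mem_Iio] at ha hb
    have := Nat.eq_of_mul_eq_mul_left hrpos hab
    omega
  have c4 : (if m % 2 = 1 then ({r*q} : Finset ℕ) else ∅).card = m % 2 := by
    split_ifs with h
    · simp [h]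
    · simp; omega
  -- disjointness
  have d12 : Disjoint ((Finset.range (2*r*q)).filter (fun i => ¬ (r ∣ i)))
      ((Finset.range (m/2)).image (fun j => r*(q - (j+1)))) := by
    rw [Finset.disjoint_left]
    intro i hi hcon
    simp only [mem_filter] at hi
    simp only [mem_image, mem_range] at hcon
    obtain ⟨j, _, rfl⟩ := hcon
    exact hi.2 ⟨_, rfl⟩
  have d13 : Disjoint (((Finset.range (2*r*q)).filter (fun i => ¬ (r ∣ i))) ∪
      ((Finset.range (m/2)).image (fun j => r*(q - (j+1)))))
      ((Finset.range (m/2)).image (fun j => r*(q + (j+1)))) := by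
    rw [Finset.disjoint_left]
    intro i hi hcon
    simp only [mem_image, mem_range] at hcon
    obtain ⟨j, hj, rfl⟩ := hcon
    rcases Finset.mem_union.1 hi with h | h
    · exact (Finset.mem_filter.1 h).2 ⟨_, rfl⟩
    · simp only [mem_image, mem_range] at h
      obtain ⟨j', hj', heq⟩ := h
      have := Nat.eq_of_mul_eq_mul_left hrpos heq
      omega
  have d14 : Disjoint ((((Finset.range (2*r*q)).filter (fun i => ¬ (r ∣ i))) ∪
      ((Finset.range (m/2)).image (fun j => r*(q - (j+1))))) ∪
      ((Finset.range (m/2)).image (fun j => r*(q + (j+1)))))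
      (if m % 2 = 1 then ({r*q} : Finset ℕ) else ∅) := by
    rw [Finset.disjoint_right]
    intro i hi hcon
    split_ifs at hi with h
    · simp only [Finset.mem_singleton] at hi
      subst hi
      rcases Finset.mem_union.1 hcon with h' | h'
      · rcases Finset.mem_union.1 h' with h'' | h''
        · exact (Finset.mem_filter.1 h'').2 ⟨q, rfl⟩
        · simp only [mem_image, mem_range] at h''
          obtain ⟨j, hj, heq⟩ := h''
          have := Nat.eq_of_mul_eq_mul_left hrpos heq
          omega
      · simp only [mem_image, mem_range] at h'
        obtain ⟨j, hj, heq⟩ := h'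
        have := Nat.eq_of_mul_eq_mul_left hrpos heq
        omega
    · exact absurd hi (Finset.notMem_empty i)
  unfold T
  rw [Finset.card_union_of_disjoint d14, Finset.card_union_of_disjoint d13,
    Finset.card_union_of_disjoint d12, c1, c2, c3, c4]
  omega

end Facts

section ZModPart

set_option linter.unusedSectionVars false

variable {r q m : ℕ}

lemma nz (hr : 2 ≤ r) (hq : 1 ≤ q) : NeZero (2*r*q) :=
  ⟨(Nat.mul_pos (by omega : 0 < 2*r) (by omega : 0 < q)).ne'⟩

/-- The connection set inside `ZMod (2*r*q)`. -/
def S (r q m : ℕ) : Finset (ZMod (2*r*q)) := (T r q m).image (Nat.cast)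

variable (hr : 2 ≤ r) (hq : 1 ≤ q) (hm : 9 * m ≤ 4 * q)

include hr hq hm

lemma mem_S {d : ZMod (2*r*q)} : d ∈ S r q m ↔ d.val ∈ T r q m := by
  haveI := nz hr hq
  constructor
  · intro hd
    obtain ⟨i, hi, rfl⟩ := Finset.mem_image.1 hd
    rwa [ZMod.val_cast_of_lt (lt_of_mem_T hr hq hm hi)]
  · intro hd
    exact Finset.mem_image.2 ⟨d.val, hd, ZMod.natCast_rightInverse d⟩

lemma card_S : (S r q m).card = 2*r*q - 2*q + m := by
  haveI := nz hr hq
  rw [S, Finset.card_image_of_injOn, card_T hr hq hm]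
  intro a ha b hb hab
  have ha' := ZMod.val_cast_of_lt (n := 2*r*q) (lt_of_mem_T hr hq hm ha)
  have hb' := ZMod.val_cast_of_lt (n := 2*r*q) (lt_of_mem_T hr hq hm hb)
  rw [← ha', ← hb', hab]

lemma zero_not_mem_S : (0 : ZMod (2*r*q)) ∉ S r q m := by
  haveI := nz hr hq
  intro h
  have := pos_of_mem_T hr hq hm ((mem_S hr hq hm).1 h)
  rw [ZMod.val_zero] at this
  omega

lemma ne_zero_of_mem_S {d : ZMod (2*r*q)} (hd : d ∈ S r q m) : d ≠ 0 := by
  rintro rfl; exact zero_not_mem_S hr hq hm hd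

lemma neg_mem_S {d : ZMod (2*r*q)} (hd : d ∈ S r q m) : -d ∈ S r q m := by
  haveI := nz hr hq
  have hvt := (mem_S hr hq hm).1 hd
  have hd0 : d ≠ 0 := ne_zero_of_mem_S hr hq hm hd
  rw [mem_S hr hq hm, ZMod.neg_val, if_neg hd0]
  exact neg_mem_T hr hq hm hvt

lemma sub_not_mem_S {a b : ZMod (2*r*q)} (ha : a ∈ S r q m) (hb : b ∈ S r q m)
    (hra : r ∣ a.val) (hrb : r ∣ b.val) (hab : a ≠ b) : a - b ∉ S r q m := by
  haveI := nz hr hq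
  intro hmem
  have hit := (mem_S hr hq hm).1 ha
  have hjt := (mem_S hr hq hm).1 hb
  have hwa := window_of_mem_T hr hq hm hit hra
  have hwb := window_of_mem_T hr hq hm hjt hrb
  set k := m / 2 with hk
  have hkq : k < q := k_lt_q hq hm
  have hsplit : r*q = r*k + r*(q - k) := by
    have h0 : k + (q - k) = q := by omega
    calc r*q = r*(k + (q-k)) := by rw [h0]
      _ = r*k + r*(q-k) := by ring
  have hvne : a.val ≠ b.val := by
    intro h
    apply hab
    have := ZMod.natCast_rightInverse (n := 2*r*q) a
    have hb2 := ZMod.natCast_rightInverse (n := 2*r*q) b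
    rw [← this, ← hb2, h]
  -- key numeric facts
  have hq3 : k = 0 ∨ 3*k < q := by omega
  have h2rq : 2*r*q = 2*(r*q) := by ring
  have hBk : r*(q+k) = r*q + r*k := by ring
  have hcast : ∀ c : ZMod (2*r*q), c = ((c.val : ℕ) : ZMod (2*r*q)) :=
    fun c => (ZMod.natCast_rightInverse c).symm
  rcases Nat.lt_or_ge b.val a.val with hgt | hge
  · -- a.val > b.val
    have hablt : a.val - b.val < 2*r*q := by
      have := ZMod.val_lt a; omega
    have hsub : a - b = (((a.val - b.val : ℕ)) : ZMod (2*r*q)) := by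
      rw [Nat.cast_sub hgt.le, ← hcast a, ← hcast b]
    have hval : (a-b).val = a.val - b.val := by
      rw [hsub, ZMod.val_cast_of_lt hablt]
    have hmt := (mem_S hr hq hm).1 hmem
    rw [hval] at hmt
    have hdvd : r ∣ a.val - b.val := Nat.dvd_sub hra hrb
    have hw := window_of_mem_T hr hq hm hmt hdvd
    rw [← hk] at hw
    -- contradiction: a.val - b.val ≤ 2*r*k but ≥ r*(q-k) > 2*r*k
    rcases hq3 with h0 | h3
    · have hK : r*k = 0 := by rw [h0]; exact Nat.mul_zero r
      omega
    · have : r*(3*k) < r*q := Nat.mul_lt_mul_of_pos_left h3 (by omega)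
      have hr3 : r*(3*k) = 3*(r*k) := by ring
      omega
  · have hgt : b.val > a.val := by omega
    have hlt2 : b.val - a.val < 2*r*q := by have := ZMod.val_lt b; omega
    have hsub : a - b = (((2*r*q - (b.val - a.val) : ℕ)) : ZMod (2*r*q)) := by
      have h0 : ((2*r*q : ℕ) : ZMod (2*r*q)) = 0 := ZMod.natCast_self _
      rw [Nat.cast_sub hlt2.le, h0, Nat.cast_sub hgt.le, ← hcast a, ← hcast b]
      ring
    have hval : (a-b).val = 2*r*q - (b.val - a.val) := by
      rw [hsub, ZMod.val_cast_of_lt (by omega)]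
    have hmt := (mem_S hr hq hm).1 hmem
    rw [hval] at hmt
    have hdvd : r ∣ 2*r*q - (b.val - a.val) := by
      refine Nat.dvd_sub ⟨2*q, by ring⟩ (Nat.dvd_sub hrb hra)
    have hw := window_of_mem_T hr hq hm hmt hdvd
    rw [← hk] at hw
    rcases hq3 with h0 | h3
    · have hK : r*k = 0 := by rw [h0]; exact Nat.mul_zero r
      omega
    · have : r*(3*k) < r*q := Nat.mul_lt_mul_of_pos_left h3 (by omega)
      have hr3 : r*(3*k) = 3*(r*k) := by ring
      omega

end ZModPart

section GraphPart

set_option linter.unusedSectionVars false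
set_option maxHeartbeats 1000000

open Finset

variable {r q m : ℕ}

/-- The circulant graph. -/
def Gr (r q m : ℕ) : SimpleGraph (ZMod (2*r*q)) where
  Adj x y := x ≠ y ∧ (x - y ∈ S r q m ∨ y - x ∈ S r q m)
  symm := ⟨by rintro x y ⟨h1, h2⟩; exact ⟨h1.symm, h2.symm⟩⟩
  loopless := ⟨by rintro x ⟨h, _⟩; exact h rfl⟩

/-- Residue class of a vertex. -/
def cl (r q : ℕ) (d : ZMod (2*r*q)) : ZMod r := (d.val : ZMod r)

variable (hr : 2 ≤ r) (hq : 1 ≤ q) (hm : 9 * m ≤ 4 * q)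

include hr hq hm

lemma adj_iff {x y : ZMod (2*r*q)} : (Gr r q m).Adj x y ↔ x - y ∈ S r q m := by
  haveI := nz hr hq
  constructor
  · rintro ⟨h1, h2 | h2⟩
    · exact h2
    · have : x - y = -(y - x) := by ring
      rw [this]
      exact neg_mem_S hr hq hm h2
  · intro h
    refine ⟨?_, Or.inl h⟩
    rintro rfl
    rw [sub_self] at h
    exact zero_not_mem_S hr hq hm h

lemma neighbor_card (x : ZMod (2*r*q)) :
    ((Gr r q m).neighborSet x).ncard = 2*r*q - 2*q + m := by
  haveI := nz hr hq
  have hset : (Gr r q m).neighborSet x = (fun s => x - s) '' (S r q m : Set (ZMod (2*r*q))) := by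
    ext y
    simp only [SimpleGraph.mem_neighborSet, Set.mem_image, Finset.mem_coe]
    rw [adj_iff hr hq hm]
    constructor
    · intro h
      exact ⟨x - y, h, by ring⟩
    · rintro ⟨s, hs, rfl⟩
      have : x - (x - s) = s := by ring
      rw [this]
      exact hs
  rw [hset, Set.ncard_image_of_injective _ (fun a b hab => by
    have : x - (x - a) = x - (x - b) := by rw [hab]
    simpa using this), Set.ncard_coe_finset, card_S hr hq hm]

lemma cl_sub (a b : ZMod (2*r*q)) : cl r q (a - b) = cl r q a - cl r q b := by
  haveI := nz hr hq
  have hdvd : r ∣ 2*r*q := ⟨2*q, by ring⟩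
  have key : ∀ d : ZMod (2*r*q), cl r q d = ZMod.castHom hdvd (ZMod r) d := by
    intro d
    rw [ZMod.castHom_apply, cl, ZMod.natCast_val]
  rw [key, key, key, map_sub]

lemma cl_zero_iff {d : ZMod (2*r*q)} : cl r q d = 0 ↔ r ∣ d.val :=
  ZMod.natCast_eq_zero_iff d.val r

lemma card_fiber [NeZero (2*r*q)] (c : ZMod r) :
    (univ.filter (fun d : ZMod (2*r*q) => cl r q d = c)).card = 2*q := by
  haveI : NeZero r := ⟨by omega⟩
  have himg : (univ.filter (fun d : ZMod (2*r*q) => cl r q d = c)) =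
      (Finset.range (2*q)).image (fun j => ((c.val + r*j : ℕ) : ZMod (2*r*q))) := by
    ext d
    simp only [mem_filter, mem_univ, true_and, mem_image, mem_range]
    constructor
    · intro hd
      refine ⟨d.val / r, ?_, ?_⟩
      · have h1 : d.val < 2*q*r := by
          have := ZMod.val_lt d
          have h2 : 2*q*r = 2*r*q := by ring
          omega
        exact Nat.div_lt_iff_lt_mul (by omega) |>.2 h1
      · have hcv : c.val = d.val % r := by
          rw [← hd, cl, ZMod.val_natCast]
        rw [hcv, Nat.mod_add_div]
        exact ZMod.natCast_rightInverse d
    · rintro ⟨j, hj, rfl⟩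
      have hcr : c.val < r := ZMod.val_lt c
      have hlt : c.val + r*j < 2*r*q := by
        have : r*j + r ≤ r*(2*q) := by
          have : j + 1 ≤ 2*q := by omega
          calc r*j + r = r*(j+1) := by ring
            _ ≤ r*(2*q) := Nat.mul_le_mul_left r this
        have h2 : r*(2*q) = 2*r*q := by ring
        omega
      rw [cl, ZMod.val_cast_of_lt hlt]
      push_cast
      rw [ZMod.natCast_self]
      simp only [zero_mul, add_zero]
      exact ZMod.natCast_rightInverse c
  rw [himg, Finset.card_image_of_injOn, Finset.card_range]
  intro a ha b hb hab
  simp only [coe_range, Set.mem_Iio] at ha hb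
  have hcr : c.val < r := ZMod.val_lt c
  have hla : c.val + r*a < 2*r*q := by
    have : r*a + r ≤ r*(2*q) := by
      have : a + 1 ≤ 2*q := by omega
      calc r*a + r = r*(a+1) := by ring
        _ ≤ r*(2*q) := Nat.mul_le_mul_left r this
    have h2 : r*(2*q) = 2*r*q := by ring
    omega
  have hlb : c.val + r*b < 2*r*q := by
    have : r*b + r ≤ r*(2*q) := by
      have : b + 1 ≤ 2*q := by omega
      calc r*b + r = r*(b+1) := by ring
        _ ≤ r*(2*q) := Nat.mul_le_mul_left r this
    have h2 : r*(2*q) = 2*r*q := by ring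
    omega
  have hva := ZMod.val_cast_of_lt (n := 2*r*q) hla
  have hvb := ZMod.val_cast_of_lt (n := 2*r*q) hlb
  have heq : c.val + r*a = c.val + r*b := by
    rw [← hva, ← hvb]
    exact congrArg ZMod.val hab
  have := Nat.eq_of_mul_eq_mul_left (show 0 < r by omega) (by omega : r*a = r*b)
  omega

lemma card_cl_ne_zero [NeZero (2*r*q)] :
    (univ.filter (fun d : ZMod (2*r*q) => cl r q d ≠ 0)).card = 2*r*q - 2*q := by
  have h0 := card_fiber hr hq hm (0 : ZMod r)
  have htot := Finset.card_filter_add_card_filter_not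
    (s := (univ : Finset (ZMod (2*r*q)))) (p := fun d => cl r q d = 0)
  rw [Finset.card_univ, ZMod.card] at htot
  have hmatch : (univ.filter (fun d : ZMod (2*r*q) => ¬ (cl r q d = 0))) =
      (univ.filter (fun d : ZMod (2*r*q) => cl r q d ≠ 0)) := rfl
  rw [hmatch] at htot
  have h2 : 2*r*q = 2*(r*q) := by ring
  omega

lemma card_cl_two_ne [NeZero (2*r*q)] (c : ZMod r) (hc : c ≠ 0) :
    (univ.filter (fun d : ZMod (2*r*q) => cl r q d ≠ 0 ∧ cl r q d ≠ c)).card ≤ 2*r*q - 4*q := by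
  have hsub : (univ.filter (fun d : ZMod (2*r*q) => cl r q d = 0)) ∪
      (univ.filter (fun d : ZMod (2*r*q) => cl r q d = c)) ⊆
      (univ.filter (fun d : ZMod (2*r*q) => ¬(cl r q d ≠ 0 ∧ cl r q d ≠ c))) := by
    intro d hd
    simp only [mem_union, mem_filter, mem_univ, true_and] at hd ⊢
    tauto
  have hdisj : Disjoint (univ.filter (fun d : ZMod (2*r*q) => cl r q d = 0))
      (univ.filter (fun d : ZMod (2*r*q) => cl r q d = c)) := by
    rw [Finset.disjoint_left]
    intro d hd1 hd2
    simp only [mem_filter, mem_univ, true_and] at hd1 hd2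
    exact hc (hd2.symm.trans hd1)
  have hcu := Finset.card_union_of_disjoint hdisj
  rw [card_fiber hr hq hm (0 : ZMod r), card_fiber hr hq hm c] at hcu
  have hle := Finset.card_le_card hsub
  rw [hcu] at hle
  have htot := Finset.card_filter_add_card_filter_not
    (s := (univ : Finset (ZMod (2*r*q)))) (p := fun d => cl r q d ≠ 0 ∧ cl r q d ≠ c)
  rw [Finset.card_univ, ZMod.card] at htot
  have h2 : 2*r*q = 2*(r*q) := by ring
  omega

lemma card_intra : ((S r q m).filter (fun d => r ∣ d.val)).card ≤ m := by
  haveI := nz hr hq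
  have h1 : ((S r q m).filter (fun d => r ∣ d.val)).card ≤
      ((T r q m).filter (fun i => r ∣ i)).card := by
    apply Finset.card_le_card_of_injOn (fun d => d.val)
    · intro d hd
      simp only [Finset.mem_coe, mem_filter] at hd ⊢
      exact ⟨(mem_S hr hq hm).1 hd.1, hd.2⟩
    · intro a _ b _ hab
      exact ZMod.val_injective _ hab
  have h2 : ((T r q m).filter (fun i => r ∣ i)) ⊆
      ((Finset.range (m/2)).image (fun j => r*(q - (j+1)))) ∪
      ((Finset.range (m/2)).image (fun j => r*(q + (j+1)))) ∪
      (if m % 2 = 1 then ({r*q} : Finset ℕ) else ∅) := by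
    intro i hi
    simp only [mem_filter] at hi
    rcases mem_T.1 hi.1 with (⟨_, h⟩ | h | h) | ⟨h4, h5⟩
    · exact absurd hi.2 h
    · refine Finset.mem_union.2 (Or.inl (Finset.mem_union.2 (Or.inl ?_)))
      simp only [mem_image, mem_range]
      obtain ⟨j, hj, hij⟩ := h
      exact ⟨j, hj, hij.symm⟩
    · refine Finset.mem_union.2 (Or.inl (Finset.mem_union.2 (Or.inr ?_)))
      simp only [mem_image, mem_range]
      obtain ⟨j, hj, hij⟩ := h
      exact ⟨j, hj, hij.symm⟩
    · refine Finset.mem_union.2 (Or.inr ?_)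
      rw [if_pos h4]
      simp [h5]
  have h3 := Finset.card_le_card h2
  have h4 := Finset.card_union_le (((Finset.range (m/2)).image (fun j => r*(q - (j+1)))) ∪
      ((Finset.range (m/2)).image (fun j => r*(q + (j+1)))))
      (if m % 2 = 1 then ({r*q} : Finset ℕ) else ∅)
  have h5 := Finset.card_union_le ((Finset.range (m/2)).image (fun j => r*(q - (j+1))))
      ((Finset.range (m/2)).image (fun j => r*(q + (j+1))))
  have h6 := Finset.card_image_le (s := Finset.range (m/2)) (f := fun j => r*(q - (j+1)))
  have h7 := Finset.card_image_le (s := Finset.range (m/2)) (f := fun j => r*(q + (j+1)))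
  have h8 : (if m % 2 = 1 then ({r*q} : Finset ℕ) else ∅).card ≤ m % 2 := by
    split_ifs with h
    · simp [h]
    · simp
  rw [Finset.card_range] at h6 h7
  omega

end GraphPart

section TriBound

set_option linter.unusedSectionVars false
set_option maxHeartbeats 2000000

open Finset

variable {r q m : ℕ} (hr : 2 ≤ r) (hq : 1 ≤ q) (hm : 9 * m ≤ 4 * q)

include hr hq hm

lemma tri_bound [NeZero (2*r*q)] (x : ZMod (2*r*q)) :
    2 * triDeg (Gr r q m) x ≤ (2*r*q - 2*q) * (2*r*q - 4*q) + 3 * ((2*r*q - 2*q) * m) := by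
  classical
  have hfin : {t : Finset (ZMod (2*r*q)) | t.card = 3 ∧ x ∈ t ∧
      ∀ a ∈ t, ∀ b ∈ t, a ≠ b → (Gr r q m).Adj a b}.Finite := Set.toFinite _
  have htri : triDeg (Gr r q m) x = hfin.toFinset.card :=
    Set.ncard_eq_toFinset_card _ hfin
  set TF := hfin.toFinset with hTFdef
  have hmemTF : ∀ t, t ∈ TF ↔ t.card = 3 ∧ x ∈ t ∧
      ∀ a ∈ t, ∀ b ∈ t, a ≠ b → (Gr r q m).Adj a b := fun t => Set.Finite.mem_toFinset hfin
  set D := (univ : Finset (ZMod (2*r*q) × ZMod (2*r*q))).filter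
    (fun p => p.1 ∈ S r q m ∧ p.2 ∈ S r q m ∧ p.1 ≠ p.2 ∧ p.1 - p.2 ∈ S r q m) with hDdef
  have hmemD : ∀ p : ZMod (2*r*q) × ZMod (2*r*q), p ∈ D ↔
      p.1 ∈ S r q m ∧ p.2 ∈ S r q m ∧ p.1 ≠ p.2 ∧ p.1 - p.2 ∈ S r q m := by
    intro p; rw [hDdef, Finset.mem_filter]; simp
  set E := D.filter (fun p => (x - p.1).val < (x - p.2).val) with hEdef
  set E' := D.filter (fun p => ¬ (x - p.1).val < (x - p.2).val) with hE'def
  -- Step A : TF.card ≤ E.card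
  have hStepA : TF.card ≤ E.card := by
    apply Finset.card_le_card_of_surjOn (fun p => insert x ({x - p.1, x - p.2} : Finset _))
    intro t ht
    rw [Finset.mem_coe, hmemTF] at ht
    obtain ⟨hcard, hx, hadj⟩ := ht
    have hx2 : (t.erase x).card = 2 := by rw [Finset.card_erase_of_mem hx, hcard]
    obtain ⟨a, b, hab, hpair⟩ := Finset.card_eq_two.1 hx2
    have hat : a ∈ t.erase x := by rw [hpair]; simp
    have hbt : b ∈ t.erase x := by rw [hpair]; simp
    have hanex : a ≠ x := (Finset.mem_erase.1 hat).1
    have hbnex : b ≠ x := (Finset.mem_erase.1 hbt).1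
    have hat' : a ∈ t := (Finset.mem_erase.1 hat).2
    have hbt' : b ∈ t := (Finset.mem_erase.1 hbt).2
    have hxa : x - a ∈ S r q m := (adj_iff hr hq hm).1 (hadj x hx a hat' (Ne.symm hanex))
    have hxb : x - b ∈ S r q m := (adj_iff hr hq hm).1 (hadj x hx b hbt' (Ne.symm hbnex))
    have hba : b - a ∈ S r q m := (adj_iff hr hq hm).1 (hadj b hbt' a hat' (Ne.symm hab))
    have hab' : a - b ∈ S r q m := (adj_iff hr hq hm).1 (hadj a hat' b hbt' hab)
    have hxane : x - a ≠ x - b := by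
      intro h
      apply hab
      have h1 : a = x - (x - a) := by ring
      rw [h1, h]; ring
    have hvne : (x - a).val ≠ (x - b).val := by
      intro h
      exact hxane (ZMod.val_injective _ h)
    have hins : insert x (t.erase x) = t := Finset.insert_erase hx
    have hvab : a.val ≠ b.val := fun h => hab (ZMod.val_injective _ h)
    rcases Nat.lt_or_ge a.val b.val with hlt | hge
    · refine ⟨(x - a, x - b), ?_, ?_⟩
      · rw [Finset.mem_coe, hEdef, Finset.mem_filter]
        refine ⟨(hmemD _).2 ⟨hxa, hxb, hxane, ?_⟩, ?_⟩
        · have : (x - a) - (x - b) = b - a := by ring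
          rw [this]; exact hba
        · simpa using hlt
      · show insert x ({x - (x - a), x - (x - b)} : Finset _) = t
        have e1 : x - (x - a) = a := by ring
        have e2 : x - (x - b) = b := by ring
        rw [e1, e2, ← hpair, hins]
    · have hlt : b.val < a.val := by omega
      refine ⟨(x - b, x - a), ?_, ?_⟩
      · rw [Finset.mem_coe, hEdef, Finset.mem_filter]
        refine ⟨(hmemD _).2 ⟨hxb, hxa, Ne.symm hxane, ?_⟩, ?_⟩
        · have : (x - b) - (x - a) = a - b := by ring
          rw [this]; exact hab'
        · simpa using hlt
      · show insert x ({x - (x - b), x - (x - a)} : Finset _) = t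
        have e1 : x - (x - a) = a := by ring
        have e2 : x - (x - b) = b := by ring
        rw [e1, e2, Finset.pair_comm, ← hpair, hins]
  -- Step A2 : E.card = E'.card and D.card = E.card + E'.card
  have hswapD : ∀ p : ZMod (2*r*q) × ZMod (2*r*q), p ∈ D → p.swap ∈ D := by
    intro p hp
    rw [hmemD] at hp
    obtain ⟨h1, h2, h3, h4⟩ := hp
    refine (hmemD _).2 ⟨h2, h1, Ne.symm h3, ?_⟩
    show p.2 - p.1 ∈ S r q m
    have : p.2 - p.1 = -(p.1 - p.2) := by ring
    rw [this]
    exact neg_mem_S hr hq hm h4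
  have hvne' : ∀ p : ZMod (2*r*q) × ZMod (2*r*q), p ∈ D →
      (x - p.1).val ≠ (x - p.2).val := by
    intro p hp h
    have h3 := ((hmemD p).1 hp).2.2.1
    apply h3
    have h2 : x - p.1 = x - p.2 := ZMod.val_injective _ h
    have e1 : p.1 = x - (x - p.1) := by ring
    rw [e1, h2]; ring
  have hEE' : E.card = E'.card := by
    refine Finset.card_bij' (fun p _ => p.swap) (fun p _ => p.swap) ?_ ?_ ?_ ?_
    · intro p hp
      rw [hEdef, Finset.mem_filter] at hp
      rw [hE'def, Finset.mem_filter]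
      exact ⟨hswapD p hp.1, by simpa using by omega⟩
    · intro p hp
      rw [hE'def, Finset.mem_filter] at hp
      rw [hEdef, Finset.mem_filter]
      have := hvne' p hp.1
      refine ⟨hswapD p hp.1, ?_⟩
      show (x - p.2).val < (x - p.1).val
      omega
    · intro p _; exact Prod.swap_swap p
    · intro p _; exact Prod.swap_swap p
  have hDsum : E.card + E'.card = D.card :=
    Finset.card_filter_add_card_filter_not (s := D)
      (p := fun p => (x - p.1).val < (x - p.2).val)
  -- Step B : counting D
  set D1 := D.filter (fun p => ¬ r ∣ p.1.val ∧ ¬ r ∣ p.2.val ∧ ¬ r ∣ (p.1 - p.2).val) with hD1def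
  set D2 := D.filter (fun p => ¬ r ∣ p.1.val ∧ ¬ r ∣ p.2.val ∧ r ∣ (p.1 - p.2).val) with hD2def
  set D3 := D.filter (fun p => r ∣ p.1.val ∨ r ∣ p.2.val) with hD3def
  have hDsplit : D ⊆ (D1 ∪ D2) ∪ D3 := by
    intro p hp
    simp only [hD1def, hD2def, hD3def, Finset.mem_union, Finset.mem_filter]
    by_cases ha : r ∣ p.1.val
    · exact Or.inr ⟨hp, Or.inl ha⟩
    · by_cases hb : r ∣ p.2.val
      · exact Or.inr ⟨hp, Or.inr hb⟩
      · by_cases hc : r ∣ (p.1 - p.2).val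
        · exact Or.inl (Or.inr ⟨hp, ha, hb, hc⟩)
        · exact Or.inl (Or.inl ⟨hp, ha, hb, hc⟩)
  have hcl_ne : ∀ d : ZMod (2*r*q), ¬ r ∣ d.val → cl r q d ≠ 0 := by
    intro d hd h
    exact hd ((cl_zero_iff hr hq hm).1 h)
  -- bound for D1
  have hB1 : D1.card ≤ (2*r*q - 4*q) * (2*r*q - 2*q) := by
    refine le_trans (Finset.card_le_mul_card_image (f := Prod.fst) D1 (2*r*q - 4*q) ?_) ?_
    · intro b hb
      obtain ⟨p0, hp0, hb0⟩ := Finset.mem_image.1 hb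
      rw [hD1def, Finset.mem_filter] at hp0
      have hclb : cl r q b ≠ 0 := by
        apply hcl_ne
        rw [← hb0]
        exact hp0.2.1
      refine le_trans (Finset.card_le_card_of_injOn (fun p => p.2) ?_ ?_)
        (card_cl_two_ne hr hq hm (cl r q b) hclb)
      · intro p hp
        rw [Finset.mem_coe, Finset.mem_filter] at hp
        obtain ⟨hpD1, hpb⟩ := hp
        rw [hD1def, Finset.mem_filter] at hpD1
        obtain ⟨hpD, hnd1, hnd2, hnd3⟩ := hpD1
        rw [Finset.mem_coe, Finset.mem_filter]
        refine ⟨Finset.mem_univ _, hcl_ne _ hnd2, ?_⟩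
        intro hcleq
        apply hnd3
        rw [← cl_zero_iff hr hq hm (d := p.1 - p.2), cl_sub hr hq hm]
        have hcleq' : cl r q p.2 = cl r q b := hcleq
        rw [hpb, hcleq']
        exact sub_self _
      · intro p hp p' hp' hpp
        rw [Finset.mem_coe, Finset.mem_filter] at hp hp'
        have hpp2 : p.2 = p'.2 := hpp
        exact Prod.ext (hp.2.trans hp'.2.symm) hpp2
    · have himg : D1.image Prod.fst ⊆ univ.filter (fun d => cl r q d ≠ 0) := by
        intro b hb
        obtain ⟨p0, hp0, hb0⟩ := Finset.mem_image.1 hb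
        rw [hD1def, Finset.mem_filter] at hp0
        rw [Finset.mem_filter]
        exact ⟨Finset.mem_univ _, by rw [← hb0]; exact hcl_ne _ hp0.2.1⟩
      have := Finset.card_le_card himg
      rw [card_cl_ne_zero hr hq hm] at this
      exact Nat.mul_le_mul_left _ this
  -- bound for D2
  have hB2 : D2.card ≤ m * (2*r*q - 2*q) := by
    refine le_trans (Finset.card_le_mul_card_image (f := Prod.fst) D2 m ?_) ?_
    · intro b hb
      refine le_trans (Finset.card_le_card_of_injOn (fun p => p.1 - p.2) ?_ ?_)
        (card_intra hr hq hm)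
      · intro p hp
        rw [Finset.mem_coe, Finset.mem_filter] at hp
        obtain ⟨hpD2, hpb⟩ := hp
        rw [hD2def, Finset.mem_filter] at hpD2
        obtain ⟨hpD, _, _, hd3⟩ := hpD2
        rw [Finset.mem_coe, Finset.mem_filter]
        exact ⟨((hmemD p).1 hpD).2.2.2, hd3⟩
      · intro p hp p' hp' hpp
        rw [Finset.mem_coe, Finset.mem_filter] at hp hp'
        have h1 : p.1 = p'.1 := hp.2.trans hp'.2.symm
        have hpp' : p.1 - p.2 = p'.1 - p'.2 := hpp
        refine Prod.ext h1 ?_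
        have e1 : p.2 = p.1 - (p.1 - p.2) := by ring
        rw [e1, hpp', h1]
        ring
    · have himg : D2.image Prod.fst ⊆ univ.filter (fun d => cl r q d ≠ 0) := by
        intro b hb
        obtain ⟨p0, hp0, hb0⟩ := Finset.mem_image.1 hb
        rw [hD2def, Finset.mem_filter] at hp0
        rw [Finset.mem_filter]
        exact ⟨Finset.mem_univ _, by rw [← hb0]; exact hcl_ne _ hp0.2.1⟩
      have := Finset.card_le_card himg
      rw [card_cl_ne_zero hr hq hm] at this
      exact Nat.mul_le_mul_left _ this
  -- bound for D3
  have hB3 : D3.card ≤ m * (2*r*q - 2*q) + (2*r*q - 2*q) * m := by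
    set Intra := (S r q m).filter (fun d => r ∣ d.val) with hIntradef
    set InterS := (S r q m).filter (fun d => ¬ r ∣ d.val) with hInterdef
    have hsub3 : D3 ⊆ (Intra ×ˢ InterS) ∪ (InterS ×ˢ Intra) := by
      intro p hp
      rw [hD3def, Finset.mem_filter] at hp
      obtain ⟨hpD, hdvd⟩ := hp
      obtain ⟨h1S, h2S, hne, hsubS⟩ := (hmemD p).1 hpD
      rcases hdvd with h | h
      · refine Finset.mem_union.2 (Or.inl (Finset.mem_product.2 ⟨?_, ?_⟩))
        · exact Finset.mem_filter.2 ⟨h1S, h⟩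
        · refine Finset.mem_filter.2 ⟨h2S, ?_⟩
          intro h2
          exact sub_not_mem_S hr hq hm h1S h2S h h2 hne hsubS
      · refine Finset.mem_union.2 (Or.inr (Finset.mem_product.2 ⟨?_, ?_⟩))
        · refine Finset.mem_filter.2 ⟨h1S, ?_⟩
          intro h1
          exact sub_not_mem_S hr hq hm h1S h2S h1 h hne hsubS
        · exact Finset.mem_filter.2 ⟨h2S, h⟩
    have hInterCard : InterS.card ≤ 2*r*q - 2*q := by
      have hss : InterS ⊆ univ.filter (fun d => cl r q d ≠ 0) := by
        intro d hd
        rw [hInterdef, Finset.mem_filter] at hd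
        exact Finset.mem_filter.2 ⟨Finset.mem_univ _, hcl_ne _ hd.2⟩
      have := Finset.card_le_card hss
      rwa [card_cl_ne_zero hr hq hm] at this
    have hIntraCard : Intra.card ≤ m := card_intra hr hq hm
    calc D3.card ≤ ((Intra ×ˢ InterS) ∪ (InterS ×ˢ Intra)).card := Finset.card_le_card hsub3
      _ ≤ (Intra ×ˢ InterS).card + (InterS ×ˢ Intra).card := Finset.card_union_le _ _
      _ = Intra.card * InterS.card + InterS.card * Intra.card := by
          rw [Finset.card_product, Finset.card_product]
      _ ≤ m * (2*r*q - 2*q) + (2*r*q - 2*q) * m :=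
          Nat.add_le_add (Nat.mul_le_mul hIntraCard hInterCard)
            (Nat.mul_le_mul hInterCard hIntraCard)
  -- combine
  have hDcard : D.card ≤ D1.card + D2.card + D3.card := by
    calc D.card ≤ ((D1 ∪ D2) ∪ D3).card := Finset.card_le_card hDsplit
      _ ≤ (D1 ∪ D2).card + D3.card := Finset.card_union_le _ _
      _ ≤ D1.card + D2.card + D3.card := by
          have := Finset.card_union_le D1 D2
          omega
  have hmul : (2*r*q - 4*q) * (2*r*q - 2*q) = (2*r*q - 2*q) * (2*r*q - 4*q) := Nat.mul_comm _ _
  have hmul2 : m * (2*r*q - 2*q) = (2*r*q - 2*q) * m := Nat.mul_comm _ _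
  omega

end TriBound

section Transport

variable {V W : Type*} (e : V ≃ W) (G : SimpleGraph W)

lemma ncard_neighborSet_comap (x : V) :
    ((SimpleGraph.comap (⇑e) G).neighborSet x).ncard = (G.neighborSet (e x)).ncard := by
  have h : (SimpleGraph.comap (⇑e) G).neighborSet x = ⇑e.symm '' (G.neighborSet (e x)) := by
    ext y
    simp only [SimpleGraph.mem_neighborSet, SimpleGraph.comap_adj, Set.mem_image]
    constructor
    · intro h
      exact ⟨e y, h, e.symm_apply_apply y⟩
    · rintro ⟨z, hz, rfl⟩
      rwa [e.apply_symm_apply]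
  rw [h, Set.ncard_image_of_injective _ e.symm.injective]

lemma triDeg_comap (x : V) :
    triDeg (SimpleGraph.comap (⇑e) G) x = triDeg G (e x) := by
  unfold triDeg
  have himg : {t : Finset V | t.card = 3 ∧ x ∈ t ∧
        ∀ a ∈ t, ∀ b ∈ t, a ≠ b → (SimpleGraph.comap (⇑e) G).Adj a b}
      = (fun t => t.map e.symm.toEmbedding) ''
        {t : Finset W | t.card = 3 ∧ e x ∈ t ∧ ∀ a ∈ t, ∀ b ∈ t, a ≠ b → G.Adj a b} := by
    ext t
    simp only [Set.mem_setOf_eq, Set.mem_image]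
    constructor
    · rintro ⟨hc, hx, hadj⟩
      refine ⟨t.map e.toEmbedding, ⟨by rw [Finset.card_map, hc], ?_, ?_⟩, ?_⟩
      · exact Finset.mem_map_of_mem _ hx
      · intro a ha b hb hab
        obtain ⟨a0, ha0, rfl⟩ := Finset.mem_map.1 ha
        obtain ⟨b0, hb0, rfl⟩ := Finset.mem_map.1 hb
        have hne : a0 ≠ b0 := by rintro rfl; exact hab rfl
        exact hadj a0 ha0 b0 hb0 hne
      · rw [Finset.map_map]
        ext z
        simp
    · rintro ⟨t0, ⟨hc, hx0, hadj⟩, rfl⟩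
      refine ⟨by rw [Finset.card_map, hc], ?_, ?_⟩
      · rw [Finset.mem_map_equiv]
        simpa using hx0
      · intro a ha b hb hab
        obtain ⟨a0, ha0, rfl⟩ := Finset.mem_map.1 ha
        obtain ⟨b0, hb0, rfl⟩ := Finset.mem_map.1 hb
        show G.Adj (e (e.symm a0)) (e (e.symm b0))
        rw [e.apply_symm_apply, e.apply_symm_apply]
        exact hadj a0 ha0 b0 hb0 (fun h => hab (congrArg _ h))
  rw [himg, Set.ncard_image_of_injective _ (Finset.map_injective _)]

end Transport

/-- The equivalence between `Fin N` and `ZMod N`. -/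
def finZModEquiv (N : ℕ) [NeZero N] : Fin N ≃ ZMod N where
  toFun i := (i.1 : ZMod N)
  invFun d := ⟨d.val, ZMod.val_lt d⟩
  left_inv i := by
    ext
    exact ZMod.val_cast_of_lt i.2
  right_inv d := ZMod.natCast_rightInverse d

end Stmt14Aux

set_option maxHeartbeats 2000000 in
theorem stmt14 (r : ℕ) (hr : 2 ≤ r) (ρ : ℝ)
    (h1 : ((r : ℝ) - 1) / r ≤ ρ)
    (h2 : ρ ≤ (r : ℝ) / (r + 1) - 1 / (3 * r * (r + 1))) :
    ∀ ε : ℝ, 0 < ε → ∃ n0 : ℕ, ∀ n : ℕ, n0 ≤ n → 2 * r ∣ n →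
      ∃ G : SimpleGraph (Fin n),
        (∀ x : Fin n, (G.neighborSet x).ncard = ⌊ρ * n⌋₊) ∧
        ∀ x : Fin n,
          (triDeg G x : ℝ) ≤
            (((r : ℝ) - 1) * ((r : ℝ) - 2) / r ^ 2
                + 3 * ((r : ℝ) - 1) / r * (ρ - ((r : ℝ) - 1) / r)) * n ^ 2 / 2
              + ε * n ^ 2 := by
  classical
  intro ε hε
  refine ⟨1, fun n hn hdvd => ?_⟩
  obtain ⟨q, hqn⟩ := hdvd
  subst hqn
  have hq1 : 1 ≤ q := by
    rcases Nat.eq_zero_or_pos q with rfl | h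
    · omega
    · exact h
  -- real facts
  have hrR : (2:ℝ) ≤ (r:ℝ) := by exact_mod_cast hr
  have hrpos : (0:ℝ) < r := by linarith
  have hr1pos : (0:ℝ) < (r:ℝ) + 1 := by linarith
  have hqR : (1:ℝ) ≤ (q:ℝ) := by exact_mod_cast hq1
  have hnR : ((2*r*q : ℕ):ℝ) = 2*(r:ℝ)*(q:ℝ) := by push_cast; ring
  have hnn : (0:ℝ) ≤ ((2*r*q : ℕ):ℝ) := Nat.cast_nonneg _
  have hfrac0 : (0:ℝ) ≤ ((r:ℝ)-1)/r := by
    apply div_nonneg <;> linarith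
  have hρ0 : (0:ℝ) ≤ ρ := le_trans hfrac0 h1
  have hleA : 2*q ≤ 2*r*q := by
    calc 2*q = 2*1*q := by ring
      _ ≤ 2*r*q := Nat.mul_le_mul_right q (by omega)
  have hleB : 4*q ≤ 2*r*q := by
    calc 4*q = 2*2*q := by ring
      _ ≤ 2*r*q := Nat.mul_le_mul_right q (by omega)
  have hsubR : ((2*r*q - 2*q : ℕ) : ℝ) = ((r:ℝ)-1)/r * ((2*r*q : ℕ):ℝ) := by
    rw [Nat.cast_sub hleA, hnR]
    push_cast
    field_simp
  have hfl : (2*r*q - 2*q : ℕ) ≤ ⌊ρ * ((2*r*q : ℕ):ℝ)⌋₊ := by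
    apply Nat.le_floor
    rw [hsubR]
    exact mul_le_mul_of_nonneg_right h1 hnn
  set m := ⌊ρ * ((2*r*q : ℕ):ℝ)⌋₊ - (2*r*q - 2*q) with hmdef
  have hdeg : 2*r*q - 2*q + m = ⌊ρ * ((2*r*q : ℕ):ℝ)⌋₊ := by omega
  have hmR : (m:ℝ) ≤ (ρ - ((r:ℝ)-1)/r) * ((2*r*q : ℕ):ℝ) := by
    have hcast : (m:ℝ) = ((⌊ρ * ((2*r*q : ℕ):ℝ)⌋₊ : ℕ) : ℝ) - ((2*r*q - 2*q : ℕ):ℝ) := by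
      rw [hmdef, Nat.cast_sub hfl]
    have hfloor : ((⌊ρ * ((2*r*q : ℕ):ℝ)⌋₊ : ℕ) : ℝ) ≤ ρ * ((2*r*q : ℕ):ℝ) :=
      Nat.floor_le (by positivity)
    have hexp : (ρ - ((r:ℝ)-1)/r) * ((2*r*q : ℕ):ℝ)
        = ρ * ((2*r*q : ℕ):ℝ) - ((r:ℝ)-1)/r * ((2*r*q : ℕ):ℝ) := by ring
    rw [hcast, hsubR, hexp]
    linarith
  have hgap : ρ - ((r:ℝ)-1)/r ≤ 2 / (3*(r:ℝ)*((r:ℝ)+1)) := by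
    have hid : (r:ℝ)/((r:ℝ)+1) - 1/(3*(r:ℝ)*((r:ℝ)+1))
        = ((r:ℝ)-1)/(r:ℝ) + 2/(3*(r:ℝ)*((r:ℝ)+1)) := by
      field_simp
      ring
    rw [hid] at h2
    linarith
  have hmq : 9 * m ≤ 4 * q := by
    have key : (9:ℝ) * (m:ℝ) ≤ 4 * (q:ℝ) := by
      have step1 : (9:ℝ) * (m:ℝ) ≤ 9 * ((ρ - ((r:ℝ)-1)/r) * ((2*r*q : ℕ):ℝ)) := by
        linarith
      have step2 : (9:ℝ) * ((ρ - ((r:ℝ)-1)/r) * ((2*r*q : ℕ):ℝ))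
          ≤ 9 * (2 / (3*(r:ℝ)*((r:ℝ)+1)) * ((2*r*q : ℕ):ℝ)) := by
        have := mul_le_mul_of_nonneg_right hgap hnn
        linarith
      have step3 : (9:ℝ) * (2 / (3*(r:ℝ)*((r:ℝ)+1)) * ((2*r*q : ℕ):ℝ)) ≤ 4 * (q:ℝ) := by
        rw [hnR, show (9:ℝ) * (2 / (3*(r:ℝ)*((r:ℝ)+1)) * (2*(r:ℝ)*(q:ℝ)))
          = 12*(q:ℝ)/((r:ℝ)+1) from by field_simp; ring, div_le_iff₀ hr1pos]
        nlinarith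
      linarith
    exact_mod_cast key
  haveI : NeZero (2*r*q) := Stmt14Aux.nz hr hq1
  set e := Stmt14Aux.finZModEquiv (2*r*q) with hedef
  refine ⟨SimpleGraph.comap (⇑e) (Stmt14Aux.Gr r q m), ?_, ?_⟩
  · intro x
    rw [Stmt14Aux.ncard_neighborSet_comap, Stmt14Aux.neighbor_card hr hq1 hmq, hdeg]
  · intro x
    rw [Stmt14Aux.triDeg_comap]
    have hb := Stmt14Aux.tri_bound hr hq1 hmq (e x)
    have hA : ((2*r*q - 2*q : ℕ):ℝ) = 2*(r:ℝ)*q - 2*q := by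
      rw [Nat.cast_sub hleA]; push_cast; ring
    have hB : ((2*r*q - 4*q : ℕ):ℝ) = 2*(r:ℝ)*q - 4*q := by
      rw [Nat.cast_sub hleB]; push_cast; ring
    have h2t : 2*((triDeg (Stmt14Aux.Gr r q m) (e x) :ℕ):ℝ)
        ≤ (2*(r:ℝ)*q - 2*q) * (2*(r:ℝ)*q - 4*q) + 3*((2*(r:ℝ)*q - 2*q) * m) := by
      calc 2*((triDeg (Stmt14Aux.Gr r q m) (e x) :ℕ):ℝ)
          = ((2 * triDeg (Stmt14Aux.Gr r q m) (e x) : ℕ) : ℝ) := by push_cast; ring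
        _ ≤ (((2*r*q - 2*q) * (2*r*q - 4*q) + 3*((2*r*q - 2*q)*m) : ℕ) : ℝ) := Nat.cast_le.2 hb
        _ = (2*(r:ℝ)*q - 2*q) * (2*(r:ℝ)*q - 4*q) + 3*((2*(r:ℝ)*q - 2*q) * m) := by
            push_cast [Nat.cast_sub hleA, Nat.cast_sub hleB]
            ring
    have hterm1 : (2*(r:ℝ)*q - 2*q) * (2*(r:ℝ)*q - 4*q)
        = (((r:ℝ)-1)*((r:ℝ)-2)/(r:ℝ)^2) * ((2*r*q : ℕ):ℝ)^2 := by
      rw [hnR]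
      field_simp
      ring
    have hterm2 : 3*((2*(r:ℝ)*q - 2*q) * m)
        ≤ 3*((r:ℝ)-1)/r * (ρ - ((r:ℝ)-1)/r) * ((2*r*q : ℕ):ℝ)^2 := by
      have hcoef : (2*(r:ℝ)*q - 2*q) = ((r:ℝ)-1)/r * ((2*r*q : ℕ):ℝ) := by
        rw [hnR]; field_simp
      rw [hcoef]
      have h3 : (0:ℝ) ≤ ((r:ℝ)-1)/r * ((2*r*q : ℕ):ℝ) := mul_nonneg hfrac0 hnn
      have hgapn : (m:ℝ) ≤ (ρ - ((r:ℝ)-1)/r) * ((2*r*q : ℕ):ℝ) := hmR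
      have hstep := mul_le_mul_of_nonneg_left (mul_le_mul_of_nonneg_left hgapn h3)
        (by norm_num : (0:ℝ) ≤ 3)
      calc 3 * (((r:ℝ)-1)/r * ((2*r*q : ℕ):ℝ) * (m:ℝ))
          ≤ 3 * ((((r:ℝ)-1)/r * ((2*r*q : ℕ):ℝ)) * ((ρ - ((r:ℝ)-1)/r) * ((2*r*q : ℕ):ℝ))) :=
            hstep
        _ = 3*((r:ℝ)-1)/r * (ρ - ((r:ℝ)-1)/r) * ((2*r*q : ℕ):ℝ)^2 := by ring
    have hεn : (0:ℝ) ≤ ε * ((2*r*q : ℕ):ℝ)^2 := by positivity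
    linarith
end

section
/- Let r ≥ 2 be an integer and let ρ ∈ ℝ satisfy r/(r+1) − 1/(3r(r+1)) ≤ ρ ≤ r/(r+1). Then for every ε > 0 there exists n0 such that for all n ≥ n0 with 2(r+1) | n there exists a simple graph G on n vertices that is ⌈ρn⌉-regular and such that every vertex x of G has triangle-degree t_G(x) ≤ (r(r−1)/(r+1)² − (3(r−1)/(r+1))·(r/(r+1) − ρ))·n²/2 + εn². -/
open Finset

section Generic

variable {V V' : Type*} [Fintype V] [Fintype V'] [DecidableEq V] [DecidableEq V']

lemma triDeg_eq_filter_card (G : SimpleGraph V) [DecidableRel G.Adj] (x : V) :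
    triDeg G x = (univ.filter
      (fun t : Finset V => t.card = 3 ∧ x ∈ t ∧ ∀ a ∈ t, ∀ b ∈ t, a ≠ b → G.Adj a b)).card := by
  rw [triDeg, ← Set.ncard_coe_finset]
  congr 1
  ext t
  simp

/-- Twice the triangle degree is at most the number of ordered adjacent pairs of
common neighbours of `x`. -/
lemma two_mul_triDeg_le (G : SimpleGraph V) [DecidableRel G.Adj] (x : V) :
    2 * triDeg G x ≤ (univ.filter
      (fun p : V × V => G.Adj x p.1 ∧ G.Adj x p.2 ∧ G.Adj p.1 p.2)).card := by
  classical
  rw [triDeg_eq_filter_card]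
  set P := (univ.filter
      (fun p : V × V => G.Adj x p.1 ∧ G.Adj x p.2 ∧ G.Adj p.1 p.2)) with hP
  set F := (univ.filter
      (fun t : Finset V => t.card = 3 ∧ x ∈ t ∧ ∀ a ∈ t, ∀ b ∈ t, a ≠ b → G.Adj a b)) with hF
  have hmaps : ∀ p ∈ P, ({x, p.1, p.2} : Finset V) ∈ F := by
    rintro ⟨y, z⟩ hp
    simp only [hP, mem_filter, mem_univ, true_and] at hp
    obtain ⟨h1, h2, h3⟩ := hp
    have hxy : x ≠ y := G.ne_of_adj h1
    have hxz : x ≠ z := G.ne_of_adj h2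
    have hyz : y ≠ z := G.ne_of_adj h3
    simp only [hF, mem_filter, mem_univ, true_and]
    refine ⟨?_, by simp, ?_⟩
    · rw [card_insert_of_notMem (by simp [hxy, hxz]),
        card_insert_of_notMem (by simp [hyz])]
      simp
    · intro a ha b hb hab
      simp only [mem_insert, mem_singleton] at ha hb
      rcases ha with rfl | rfl | rfl <;> rcases hb with rfl | rfl | rfl <;>
        first
          | exact absurd rfl hab
          | assumption
          | exact h1.symm
          | exact h2.symm
          | exact h3.symm
  have hfib : ∀ t ∈ F, 2 ≤ (P.filter (fun p : V × V => ({x, p.1, p.2} : Finset V) = t)).card := by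
    intro t ht
    simp only [hF, mem_filter, mem_univ, true_and] at ht
    obtain ⟨hcard, hxt, hadj⟩ := ht
    obtain ⟨a, b, c, hab, hac, hbc, rfl⟩ := Finset.card_eq_three.mp hcard
    -- pick the two elements other than x
    have key : ∀ y z : V, y ≠ z → ({x, y, z} : Finset V) = {a, b, c} →
        y ∈ ({a,b,c} : Finset V) → z ∈ ({a,b,c} : Finset V) →
        2 ≤ (P.filter (fun p : V × V => ({x, p.1, p.2} : Finset V) = {a,b,c})).card := by
      intro y z hyz heq hy hz
      have hxy : x ≠ y := by
        intro h; subst h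
        have : ({x, z} : Finset V) = {a, b, c} := by
          rw [← heq]; ext w
          simp only [Finset.mem_insert, Finset.mem_singleton]; tauto
        have := congrArg Finset.card this
        rw [hcard] at this
        have : ({x, z} : Finset V).card ≤ 2 := card_insert_le _ _ |>.trans (by simp)
        omega
      have hxz : x ≠ z := by
        intro h; subst h
        have : ({x, y} : Finset V) = {a, b, c} := by
          rw [← heq]; ext w
          simp only [Finset.mem_insert, Finset.mem_singleton]; tauto
        have := congrArg Finset.card this
        rw [hcard] at this
        have : ({x, y} : Finset V).card ≤ 2 := card_insert_le _ _ |>.trans (by simp)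
        omega
      have hyin : y ∈ ({x,y,z} : Finset V) := by simp
      have hzin : z ∈ ({x,y,z} : Finset V) := by simp
      have hxin : x ∈ ({x,y,z} : Finset V) := by simp
      rw [heq] at hyin hzin hxin
      have hAxy : G.Adj x y := hadj x hxin y hyin hxy
      have hAxz : G.Adj x z := hadj x hxin z hzin hxz
      have hAyz : G.Adj y z := hadj y hyin z hzin hyz
      have h1 : (y, z) ∈ P.filter (fun p : V × V => ({x, p.1, p.2} : Finset V) = {a,b,c}) := by
        simp only [hP, mem_filter, mem_univ, true_and]
        exact ⟨⟨hAxy, hAxz, hAyz⟩, heq⟩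
      have h2 : (z, y) ∈ P.filter (fun p : V × V => ({x, p.1, p.2} : Finset V) = {a,b,c}) := by
        simp only [hP, mem_filter, mem_univ, true_and]
        refine ⟨⟨hAxz, hAxy, hAyz.symm⟩, ?_⟩
        rw [← heq]; ext w
        simp only [Finset.mem_insert, Finset.mem_singleton]; tauto
      calc 2 = ({(y,z), (z,y)} : Finset (V × V)).card := by
                rw [card_insert_of_notMem (by simp [hyz]), card_singleton]
        _ ≤ _ := card_le_card (by
                intro p hp; simp only [mem_insert, mem_singleton] at hp
                rcases hp with rfl | rfl <;> assumption)
    have hx3 : x = a ∨ x = b ∨ x = c := by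
      simpa using hxt
    rcases hx3 with rfl | rfl | rfl
    · exact key b c hbc rfl (by simp) (by simp)
    · refine key a c hac ?_ (by simp) (by simp)
      ext w; simp only [Finset.mem_insert, Finset.mem_singleton]; tauto
    · refine key a b hab ?_ (by simp) (by simp)
      ext w; simp only [Finset.mem_insert, Finset.mem_singleton]; tauto
  calc 2 * F.card = ∑ _t ∈ F, 2 := by rw [Finset.sum_const, smul_eq_mul, mul_comm]
    _ ≤ ∑ t ∈ F, (P.filter (fun p : V × V => ({x, p.1, p.2} : Finset V) = t)).card :=
        Finset.sum_le_sum hfib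
    _ = P.card := (Finset.card_eq_sum_card_fiberwise hmaps).symm

lemma triDeg_comap (e : V' ≃ V) (G : SimpleGraph V) (x : V') :
    triDeg (G.comap e) x = triDeg G (e x) := by
  classical
  have himg : (Finset.image e) ''
      {t : Finset V' | t.card = 3 ∧ x ∈ t ∧ ∀ a ∈ t, ∀ b ∈ t, a ≠ b → (G.comap e).Adj a b}
      = {t : Finset V | t.card = 3 ∧ e x ∈ t ∧ ∀ a ∈ t, ∀ b ∈ t, a ≠ b → G.Adj a b} := by
    ext t
    constructor
    · rintro ⟨s, ⟨hs3, hxs, hadj⟩, rfl⟩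
      refine ⟨by rw [Finset.card_image_of_injective _ e.injective]; exact hs3,
        Finset.mem_image_of_mem _ hxs, ?_⟩
      intro a ha b hb hab
      obtain ⟨a', ha', rfl⟩ := Finset.mem_image.mp ha
      obtain ⟨b', hb', rfl⟩ := Finset.mem_image.mp hb
      exact hadj a' ha' b' hb' (fun h => hab (by rw [h]))
    · rintro ⟨h3, hxt, hadj⟩
      refine ⟨t.image e.symm, ⟨?_, ?_, ?_⟩, ?_⟩
      · rw [Finset.card_image_of_injective _ e.symm.injective]; exact h3
      · exact Finset.mem_image.mpr ⟨e x, hxt, by simp⟩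
      · intro a ha b hb hab
        obtain ⟨a', ha', rfl⟩ := Finset.mem_image.mp ha
        obtain ⟨b', hb', rfl⟩ := Finset.mem_image.mp hb
        have : a' ≠ b' := fun h => hab (by rw [h])
        simpa using hadj a' ha' b' hb' this
      · rw [Finset.image_image]
        have : (e : V' → V) ∘ (e.symm : V → V') = id := by
          funext w; simp
        rw [this, Finset.image_id]
  rw [triDeg, triDeg, ← himg,
    Set.ncard_image_of_injective _ (Finset.image_injective e.injective)]

lemma ncard_neighborSet_comap (e : V' ≃ V) (G : SimpleGraph V) (x : V') :
    ((G.comap e).neighborSet x).ncard = (G.neighborSet (e x)).ncard := by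
  have : (G.comap e).neighborSet x = e ⁻¹' (G.neighborSet (e x)) := rfl
  rw [this, ← Equiv.image_symm_eq_preimage]
  exact Set.ncard_image_of_injective _ e.symm.injective

end Generic

section Construction

/-- Vertex set: part index, half indicator, position. -/
abbrev TriW (r m : ℕ) : Type := ZMod (r+1) × Bool × ZMod m

/-- The deleted edges: between the second half of part `i` and the first half
of part `i+1`, a `δ`-regular circulant bipartite graph. -/
def TriDel (r m δ : ℕ) (x y : TriW r m) : Prop :=
  (x.2.1 = true ∧ y.2.1 = false ∧ y.1 = x.1 + 1 ∧ (y.2.2 - x.2.2).val < δ) ∨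
  (y.2.1 = true ∧ x.2.1 = false ∧ x.1 = y.1 + 1 ∧ (x.2.2 - y.2.2).val < δ)

instance (r m δ : ℕ) : DecidableRel (TriDel r m δ) := by
  intro x y; unfold TriDel; infer_instance

lemma TriDel.symm {r m δ : ℕ} {x y : TriW r m} (h : TriDel r m δ x y) : TriDel r m δ y x := by
  unfold TriDel at *; tauto

/-- The graph: complete multipartite on the `r+1` parts, minus the deleted edges. -/
def TriG (r m δ : ℕ) : SimpleGraph (TriW r m) where
  Adj x y := x.1 ≠ y.1 ∧ ¬ TriDel r m δ x y
  symm := by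
    constructor
    intro x y ⟨h1, h2⟩
    exact ⟨h1.symm, fun h => h2 h.symm⟩
  loopless := ⟨fun x h => h.1 rfl⟩

lemma triG_adj {r m δ : ℕ} {x y : TriW r m} :
    (TriG r m δ).Adj x y ↔ x.1 ≠ y.1 ∧ ¬ TriDel r m δ x y := Iff.rfl

instance (r m δ : ℕ) : DecidableRel (TriG r m δ).Adj := by
  intro x y
  rw [SimpleGraph.Adj]
  unfold TriG
  infer_instance

variable {r m δ : ℕ}

/-- partner vertex at shift `t`. -/
def TriPt (x : TriW r m) (t : ℕ) : TriW r m :=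
  if x.2.1 then (x.1 + 1, false, x.2.2 + (t : ZMod m)) else (x.1 - 1, true, x.2.2 - (t : ZMod m))

/-- the part in which the deleted neighbours of `x` live. -/
def TriPart (x : TriW r m) : ZMod (r+1) := if x.2.1 then x.1 + 1 else x.1 - 1

lemma triDel_part {x y : TriW r m} (h : TriDel r m δ x y) :
    y.1 = TriPart x ∧ x.1 = TriPart y := by
  rcases h with ⟨hx, hy, h1, _⟩ | ⟨hy, hx, h1, _⟩ <;>
    simp only [TriPart, hx, hy, if_true, if_false, Bool.false_eq_true] <;>
    constructor <;> simp [h1]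

section counts

variable [NeZero m] (hr1 : 1 ≤ r) (hδm : δ ≤ m)

lemma one_ne_zero_zmod (hr1 : 1 ≤ r) : (1 : ZMod (r+1)) ≠ 0 := by
  haveI : Fact (1 < r + 1) := ⟨by omega⟩
  exact one_ne_zero

lemma triPart_ne (hr1 : 1 ≤ r) (x : TriW r m) : TriPart x ≠ x.1 := by
  have h1 := one_ne_zero_zmod (r := r) hr1
  unfold TriPart
  split
  · intro h
    apply h1
    have := sub_eq_zero.mpr h
    simpa using this
  · intro h
    apply h1
    have := sub_eq_zero.mpr h.symm
    have h2 : x.1 - (x.1 - 1) = 0 := this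
    simpa [sub_sub_cancel] using h2

include hδm in
lemma triDel_iff_pt (x y : TriW r m) :
    TriDel r m δ x y ↔ ∃ t : ℕ, t < δ ∧ y = TriPt x t := by
  constructor
  · intro h
    rcases h with ⟨hx, hy, h1, h2⟩ | ⟨hy, hx, h1, h2⟩
    · refine ⟨(y.2.2 - x.2.2).val, h2, ?_⟩
      unfold TriPt
      rw [if_pos hx]
      have : ((y.2.2 - x.2.2).val : ZMod m) = y.2.2 - x.2.2 := by
        rw [ZMod.natCast_val, ZMod.cast_id]
      ext
      · simp [h1]
      · simp [hy]
      · simp only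
        rw [this]; ring
    · refine ⟨(x.2.2 - y.2.2).val, h2, ?_⟩
      unfold TriPt
      rw [if_neg (by simp [hx])]
      have : ((x.2.2 - y.2.2).val : ZMod m) = x.2.2 - y.2.2 := by
        rw [ZMod.natCast_val, ZMod.cast_id]
      ext
      · simp [h1]
      · simp [hy]
      · simp only
        rw [this]; ring
  · rintro ⟨t, ht, rfl⟩
    have hv : ((t : ZMod m)).val = t := ZMod.val_cast_of_lt (lt_of_lt_of_le ht hδm)
    unfold TriPt TriDel
    by_cases hx : x.2.1
    · left
      rw [if_pos hx]
      refine ⟨hx, rfl, rfl, ?_⟩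
      simp only [add_sub_cancel_left]
      rw [hv]; exact ht
    · right
      rw [if_neg hx]
      refine ⟨rfl, by simpa using hx, by simp, ?_⟩
      simp only [sub_sub_cancel]
      rw [hv]; exact ht

include hδm in
lemma triPt_injOn (x : TriW r m) : Set.InjOn (TriPt x) (Finset.range δ) := by
  intro a ha b hb hab
  simp only [Finset.coe_range, Set.mem_Iio] at ha hb
  unfold TriPt at hab
  have : ((a : ZMod m)) = (b : ZMod m) := by
    split at hab <;>
    · have := congrArg (fun p : TriW r m => p.2.2) hab
      simp only at this
      first
        | exact add_left_cancel this
        | (rw [← sub_sub_cancel x.2.2 ((a : ZMod m)), this, sub_sub_cancel])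
  have ha' : ((a : ZMod m)).val = a := ZMod.val_cast_of_lt (lt_of_lt_of_le ha hδm)
  have hb' : ((b : ZMod m)).val = b := ZMod.val_cast_of_lt (lt_of_lt_of_le hb hδm)
  rw [← ha', ← hb', this]

include hδm in
lemma card_triDel (x : TriW r m) :
    (univ.filter (fun y => TriDel r m δ x y)).card = δ := by
  have : univ.filter (fun y => TriDel r m δ x y) = (Finset.range δ).image (TriPt x) := by
    ext y
    simp only [mem_filter, mem_univ, true_and, Finset.mem_image, Finset.mem_range]
    rw [triDel_iff_pt hδm]
    constructor
    · rintro ⟨t, ht, rfl⟩; exact ⟨t, ht, rfl⟩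
    · rintro ⟨t, ht, rfl⟩; exact ⟨t, ht, rfl⟩
  rw [this, Finset.card_image_of_injOn (triPt_injOn hδm x), Finset.card_range]

include hδm hr1 in
lemma card_neighbor (x : TriW r m) :
    (univ.filter (fun y => (TriG r m δ).Adj x y)).card = r * (2 * m) - δ := by
  have hsub : univ.filter (fun y : TriW r m => TriDel r m δ x y)
      ⊆ univ.filter (fun y : TriW r m => x.1 ≠ y.1) := by
    intro y hy
    simp only [mem_filter, mem_univ, true_and] at *
    have := (triDel_part hy).1
    rw [this]
    exact fun h => triPart_ne hr1 x h.symm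
  have hadj : univ.filter (fun y => (TriG r m δ).Adj x y)
      = univ.filter (fun y : TriW r m => x.1 ≠ y.1) \
        univ.filter (fun y : TriW r m => TriDel r m δ x y) := by
    ext y
    simp only [mem_filter, mem_univ, true_and, mem_sdiff, triG_adj]
  rw [hadj, card_sdiff_of_subset hsub, card_triDel hδm]
  congr 1
  have : univ.filter (fun y : TriW r m => x.1 ≠ y.1)
      = (univ.erase x.1) ×ˢ (univ : Finset (Bool × ZMod m)) := by
    ext ⟨a, b⟩
    simp [Finset.mem_erase, ne_comm]
  rw [this, Finset.card_product, Finset.card_erase_of_mem (mem_univ _), card_univ, card_univ,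
    ZMod.card, Fintype.card_prod, Fintype.card_bool, ZMod.card]
  congr 1

end counts

end Construction

section TriangleCount

variable {r m δ : ℕ} [NeZero m]

lemma triPt_part (x : TriW r m) (t : ℕ) : (TriPt x t).1 = TriPart x := by
  unfold TriPt TriPart
  split <;> rfl

lemma triPart_triPt (x : TriW r m) (t : ℕ) : TriPart (TriPt x t : TriW r m) = x.1 := by
  unfold TriPt TriPart
  by_cases h : x.2.1
  · rw [if_pos h]
    simp
  · rw [if_neg h]
    simp

lemma triDel_pt (hδm : δ ≤ m) (x : TriW r m) {t : ℕ} (ht : t < δ) :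
    TriDel r m δ x (TriPt x t) :=
  (triDel_iff_pt hδm x _).mpr ⟨t, ht, rfl⟩

lemma triPart_eq_true {y : TriW r m} (hy : y.2.1 = true) : TriPart y = y.1 + 1 := by
  unfold TriPart; rw [if_pos hy]

lemma triPart_eq_false {y : TriW r m} (hy : y.2.1 = false) : TriPart y = y.1 - 1 := by
  unfold TriPart; rw [if_neg (by simp [hy])]

lemma triangle_bound (hr : 2 ≤ r) (hδm : δ ≤ m) (x : TriW r m) :
    2 * triDeg (TriG r m δ) x + 3 * (δ * ((r - 1) * (2 * m)))
      ≤ (r * r - r) * ((2 * m) * (2 * m)) := by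
  have hr1 : 1 ≤ r := by omega
  set i := x.1 with hi
  set c := TriPart x with hc
  have hci : c ≠ i := triPart_ne hr1 x
  set P := univ.filter (fun p : TriW r m × TriW r m =>
    (TriG r m δ).Adj x p.1 ∧ (TriG r m δ).Adj x p.2 ∧ (TriG r m δ).Adj p.1 p.2) with hP
  set E1 := univ.filter (fun p : TriW r m × TriW r m =>
    (p.1.1 ≠ i ∧ p.2.1 ≠ i ∧ p.1.1 ≠ p.2.1) ∧ TriDel r m δ x p.1) with hE1
  set E2 := univ.filter (fun p : TriW r m × TriW r m =>
    (p.1.1 ≠ i ∧ p.2.1 ≠ i ∧ p.1.1 ≠ p.2.1) ∧ ¬ TriDel r m δ x p.1 ∧ TriDel r m δ x p.2) with hE2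
  set E3 := univ.filter (fun p : TriW r m × TriW r m =>
    (p.1.1 ≠ i ∧ p.2.1 ≠ i ∧ p.1.1 ≠ p.2.1) ∧ ¬ TriDel r m δ x p.1 ∧ ¬ TriDel r m δ x p.2
      ∧ TriDel r m δ p.1 p.2) with hE3
  set T := univ.filter (fun p : TriW r m × TriW r m =>
    p.1.1 ≠ i ∧ p.2.1 ≠ i ∧ p.1.1 ≠ p.2.1) with hT
  -- subsets of T
  have hPT : P ⊆ T := by
    intro p hp
    simp only [hP, hT, mem_filter, mem_univ, true_and, triG_adj] at *
    exact ⟨Ne.symm hp.1.1, Ne.symm hp.2.1.1, hp.2.2.1⟩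
  have hE1T : E1 ⊆ T := fun p hp => by
    simp only [hE1, hT, mem_filter, mem_univ, true_and] at *; exact hp.1
  have hE2T : E2 ⊆ T := fun p hp => by
    simp only [hE2, hT, mem_filter, mem_univ, true_and] at *; exact hp.1
  have hE3T : E3 ⊆ T := fun p hp => by
    simp only [hE3, hT, mem_filter, mem_univ, true_and] at *; exact hp.1
  -- disjointness
  have dPE1 : Disjoint P E1 := by
    rw [Finset.disjoint_left]
    intro p hp hq
    simp only [hP, hE1, mem_filter, mem_univ, true_and, triG_adj] at hp hq
    exact hp.1.2 hq.2
  have dPE2 : Disjoint P E2 := by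
    rw [Finset.disjoint_left]
    intro p hp hq
    simp only [hP, hE2, mem_filter, mem_univ, true_and, triG_adj] at hp hq
    exact hp.2.1.2 hq.2.2
  have dPE3 : Disjoint P E3 := by
    rw [Finset.disjoint_left]
    intro p hp hq
    simp only [hP, hE3, mem_filter, mem_univ, true_and, triG_adj] at hp hq
    exact hp.2.2.2 hq.2.2.2
  have dE1E2 : Disjoint E1 E2 := by
    rw [Finset.disjoint_left]
    intro p hp hq
    simp only [hE1, hE2, mem_filter, mem_univ, true_and] at hp hq
    exact hq.2.1 hp.2
  have dE1E3 : Disjoint E1 E3 := by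
    rw [Finset.disjoint_left]
    intro p hp hq
    simp only [hE1, hE3, mem_filter, mem_univ, true_and] at hp hq
    exact hq.2.1 hp.2
  have dE2E3 : Disjoint E2 E3 := by
    rw [Finset.disjoint_left]
    intro p hp hq
    simp only [hE2, hE3, mem_filter, mem_univ, true_and] at hp hq
    exact hq.2.2.1 hp.2.2
  -- bound on T
  have hTcard : T.card ≤ (r * r - r) * ((2 * m) * (2 * m)) := by
    have hle := Finset.card_le_card_of_injOn
      (f := fun p : TriW r m × TriW r m => ((p.1.1, p.2.1), (p.1.2, p.2.2)))
      (s := T)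
      (t := ((univ.erase i).offDiag) ×ˢ
        (univ : Finset ((Bool × ZMod m) × (Bool × ZMod m))))
      (fun p hp => by
        simp only [Finset.mem_coe, hT, mem_filter, mem_univ, true_and] at hp
        simp only [Finset.mem_coe, Finset.mem_product, Finset.mem_offDiag, Finset.mem_erase, mem_univ,
          and_true]
        exact ⟨hp.1, hp.2.1, hp.2.2⟩)
      (by
        intro p _ q _ h
        simp only [Prod.mk.injEq] at h
        obtain ⟨⟨h1, h2⟩, h3, h4⟩ := h
        exact Prod.ext (Prod.ext h1 h3) (Prod.ext h2 h4))
    calc T.card ≤ _ := hle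
      _ = (r * r - r) * ((2 * m) * (2 * m)) := by
          rw [Finset.card_product, Finset.offDiag_card,
            Finset.card_erase_of_mem (mem_univ _), card_univ, ZMod.card,
            Nat.add_sub_cancel, card_univ, Fintype.card_prod, Fintype.card_prod,
            Fintype.card_bool, ZMod.card]
  -- lower bound on E1
  have hE1card : δ * ((r - 1) * (2 * m)) ≤ E1.card := by
    have hle := Finset.card_le_card_of_injOn
      (f := fun q : ℕ × TriW r m => ((TriPt x q.1 : TriW r m), q.2))
      (s := (Finset.range δ) ×ˢ
        (((univ.erase i).erase c) ×ˢ (univ : Finset (Bool × ZMod m))))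
      (t := E1)
      (fun q hq => by
        simp only [Finset.mem_coe, Finset.mem_product, Finset.mem_range, Finset.mem_erase, mem_univ,
          and_true] at hq
        obtain ⟨ht, ⟨hqc, hqi⟩⟩ := hq
        simp only [Finset.mem_coe, hE1, mem_filter, mem_univ, true_and]
        refine ⟨⟨?_, hqi, ?_⟩, triDel_pt hδm x ht⟩
        · rw [triPt_part]; exact hci
        · rw [triPt_part]; exact fun h => hqc h.symm)
      (by
        intro q hq q' hq' h
        simp only [Finset.mem_coe, Finset.mem_product, Finset.mem_range] at hq hq'
        simp only [Prod.mk.injEq] at h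
        refine Prod.ext ?_ h.2
        exact triPt_injOn hδm x (by simpa using hq.1) (by simpa using hq'.1) h.1)
    calc δ * ((r - 1) * (2 * m))
        = ((Finset.range δ) ×ˢ
            (((univ.erase i).erase c) ×ˢ (univ : Finset (Bool × ZMod m)))).card := by
          rw [Finset.card_product, Finset.card_product, Finset.card_range,
            Finset.card_erase_of_mem (Finset.mem_erase.mpr ⟨hci, mem_univ _⟩),
            Finset.card_erase_of_mem (mem_univ _), card_univ, ZMod.card, card_univ,
            Fintype.card_prod, Fintype.card_bool, ZMod.card, Nat.add_sub_cancel]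
      _ ≤ E1.card := hle
  -- lower bound on E2
  have hE2card : δ * ((r - 1) * (2 * m)) ≤ E2.card := by
    have hle := Finset.card_le_card_of_injOn
      (f := fun q : ℕ × TriW r m => (q.2, (TriPt x q.1 : TriW r m)))
      (s := (Finset.range δ) ×ˢ
        (((univ.erase i).erase c) ×ˢ (univ : Finset (Bool × ZMod m))))
      (t := E2)
      (fun q hq => by
        simp only [Finset.mem_coe, Finset.mem_product, Finset.mem_range, Finset.mem_erase, mem_univ,
          and_true] at hq
        obtain ⟨ht, ⟨hqc, hqi⟩⟩ := hq
        simp only [Finset.mem_coe, hE2, mem_filter, mem_univ, true_and]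
        refine ⟨⟨hqi, ?_, ?_⟩, ?_, triDel_pt hδm x ht⟩
        · rw [triPt_part]; exact hci
        · rw [triPt_part]; exact hqc
        · intro hdel
          exact hqc ((triDel_part hdel).1)
      )
      (by
        intro q hq q' hq' h
        simp only [Finset.mem_coe, Finset.mem_product, Finset.mem_range] at hq hq'
        simp only [Prod.mk.injEq] at h
        refine Prod.ext ?_ h.1
        exact triPt_injOn hδm x (by simpa using hq.1) (by simpa using hq'.1) h.2)
    calc δ * ((r - 1) * (2 * m))
        = ((Finset.range δ) ×ˢ
            (((univ.erase i).erase c) ×ˢ (univ : Finset (Bool × ZMod m)))).card := by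
          rw [Finset.card_product, Finset.card_product, Finset.card_range,
            Finset.card_erase_of_mem (Finset.mem_erase.mpr ⟨hci, mem_univ _⟩),
            Finset.card_erase_of_mem (mem_univ _), card_univ, ZMod.card, card_univ,
            Fintype.card_prod, Fintype.card_bool, ZMod.card, Nat.add_sub_cancel]
      _ ≤ E2.card := hle
  -- lower bound on E3
  have hone := one_ne_zero_zmod (r := r) hr1
  have hadd1 : ∀ j : ZMod (r+1), j + 1 ≠ j := by
    intro j h
    exact hone (by simpa using (add_eq_left).mp h)
  have hsub1 : ∀ j : ZMod (r+1), j - 1 ≠ j := by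
    intro j h
    have h2 : j = j + 1 := sub_eq_iff_eq_add.mp h
    exact hone (by simpa using (add_eq_left).mp h2.symm)
  have hE3card : δ * ((r - 1) * m) + δ * ((r - 1) * m) ≤ E3.card := by
    have hsplit := Finset.card_filter_add_card_filter_not
      (s := E3) (p := fun p : TriW r m × TriW r m => p.1.2.1 = true)
    have htrue : δ * ((r - 1) * m)
        ≤ (E3.filter (fun p : TriW r m × TriW r m => p.1.2.1 = true)).card := by
      have hle := Finset.card_le_card_of_injOn
        (f := fun q : ℕ × TriW r m => (q.2, (TriPt q.2 q.1 : TriW r m)))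
        (s := (Finset.range δ) ×ˢ
          (((univ.erase i).erase (i - 1)) ×ˢ
            (({true} : Finset Bool) ×ˢ (univ : Finset (ZMod m)))))
        (t := E3.filter (fun p : TriW r m × TriW r m => p.1.2.1 = true))
        (fun q hq => by
          simp only [Finset.mem_coe, Finset.mem_product, Finset.mem_range, Finset.mem_erase, mem_univ,
            and_true, Finset.mem_singleton] at hq
          obtain ⟨ht, ⟨hy1, hy2⟩, hyt⟩ := hq
          have hpy : TriPart q.2 = q.2.1 + 1 := triPart_eq_true hyt
          have hz1 : (TriPt q.2 q.1 : TriW r m).1 = q.2.1 + 1 := by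
            rw [triPt_part, hpy]
          simp only [Finset.mem_coe, Finset.mem_filter, hE3, mem_univ, true_and]
          refine ⟨⟨⟨hy2, ?_, ?_⟩, ?_, ?_, triDel_pt hδm q.2 ht⟩, hyt⟩
          · rw [hz1]
            intro h
            exact hy1 (eq_sub_of_add_eq h)
          · rw [hz1]
            intro h
            exact hadd1 q.2.1 h.symm
          · intro hdel
            have := (triDel_part hdel).2
            rw [hpy] at this
            exact hy1 (eq_sub_of_add_eq this.symm)
          · intro hdel
            have := (triDel_part hdel).2
            rw [triPart_triPt] at this
            exact hy2 this.symm)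
        (by
          intro q hq q' hq' h
          simp only [Finset.mem_coe, Finset.mem_product, Finset.mem_range] at hq hq'
          simp only [Prod.mk.injEq] at h
          obtain ⟨h1, h2⟩ := h
          refine Prod.ext ?_ h1
          rw [h1] at h2
          exact triPt_injOn hδm q'.2 (by simpa using hq.1) (by simpa using hq'.1) h2)
      calc δ * ((r - 1) * m)
          = ((Finset.range δ) ×ˢ
            (((univ.erase i).erase (i - 1)) ×ˢ
              (({true} : Finset Bool) ×ˢ (univ : Finset (ZMod m))))).card := by
            rw [Finset.card_product, Finset.card_product, Finset.card_product,
              Finset.card_range,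
              Finset.card_erase_of_mem (Finset.mem_erase.mpr ⟨hsub1 i, mem_univ _⟩),
              Finset.card_erase_of_mem (mem_univ _), card_univ, ZMod.card,
              Nat.add_sub_cancel, Finset.card_singleton, card_univ, ZMod.card, one_mul]
        _ ≤ _ := hle
    have hfalse : δ * ((r - 1) * m)
        ≤ (E3.filter (fun p : TriW r m × TriW r m => ¬ (p.1.2.1 = true))).card := by
      have hle := Finset.card_le_card_of_injOn
        (f := fun q : ℕ × TriW r m => (q.2, (TriPt q.2 q.1 : TriW r m)))
        (s := (Finset.range δ) ×ˢ
          (((univ.erase i).erase (i + 1)) ×ˢ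
            (({false} : Finset Bool) ×ˢ (univ : Finset (ZMod m)))))
        (t := E3.filter (fun p : TriW r m × TriW r m => ¬ (p.1.2.1 = true)))
        (fun q hq => by
          simp only [Finset.mem_coe, Finset.mem_product, Finset.mem_range, Finset.mem_erase, mem_univ,
            and_true, Finset.mem_singleton] at hq
          obtain ⟨ht, ⟨hy1, hy2⟩, hyt⟩ := hq
          have hpy : TriPart q.2 = q.2.1 - 1 := triPart_eq_false hyt
          have hz1 : (TriPt q.2 q.1 : TriW r m).1 = q.2.1 - 1 := by
            rw [triPt_part, hpy]
          simp only [Finset.mem_coe, Finset.mem_filter, hE3, mem_univ, true_and]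
          refine ⟨⟨⟨hy2, ?_, ?_⟩, ?_, ?_, triDel_pt hδm q.2 ht⟩, by simp [hyt]⟩
          · rw [hz1]
            intro h
            exact hy1 (sub_eq_iff_eq_add.mp h)
          · rw [hz1]
            intro h
            exact hsub1 q.2.1 h.symm
          · intro hdel
            have := (triDel_part hdel).2
            rw [hpy] at this
            exact hy1 (sub_eq_iff_eq_add.mp this.symm)
          · intro hdel
            have := (triDel_part hdel).2
            rw [triPart_triPt] at this
            exact hy2 this.symm)
        (by
          intro q hq q' hq' h
          simp only [Finset.mem_coe, Finset.mem_product, Finset.mem_range] at hq hq'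
          simp only [Prod.mk.injEq] at h
          obtain ⟨h1, h2⟩ := h
          refine Prod.ext ?_ h1
          rw [h1] at h2
          exact triPt_injOn hδm q'.2 (by simpa using hq.1) (by simpa using hq'.1) h2)
      calc δ * ((r - 1) * m)
          = ((Finset.range δ) ×ˢ
            (((univ.erase i).erase (i + 1)) ×ˢ
              (({false} : Finset Bool) ×ˢ (univ : Finset (ZMod m))))).card := by
            rw [Finset.card_product, Finset.card_product, Finset.card_product,
              Finset.card_range,
              Finset.card_erase_of_mem (Finset.mem_erase.mpr ⟨hadd1 i, mem_univ _⟩),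
              Finset.card_erase_of_mem (mem_univ _), card_univ, ZMod.card,
              Nat.add_sub_cancel, Finset.card_singleton, card_univ, ZMod.card, one_mul]
        _ ≤ _ := hle
    omega
  -- assembling
  have h2t : 2 * triDeg (TriG r m δ) x ≤ P.card := two_mul_triDeg_le (TriG r m δ) x
  have hunion : P.card + E1.card + E2.card + E3.card ≤ T.card := by
    have e23 : (E2 ∪ E3).card = E2.card + E3.card := Finset.card_union_of_disjoint dE2E3
    have e123 : (E1 ∪ (E2 ∪ E3)).card = E1.card + (E2.card + E3.card) := by
      rw [Finset.card_union_of_disjoint, e23]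
      exact Finset.disjoint_union_right.mpr ⟨dE1E2, dE1E3⟩
    have eall : (P ∪ (E1 ∪ (E2 ∪ E3))).card = P.card + (E1.card + (E2.card + E3.card)) := by
      rw [Finset.card_union_of_disjoint, e123]
      exact Finset.disjoint_union_right.mpr ⟨dPE1,
        Finset.disjoint_union_right.mpr ⟨dPE2, dPE3⟩⟩
    have hsub : P ∪ (E1 ∪ (E2 ∪ E3)) ⊆ T := by
      refine Finset.union_subset hPT (Finset.union_subset hE1T (Finset.union_subset hE2T hE3T))
    calc P.card + E1.card + E2.card + E3.card
        = (P ∪ (E1 ∪ (E2 ∪ E3))).card := by rw [eall]; ring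
      _ ≤ T.card := Finset.card_le_card hsub
  have harith : 3 * (δ * ((r - 1) * (2 * m)))
      = δ * ((r - 1) * (2 * m)) + δ * ((r - 1) * (2 * m))
        + (δ * ((r - 1) * m) + δ * ((r - 1) * m)) := by ring
  omega

end TriangleCount

set_option maxHeartbeats 1600000 in
theorem stmt15 (r : ℕ) (hr : 2 ≤ r) (ρ : ℝ)
    (h1 : (r : ℝ) / (r + 1) - 1 / (3 * r * (r + 1)) ≤ ρ)
    (h2 : ρ ≤ (r : ℝ) / (r + 1)) :
    ∀ ε : ℝ, 0 < ε → ∃ n0 : ℕ, ∀ n : ℕ, n0 ≤ n → 2 * (r + 1) ∣ n →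
      ∃ G : SimpleGraph (Fin n),
        (∀ x : Fin n, (G.neighborSet x).ncard = ⌈ρ * n⌉₊) ∧
        ∀ x : Fin n,
          (triDeg G x : ℝ) ≤
            ((r : ℝ) * ((r : ℝ) - 1) / ((r : ℝ) + 1) ^ 2
                - 3 * ((r : ℝ) - 1) / ((r : ℝ) + 1) * ((r : ℝ) / (r + 1) - ρ)) * n ^ 2 / 2
              + ε * n ^ 2 := by
  intro ε hε
  refine ⟨⌈3 * (r:ℝ) / ε⌉₊ + 1, ?_⟩
  intro n hn hdvd
  obtain ⟨m, hm⟩ := hdvd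
  have hn1 : 1 ≤ n := le_trans (by omega) hn
  have hm1 : 1 ≤ m := by
    rcases Nat.eq_zero_or_pos m with rfl | h
    · omega
    · exact h
  haveI : NeZero m := ⟨by omega⟩
  have hr1 : 1 ≤ r := by omega
  set R := (r : ℝ) with hR
  have hrR : (2:ℝ) ≤ R := by rw [hR]; exact_mod_cast hr
  have hR1 : R + 1 ≠ 0 := by positivity
  set S := (2 * m : ℝ) with hS
  have hSpos : 0 < S := by positivity
  have hnR : (n:ℝ) = (R + 1) * S := by
    rw [hm]; push_cast; ring
  have hnpos : (0:ℝ) < n := by exact_mod_cast hn1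
  set d := ⌈ρ * (n:ℝ)⌉₊ with hd
  have hρ0 : 0 ≤ ρ := by
    have hb : 1 / (3 * R * (R+1)) ≤ R / (R+1) := by
      rw [div_le_div_iff₀ (by positivity) (by positivity)]
      have h3r : (0:ℝ) < 3 * R * R - 1 := by nlinarith
      nlinarith [mul_pos (show (0:ℝ) < R + 1 by linarith) h3r]
    linarith
  have hρn : ρ * n ≤ R * S := by
    have h2 : ρ * n ≤ R / (R+1) * n := by
      apply mul_le_mul_of_nonneg_right h2 (by positivity)
    have h3 : R / (R+1) * n = R * S := by
      rw [hnR]; field_simp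
    linarith
  have hdle : d ≤ r * (2 * m) := by
    rw [hd]
    apply Nat.ceil_le.mpr
    push_cast
    exact hρn
  set δ := r * (2 * m) - d with hδ
  have hδR : (δ:ℝ) = R * S - d := by
    rw [hδ]
    push_cast [Nat.cast_sub hdle]
    ring
  have hdρ : ρ * n ≤ (d:ℝ) := Nat.le_ceil _
  have hdρ' : (d:ℝ) < ρ * n + 1 := by
    apply Nat.ceil_lt_add_one
    positivity
  have hδup : (δ:ℝ) ≤ R * S - ρ * n := by rw [hδR]; linarith
  have hδlow : R * S - ρ * n - 1 ≤ (δ:ℝ) := by rw [hδR]; linarith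
  have hγ : R / (R+1) - ρ ≤ 1 / (3 * R * (R+1)) := by linarith
  have hδm : δ ≤ m := by
    have hmR : (δ:ℝ) ≤ (m:ℝ) := by
      have h4 : R * S - ρ * n = (R/(R+1) - ρ) * n := by
        rw [hnR]; field_simp
      have h5 : (R/(R+1) - ρ) * n ≤ (1 / (3 * R * (R+1))) * n := by
        apply mul_le_mul_of_nonneg_right hγ (by positivity)
      have h6 : (1 / (3 * R * (R+1))) * n = S / (3 * R) := by
        rw [hnR]; field_simp
      have h7 : S / (3 * R) ≤ (m:ℝ) := by
        rw [hS]
        rw [div_le_iff₀ (by positivity)]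
        push_cast
        nlinarith
      linarith
    exact_mod_cast hmR
  clear_value R S d δ
  -- the graph
  have hcard : Fintype.card (TriW r m) = n := by
    simp only [Fintype.card_prod, Fintype.card_bool, ZMod.card]
    rw [hm]; ring
  let f : Fin n ≃ TriW r m := (Fintype.equivFinOfCardEq hcard).symm
  refine ⟨(TriG r m δ).comap f, ?_, ?_⟩
  · intro x
    rw [ncard_neighborSet_comap f (TriG r m δ) x]
    have hset : (TriG r m δ).neighborSet (f x)
        = ↑(univ.filter (fun z => (TriG r m δ).Adj (f x) z)) := by
      ext z; simp [SimpleGraph.mem_neighborSet]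
    rw [hset, Set.ncard_coe_finset, card_neighbor hr1 hδm (f x)]
    omega
  · intro x
    rw [triDeg_comap f (TriG r m δ) x]
    set y := f x
    have hrr : r ≤ r * r := Nat.le_mul_of_pos_left r (by omega)
    have hNat := triangle_bound hr hδm y
    set tD := triDeg (TriG r m δ) y with htD
    clear_value y tD
    clear htD f x
    have key : 2 * (tD:ℝ) + 3 * ((δ:ℝ) * ((R - 1) * S)) ≤ (R * R - R) * (S * S) := by
      have h8 := (Nat.cast_le (α := ℝ)).mpr hNat
      push_cast [Nat.cast_sub hrr, Nat.cast_sub hr1] at h8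
      rw [hR, hS]
      linarith [h8]
    -- rewrite the target
    have e1 : R * (R - 1) / (R + 1) ^ 2 * (n:ℝ) ^ 2 = R * (R - 1) * S ^ 2 := by
      rw [hnR]; field_simp
    have e2 : 3 * (R - 1) / (R + 1) * (R / (R + 1) - ρ) * (n:ℝ) ^ 2
        = 3 * (R - 1) * ((R * S - ρ * n) * S) := by
      rw [hnR]
      field_simp
    have hεn : 3 * R ≤ ε * n := by
      have h9 : (3 * R / ε : ℝ) ≤ n := by
        calc (3 * R / ε : ℝ) ≤ ⌈3 * R / ε⌉₊ := Nat.le_ceil _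
          _ ≤ n := by exact_mod_cast le_trans (by omega) hn
      rw [div_le_iff₀ hε] at h9
      linarith [h9]
    have hSn : S ≤ (n:ℝ) := by
      have hRS : 0 ≤ R * S := mul_nonneg (by linarith) hSpos.le
      linarith
    have hmul : 3 * (R - 1) * ((R * S - ρ * n) * S)
        ≤ 3 * ((δ:ℝ) * ((R - 1) * S)) + 3 * (R - 1) * S := by
      have h10 : (0:ℝ) ≤ 3 * ((R - 1) * S) := by
        have : (0:ℝ) ≤ (R - 1) * S := mul_nonneg (by linarith) hSpos.le
        linarith
      have h12 := mul_le_mul_of_nonneg_left hδlow h10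
      linarith [h12]
    have hfin : 3 * (R - 1) * S ≤ 2 * (ε * n ^ 2) := by
      have hA : 3 * (R - 1) * S ≤ 3 * R * S := by
        have := mul_le_mul_of_nonneg_left (show R - 1 ≤ R by linarith)
          (show (0:ℝ) ≤ 3 * S by positivity)
        linarith [this]
      have hB : 3 * R * S ≤ 3 * R * n :=
        mul_le_mul_of_nonneg_left hSn (by positivity)
      have hC : 3 * R * (n:ℝ) ≤ ε * n * n := by
        have := mul_le_mul_of_nonneg_right hεn (le_of_lt hnpos)
        linarith [this]
      linarith [hA, hB, hC]
    linarith [key, hmul, hfin, e1, e2]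
end

section
/- Let G be a tripartite simple graph on n vertices with 3/10 ≤ e(G)/n² ≤ 1/3. Then t_max(G) ≥ e(G) − 2n²/9. -/
/-!
Let `P, Q, R` be the colour classes, of sizes `p, q, r`. For `x ∈ P`, `u ∈ Q`, `w ∈ R` the edge
indicators satisfy `[xu] + [xw] + [uw] ≤ [xuw is a triangle] + 2`. Summing over `P × Q × R`, and
counting the triangles through each `x ∈ P` by `t_max`, gives
`r e(P,Q) + q e(P,R) + p e(Q,R) ≤ p t_max + 2pqr`. Take `P` to be the smallest class. Bounding each
`e(·,·)` by the product of the class sizes and using `e(G) ≥ 3n²/10`, the inequality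
`p (e(G) - 2n²/9) ≤ p t_max` reduces to a cubic inequality in `p, q - p, r - q` all of whose
coefficients are nonnegative.
-/

open Finset

/-- The maximum triangle-degree of a simple graph. -/
noncomputable def tmax {V : Type*} (G : SimpleGraph V) : ℕ :=
  sSup (Set.range (triDeg G))

/-- A graph is tripartite if its vertex set can be partitioned into three
independent sets, i.e. it admits a proper 3-colouring. -/
def Tripartite {V : Type*} (G : SimpleGraph V) : Prop :=
  ∃ c : V → Fin 3, ∀ x y, G.Adj x y → c x ≠ c y

lemma edges_sub_le_of_smallest_class {p q r epq epr eqr t : ℝ} (hp : 0 ≤ p) (hpq : p ≤ q)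
    (hqr : q ≤ r) (hepq : epq ≤ p * q) (hepr : epr ≤ p * r) (heqr : eqr ≤ q * r)
    (hden : 3 * (p + q + r) ^ 2 / 10 ≤ epq + epr + eqr) (ht : 0 ≤ t)
    (hP : r * epq + q * epr + p * eqr ≤ p * t + 2 * (p * q * r)) :
    epq + epr + eqr - 2 * (p + q + r) ^ 2 / 9 ≤ t := by
  rcases hp.eq_or_lt with rfl | hp
  -- then `epq + epr + eqr ≤ q r ≤ (q + r)² / 4`, so the density bound forces `q + r = 0`
  · nlinarith [sq_nonneg (q - r)]
  have cubic : 2 * p * q * r ≤ (q - p) * (3 * (p + q + r) ^ 2 / 10 - q * r)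
      + (r - q) * (3 * (p + q + r) ^ 2 / 10 - p * r - q * r) + 2 * p * (p + q + r) ^ 2 / 9 := by
    obtain ⟨a, ha, rfl⟩ : ∃ a, 0 ≤ a ∧ q = p + a := ⟨q - p, by linarith, by ring⟩
    obtain ⟨b, hb, rfl⟩ : ∃ b, 0 ≤ b ∧ r = p + a + b := ⟨r - (p + a), by linarith, by ring⟩
    have : 0 ≤ 33 * p ^ 2 * a + 44 * p * a ^ 2 + 26 * p * a * b + 18 * a ^ 3 + 36 * a ^ 2 * b
        + 45 * a * b ^ 2 + 3 * p ^ 2 * b + 2 * p * b ^ 2 + 27 * b ^ 3 := by positivity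
    linear_combination this / 90
  refine le_of_mul_le_mul_left ?_ hp
  nlinarith [mul_nonneg (sub_nonneg.2 hpq) (sub_nonneg.2 hden),
    mul_nonneg (sub_nonneg.2 hpq) (sub_nonneg.2 heqr),
    mul_nonneg (sub_nonneg.2 hqr) (sub_nonneg.2 hden),
    mul_nonneg (sub_nonneg.2 hqr) (sub_nonneg.2 hepr),
    mul_nonneg (sub_nonneg.2 hqr) (sub_nonneg.2 heqr)]

lemma edges_sub_le_of_class_bounds (a b c eab eac ebc t : ℝ) (ha : 0 ≤ a) (hb : 0 ≤ b)
    (hc : 0 ≤ c) (heab : eab ≤ a * b) (heac : eac ≤ a * c) (hebc : ebc ≤ b * c)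
    (hden : 3 * (a + b + c) ^ 2 / 10 ≤ eab + eac + ebc) (ht : 0 ≤ t)
    (hA : c * eab + b * eac + a * ebc ≤ a * t + 2 * (a * b * c))
    (hB : c * eab + b * eac + a * ebc ≤ b * t + 2 * (a * b * c))
    (hC : c * eab + b * eac + a * ebc ≤ c * t + 2 * (a * b * c)) :
    eab + eac + ebc - 2 * (a + b + c) ^ 2 / 9 ≤ t := by
  wlog hab : a ≤ b generalizing a b c eab eac ebc
  · have := this b a c eab ebc eac hb ha hc (by linarith) hebc heac (by linarith) (by linarith)
      (by linarith) (by linarith) (le_of_not_ge hab)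
    linarith
  wlog hac : a ≤ c generalizing a b c eab eac ebc
  · have := this c b a ebc eac eab hc hb ha (by linarith) (by linarith) (by linarith)
      (by linarith) (by linarith) (by linarith) (by linarith) (by linarith) (by linarith)
    linarith
  wlog hbc : b ≤ c generalizing b c eab eac
  · have := this c b eac eab hc hb heac heab (by linarith) (by linarith) (by linarith)
      (by linarith) (by linarith) hac hab (le_of_not_ge hbc)
    linarith
  exact edges_sub_le_of_smallest_class ha hab hbc heab heac hebc hden ht hA

namespace SimpleGraph

variable {V : Type*} (G : SimpleGraph V)

lemma triDeg_le_tmax [Finite V] (x : V) : triDeg G x ≤ tmax G :=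
  le_csSup (Set.finite_range _).bddAbove ⟨x, rfl⟩

variable [DecidableRel G.Adj]

lemma card_interedges_eq_sum (s t : Finset V) :
    #(G.interedges s t) = ∑ u ∈ s, ∑ w ∈ t, if G.Adj u w then 1 else 0 := by
  rw [interedges_def, card_filter, sum_product]

lemma card_interedges_comm (s t : Finset V) : #(G.interedges s t) = #(G.interedges t s) :=
  letI := G.symm
  Rel.card_interedges_comm s t

lemma card_interedges_eq_sum_fiberwise {ι : Type*} [Fintype ι] [DecidableEq ι] (f : V → ι)
    (s t : Finset V) :
    #(G.interedges s t) = ∑ i, ∑ j, #(G.interedges {v ∈ s | f v = i} {v ∈ t | f v = j}) := by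
  rw [card_eq_sum_card_fiberwise (f := fun e : V × V => (f e.1, f e.2)) (t := univ)
    (fun _ _ => mem_univ _), ← univ_product_univ, sum_product]
  refine sum_congr rfl fun i _ => sum_congr rfl fun j _ => congrArg card ?_
  ext ⟨u, w⟩
  simp only [mem_filter, mem_interedges_iff, Prod.mk.injEq]
  tauto

lemma card_interedges_neighbors_le_triDeg [Finite V] [DecidableEq V] {x : V} {s t : Finset V}
    (hxs : x ∉ s) (hxt : x ∉ t) (hst : Disjoint s t) :
    #(G.interedges {u ∈ s | G.Adj x u} {w ∈ t | G.Adj x w}) ≤ triDeg G x := by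
  have hne : ∀ u ∈ s, ∀ w ∈ t, u ≠ w := fun u hu w hw => hst.forall_ne_finset hu hw
  rw [triDeg, ← card_image_of_injOn (f := fun e : V × V => ({x, e.1, e.2} : Finset V)),
    ← Set.ncard_coe_finset]
  · refine Set.ncard_le_ncard ?_ (Set.toFinite _)
    intro T hT
    simp only [coe_image, Set.mem_image, mem_coe, mem_interedges_iff, mem_filter] at hT
    obtain ⟨⟨u, w⟩, ⟨⟨hu, hxu⟩, ⟨hw, hxw⟩, huw⟩, rfl⟩ := hT
    refine ⟨card_eq_three.2 ⟨x, u, w, ?_, ?_, hne u hu w hw, rfl⟩, by simp, ?_⟩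
    · rintro rfl; exact hxs hu
    · rintro rfl; exact hxt hw
    · simp only [mem_insert, mem_singleton]
      rintro a (rfl | rfl | rfl) b (rfl | rfl | rfl) hab <;>
        first | exact absurd rfl hab | assumption | exact G.adj_symm ‹_›
  · rintro ⟨u, w⟩ he ⟨u', w'⟩ he' (heq : ({x, u, w} : Finset V) = {x, u', w'})
    simp only [mem_coe, mem_interedges_iff, mem_filter] at he he'
    have hu : u ∈ ({x, u', w'} : Finset V) := heq ▸ by simp
    have hw : w ∈ ({x, u', w'} : Finset V) := heq ▸ by simp
    simp only [mem_insert, mem_singleton] at hu hw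
    grind

lemma weighted_card_interedges_le [Finite V] [DecidableEq V] {P Q R : Finset V}
    (hPQ : Disjoint P Q) (hPR : Disjoint P R) (hQR : Disjoint Q R) :
    #R * #(G.interedges P Q) + #Q * #(G.interedges P R) + #P * #(G.interedges Q R)
      ≤ #P * tmax G + 2 * (#P * #Q * #R) := by
  calc #R * #(G.interedges P Q) + #Q * #(G.interedges P R) + #P * #(G.interedges Q R)
      = ∑ x ∈ P, ∑ u ∈ Q, ∑ w ∈ R, ((if G.Adj x u then 1 else 0) + (if G.Adj x w then 1 else 0)
          + (if G.Adj u w then 1 else 0)) := by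
        simp only [card_interedges_eq_sum, sum_add_distrib, sum_const, smul_eq_mul, mul_sum]
    _ ≤ ∑ x ∈ P, ∑ u ∈ Q, ∑ w ∈ R,
          ((if G.Adj x u ∧ G.Adj x w ∧ G.Adj u w then 1 else 0) + 2) := by
        refine sum_le_sum fun x _ => sum_le_sum fun u _ => sum_le_sum fun w _ => ?_
        split_ifs <;> simp_all
    _ = ∑ x ∈ P, #(G.interedges {u ∈ Q | G.Adj x u} {w ∈ R | G.Adj x w})
          + 2 * (#P * #Q * #R) := by
        simp only [card_interedges_eq_sum, sum_filter, ite_and, sum_ite_irrel, sum_const_zero,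
          sum_add_distrib, sum_const, smul_eq_mul]
        ring
    _ ≤ ∑ _x ∈ P, tmax G + 2 * (#P * #Q * #R) := by
        gcongr with x hx
        exact (G.card_interedges_neighbors_le_triDeg (hPQ.notMem_of_mem_left_finset hx)
          (hPR.notMem_of_mem_left_finset hx) hQR).trans (G.triDeg_le_tmax x)
    _ = #P * tmax G + 2 * (#P * #Q * #R) := by rw [sum_const, smul_eq_mul]

variable [Fintype V]

lemma card_interedges_univ : #(G.interedges univ univ) = 2 * #G.edgeFinset := by
  rw [← sum_degrees_eq_twice_card_edges, card_interedges_eq_sum]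
  refine sum_congr rfl fun v _ => ?_
  rw [← card_neighborFinset_eq_degree, neighborFinset_eq_filter, card_filter]

lemma card_edgeFinset_eq_of_coloring (c : V → Fin 3) (hc : ∀ x y, G.Adj x y → c x ≠ c y) :
    #G.edgeFinset = #(G.interedges {v | c v = 0} {v | c v = 1})
      + #(G.interedges {v | c v = 0} {v | c v = 2})
      + #(G.interedges {v | c v = 1} {v | c v = 2}) := by
  have hdiag : ∀ i, G.interedges {v | c v = i} {v | c v = i} = ∅ := fun i => by
    ext ⟨u, w⟩
    simp only [mem_interedges_iff, mem_filter, mem_univ, true_and, notMem_empty, iff_false]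
    rintro ⟨rfl, hw, huw⟩
    exact hc u w huw hw.symm
  have h := card_interedges_univ G
  rw [card_interedges_eq_sum_fiberwise G c] at h
  simp only [Fin.sum_univ_three, hdiag, card_empty] at h
  rw [card_interedges_comm G {v | c v = 1}, card_interedges_comm G {v | c v = 2} {v | c v = 0},
    card_interedges_comm G {v | c v = 2} {v | c v = 1}] at h
  omega

lemma weighted_card_interedges_le_of_coloring [DecidableEq V] (c : V → Fin 3) (i : Fin 3) :
    #{v | c v = 2} * #(G.interedges {v | c v = 0} {v | c v = 1})
      + #{v | c v = 1} * #(G.interedges {v | c v = 0} {v | c v = 2})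
      + #{v | c v = 0} * #(G.interedges {v | c v = 1} {v | c v = 2})
      ≤ #{v | c v = i} * tmax G + 2 * (#{v | c v = 0} * #{v | c v = 1} * #{v | c v = 2}) := by
  have hdisj : ∀ i j, i ≠ j → Disjoint ({v | c v = i} : Finset V) ({v | c v = j} : Finset V) :=
    fun i j hij => disjoint_filter.2 fun v _ hi hj => hij (hi.symm.trans hj)
  obtain rfl | rfl | rfl : i = 0 ∨ i = 1 ∨ i = 2 := by omega
  · exact G.weighted_card_interedges_le (hdisj 0 1 (by decide)) (hdisj 0 2 (by decide))
      (hdisj 1 2 (by decide))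
  · have := G.weighted_card_interedges_le (hdisj 1 0 (by decide)) (hdisj 1 2 (by decide))
      (hdisj 0 2 (by decide))
    rw [G.card_interedges_comm {v | c v = 1}] at this
    linarith
  · have := G.weighted_card_interedges_le (hdisj 2 0 (by decide)) (hdisj 2 1 (by decide))
      (hdisj 0 1 (by decide))
    rw [G.card_interedges_comm {v | c v = 2} {v | c v = 0},
      G.card_interedges_comm {v | c v = 2} {v | c v = 1}] at this
    linarith

end SimpleGraph

theorem stmt17_general (n : ℕ) (G : SimpleGraph (Fin n)) (htri : Tripartite G)
    (he1 : 3 / 10 ≤ (G.edgeSet.ncard : ℝ) / n ^ 2) :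
    (G.edgeSet.ncard : ℝ) - 2 * (n : ℝ) ^ 2 / 9 ≤ (tmax G : ℝ) := by
  classical
  obtain ⟨c, hc⟩ := htri
  have hden : 3 * (n : ℝ) ^ 2 / 10 ≤ G.edgeSet.ncard := by
    rcases eq_or_ne n 0 with rfl | hn0
    · simp
    · have := (le_div_iff₀ (by positivity)).1 he1
      linarith
  rw [← SimpleGraph.coe_edgeFinset, Set.ncard_coe_finset,
    G.card_edgeFinset_eq_of_coloring c hc] at hden ⊢
  have hn : (n : ℝ) = #{v | c v = 0} + #{v | c v = 1} + #{v | c v = 2} := by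
    have := card_eq_sum_card_fiberwise (f := c) (s := univ) (t := univ) (fun _ _ => mem_univ _)
    simp only [card_univ, Fintype.card_fin, Fin.sum_univ_three] at this
    exact_mod_cast this
  have hpart := G.weighted_card_interedges_le_of_coloring c
  rw [hn] at hden ⊢
  push_cast at hden ⊢
  exact edges_sub_le_of_class_bounds _ _ _ _ _ _ _ (by positivity) (by positivity) (by positivity)
    (mod_cast G.card_interedges_le_mul _ _) (mod_cast G.card_interedges_le_mul _ _)
    (mod_cast G.card_interedges_le_mul _ _) hden (by positivity)
    (mod_cast hpart 0) (mod_cast hpart 1) (mod_cast hpart 2)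

theorem stmt17 (n : ℕ) (G : SimpleGraph (Fin n)) (htri : Tripartite G)
    (he1 : 3 / 10 ≤ (G.edgeSet.ncard : ℝ) / n ^ 2)
    (he2 : (G.edgeSet.ncard : ℝ) / n ^ 2 ≤ 1 / 3) :
    (G.edgeSet.ncard : ℝ) - 2 * (n : ℝ) ^ 2 / 9 ≤ (tmax G : ℝ) :=
  stmt17_general n G htri he1
end
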